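/- arXiv:2003.13247 — 7 statements merged into one kernel-verified Lean document; each statement's English description precedes it below -/
import Mathlib

section
/- Let p : (0,∞)×ℝ → ℝ be measurable with 0 ≤ p ≤ p_∞ for a constant p_∞ > 0, let T > 0, let S : [0,T] → ℝ be continuous and bounded, and let n₀ ∈ L¹(0,∞). For a continuous bounded map n : [0,T] → L¹(0,∞) define Ψ[n](t,s) := n₀(s−t)·exp(−∫₀^t p(τ+s−t, S(τ)) dτ)·1_{{s>t}} + N[n](t−s)·exp(−∫₀^s p(τ, S(t−s+τ)) dτ)·1_{{0<s<t}}, where N[n](t) := ∫₀^∞ p(u, S(t)) n(t,u) du. Then for any two continuous bounded maps n₁, n₂ : [0,T] → L¹(0,∞) and every t ∈ [0,T], ∫₀^∞ |Ψ[n₁](t,s) − Ψ[n₂](t,s)| ds ≤ T·p_∞·sup_{τ∈[0,T]} ‖n₁(τ) − n₂(τ)‖_{L¹(0,∞)}. In particular, if T < 1/p_∞ then Ψ is a strict contraction on the set of continuous bounded maps n : [0,T] → L¹(0,∞) with n(0) = n₀, in the supremum-in-time L¹ norm. -/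
open MeasureTheory Set Real Filter

/-- The activity `N[n](t) = ∫₀^∞ p(u, S(t)) n(t,u) du`. -/
noncomputable def activity (p : ℝ → ℝ → ℝ) (S : ℝ → ℝ) (n : ℝ → ℝ → ℝ) (t : ℝ) : ℝ :=
  ∫ u in Set.Ioi (0:ℝ), p u (S t) * n t u

/-- The fixed-point operator `Ψ` whose fixed points are the mild solutions of the
renewal equation `∂ₜn + ∂ₛn + p(s,S(t)) n = 0`. -/
noncomputable def Psi (p : ℝ → ℝ → ℝ) (S : ℝ → ℝ) (n₀ : ℝ → ℝ)
    (n : ℝ → ℝ → ℝ) (t s : ℝ) : ℝ :=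
  Set.indicator (Set.Ioi t)
    (fun s' => n₀ (s' - t) * Real.exp (-(∫ τ in (0:ℝ)..t, p (τ + s' - t) (S τ)))) s
  + Set.indicator (Set.Ioo 0 t)
    (fun s' => activity p S n (t - s') *
      Real.exp (-(∫ τ in (0:ℝ)..s', p τ (S (t - s' + τ))))) s

/-! The initial-datum terms of `Ψ[n₁]` and `Ψ[n₂]` coincide, so their difference lives on
`0 < s < t`, where it is the difference of the activities damped by a factor
`exp (-∫ p) ≤ 1`. Since `0 ≤ p ≤ p_∞`, the activities differ by at most
`p_∞ ‖n₁ - n₂‖_{L¹}`, and integrating over `s ∈ (0, t)` gives the factor `t ≤ T`. -/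

theorem abs_integral_mul_sub_integral_mul_le {α : Type*} [MeasurableSpace α] {μ : Measure α}
    {g f₁ f₂ : α → ℝ} {c : ℝ} (hg : AEStronglyMeasurable g μ) (hgc : ∀ᵐ x ∂μ, ‖g x‖ ≤ c)
    (hf₁ : Integrable f₁ μ) (hf₂ : Integrable f₂ μ) :
    |∫ x, g x * f₁ x ∂μ - ∫ x, g x * f₂ x ∂μ| ≤ c * ∫ x, |f₁ x - f₂ x| ∂μ := by
  rw [← integral_sub (hf₁.bdd_mul hg hgc) (hf₂.bdd_mul hg hgc), ← integral_const_mul,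
    ← Real.norm_eq_abs]
  refine norm_integral_le_of_norm_le ((hf₁.sub hf₂).abs.const_mul c) ?_
  filter_upwards [hgc] with x hx
  rw [← mul_sub, norm_mul, Real.norm_eq_abs (_ - _)]
  exact mul_le_mul_of_nonneg_right hx (abs_nonneg _)

theorem abs_activity_sub_le {p : ℝ → ℝ → ℝ} {pinf : ℝ}
    (hp_meas : Measurable fun q : ℝ × ℝ => p q.1 q.2)
    (hp_nonneg : ∀ s u : ℝ, 0 ≤ p s u) (hp_upper : ∀ s u : ℝ, p s u ≤ pinf)
    {S : ℝ → ℝ} {n₁ n₂ : ℝ → ℝ → ℝ} {τ : ℝ}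
    (h₁ : IntegrableOn (n₁ τ) (Ioi 0)) (h₂ : IntegrableOn (n₂ τ) (Ioi 0)) :
    |activity p S n₁ τ - activity p S n₂ τ|
      ≤ pinf * ∫ u in Ioi (0:ℝ), |n₁ τ u - n₂ τ u| :=
  abs_integral_mul_sub_integral_mul_le
    (hp_meas.comp (measurable_id.prodMk measurable_const)).aestronglyMeasurable
    (ae_of_all _ fun _ => (Real.norm_of_nonneg (hp_nonneg _ _)).trans_le (hp_upper _ _)) h₁ h₂

theorem Psi_sub_Psi (p : ℝ → ℝ → ℝ) (S : ℝ → ℝ) (n₀ : ℝ → ℝ) (n₁ n₂ : ℝ → ℝ → ℝ)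
    (t s : ℝ) :
    Psi p S n₀ n₁ t s - Psi p S n₀ n₂ t s = Set.indicator (Ioo 0 t)
      (fun s' => (activity p S n₁ (t - s') - activity p S n₂ (t - s')) *
        Real.exp (-(∫ τ in (0:ℝ)..s', p τ (S (t - s' + τ))))) s := by
  by_cases hs : s ∈ Ioo 0 t
  · simp only [Psi, Set.indicator_of_mem hs]
    ring
  · simp only [Psi, Set.indicator_of_notMem hs]
    ring

theorem abs_Psi_sub_Psi_le {p : ℝ → ℝ → ℝ} (hp_nonneg : ∀ s u : ℝ, 0 ≤ p s u)
    {S : ℝ → ℝ} {n₀ : ℝ → ℝ} {n₁ n₂ : ℝ → ℝ → ℝ} {t C : ℝ}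
    (hC : ∀ s ∈ Ioo 0 t, |activity p S n₁ (t - s) - activity p S n₂ (t - s)| ≤ C) (s : ℝ) :
    |Psi p S n₀ n₁ t s - Psi p S n₀ n₂ t s| ≤ Set.indicator (Ioo 0 t) (fun _ => C) s := by
  rw [Psi_sub_Psi]
  by_cases hs : s ∈ Ioo 0 t
  · have hdamp : Real.exp (-(∫ τ in (0:ℝ)..s, p τ (S (t - s + τ)))) ≤ 1 := by
      rw [Real.exp_le_one_iff, neg_nonpos]
      exact intervalIntegral.integral_nonneg hs.1.le fun _ _ => hp_nonneg _ _
    simp only [Set.indicator_of_mem hs, abs_mul, Real.abs_exp]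
    exact (mul_le_of_le_one_right (abs_nonneg _) hdamp).trans (hC s hs)
  · simp [Set.indicator_of_notMem hs]

theorem setIntegral_Ioi_abs_le_of_le_indicator_Ioo {f : ℝ → ℝ} {a b C : ℝ} (hab : a ≤ b)
    (hf : ∀ s, |f s| ≤ Set.indicator (Ioo a b) (fun _ => C) s) :
    ∫ s in Ioi a, |f s| ≤ (b - a) * C := by
  have hint : IntegrableOn (Set.indicator (Ioo a b) (fun _ => C)) (Ioi a) :=
    (integrable_indicator_iff measurableSet_Ioo).mpr
      (integrableOn_const measure_Ioo_lt_top.ne).restrict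
  calc ∫ s in Ioi a, |f s| ≤ ∫ s in Ioi a, Set.indicator (Ioo a b) (fun _ => C) s :=
        integral_mono_of_nonneg (ae_of_all _ fun _ => abs_nonneg _) hint (ae_of_all _ hf)
    _ = (b - a) * C := by
        rw [integral_indicator measurableSet_Ioo, Measure.restrict_restrict measurableSet_Ioo,
          inter_eq_self_of_subset_left Ioo_subset_Ioi_self, setIntegral_const,
          Real.volume_real_Ioo_of_le hab, smul_eq_mul]

theorem statement1_general
    (p : ℝ → ℝ → ℝ) (pinf : ℝ) (hpinf : 0 < pinf)
    (hp_meas : Measurable fun q : ℝ × ℝ => p q.1 q.2)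
    (hp_nonneg : ∀ s u : ℝ, 0 ≤ p s u)
    (hp_upper : ∀ s u : ℝ, p s u ≤ pinf)
    (T : ℝ)
    (S : ℝ → ℝ)
    (n₀ : ℝ → ℝ)
    (n₁ n₂ : ℝ → ℝ → ℝ)
    (h₁_int : ∀ t ∈ Icc (0:ℝ) T, IntegrableOn (n₁ t) (Ioi 0))
    (h₂_int : ∀ t ∈ Icc (0:ℝ) T, IntegrableOn (n₂ t) (Ioi 0))
    (B : ℝ) (hB : ∀ τ ∈ Icc (0:ℝ) T, (∫ s in Ioi (0:ℝ), |n₁ τ s - n₂ τ s|) ≤ B) :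
    (∀ t ∈ Icc (0:ℝ) T,
      (∫ s in Ioi (0:ℝ), |Psi p S n₀ n₁ t s - Psi p S n₀ n₂ t s|) ≤ T * pinf * B) ∧
    (T < 1 / pinf →
      ∀ t ∈ Icc (0:ℝ) T,
        (∫ s in Ioi (0:ℝ), |Psi p S n₀ n₁ t s - Psi p S n₀ n₂ t s|) ≤ (T * pinf) * B ∧
        T * pinf < 1) := by
  have key : ∀ t ∈ Icc (0:ℝ) T,
      (∫ s in Ioi (0:ℝ), |Psi p S n₀ n₁ t s - Psi p S n₀ n₂ t s|) ≤ T * pinf * B := by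
    intro t ht
    have hB0 : 0 ≤ B := (integral_nonneg fun _ => abs_nonneg _).trans (hB t ht)
    have hact : ∀ s ∈ Ioo 0 t,
        |activity p S n₁ (t - s) - activity p S n₂ (t - s)| ≤ pinf * B := by
      intro s hs
      have hτ : t - s ∈ Icc (0:ℝ) T := ⟨by linarith [hs.2], by linarith [hs.1, ht.2]⟩
      exact (abs_activity_sub_le hp_meas hp_nonneg hp_upper (h₁_int _ hτ) (h₂_int _ hτ)).trans
        (mul_le_mul_of_nonneg_left (hB _ hτ) hpinf.le)
    calc (∫ s in Ioi (0:ℝ), |Psi p S n₀ n₁ t s - Psi p S n₀ n₂ t s|)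
        ≤ (t - 0) * (pinf * B) :=
          setIntegral_Ioi_abs_le_of_le_indicator_Ioo ht.1 (abs_Psi_sub_Psi_le hp_nonneg hact)
      _ ≤ T * pinf * B := by
          rw [sub_zero, ← mul_assoc]
          gcongr
          exact ht.2
  exact ⟨key, fun hTc t ht => ⟨key t ht, (lt_div_iff₀ hpinf).mp hTc⟩⟩

/-- Contraction estimate for the fixed-point operator `Ψ` of the linear renewal
equation: `‖Ψ[n₁](t) - Ψ[n₂](t)‖_{L¹} ≤ T p_∞ sup_{τ∈[0,T]} ‖n₁(τ) - n₂(τ)‖_{L¹}`;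
in particular, `Ψ` is a strict contraction whenever `T < 1/p_∞`. -/
theorem statement1
    (p : ℝ → ℝ → ℝ) (pinf : ℝ) (hpinf : 0 < pinf)
    (hp_meas : Measurable fun q : ℝ × ℝ => p q.1 q.2)
    (hp_nonneg : ∀ s u : ℝ, 0 ≤ p s u)
    (hp_upper : ∀ s u : ℝ, p s u ≤ pinf)
    (T : ℝ) (hT : 0 < T)
    (S : ℝ → ℝ) (hS_cont : ContinuousOn S (Icc 0 T))
    (hS_bdd : ∃ C : ℝ, ∀ t ∈ Icc (0:ℝ) T, |S t| ≤ C)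
    (n₀ : ℝ → ℝ) (hn₀_int : IntegrableOn n₀ (Ioi 0))
    (n₁ n₂ : ℝ → ℝ → ℝ)
    (h₁_int : ∀ t ∈ Icc (0:ℝ) T, IntegrableOn (n₁ t) (Ioi 0))
    (h₂_int : ∀ t ∈ Icc (0:ℝ) T, IntegrableOn (n₂ t) (Ioi 0))
    (h₁_bdd : ∃ C : ℝ, ∀ t ∈ Icc (0:ℝ) T, (∫ s in Ioi (0:ℝ), |n₁ t s|) ≤ C)
    (h₂_bdd : ∃ C : ℝ, ∀ t ∈ Icc (0:ℝ) T, (∫ s in Ioi (0:ℝ), |n₂ t s|) ≤ C)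
    (h₁_cont : ∀ t₀ ∈ Icc (0:ℝ) T, Tendsto (fun t => ∫ s in Ioi (0:ℝ), |n₁ t s - n₁ t₀ s|)
      (nhdsWithin t₀ (Icc 0 T)) (nhds 0))
    (h₂_cont : ∀ t₀ ∈ Icc (0:ℝ) T, Tendsto (fun t => ∫ s in Ioi (0:ℝ), |n₂ t s - n₂ t₀ s|)
      (nhdsWithin t₀ (Icc 0 T)) (nhds 0))
    (B : ℝ) (hB : ∀ τ ∈ Icc (0:ℝ) T, (∫ s in Ioi (0:ℝ), |n₁ τ s - n₂ τ s|) ≤ B) :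
    (∀ t ∈ Icc (0:ℝ) T,
      (∫ s in Ioi (0:ℝ), |Psi p S n₀ n₁ t s - Psi p S n₀ n₂ t s|) ≤ T * pinf * B) ∧
    (T < 1 / pinf →
      ∀ t ∈ Icc (0:ℝ) T,
        (∫ s in Ioi (0:ℝ), |Psi p S n₀ n₁ t s - Psi p S n₀ n₂ t s|) ≤ (T * pinf) * B ∧
        T * pinf < 1) :=
  statement1_general p pinf hpinf hp_meas hp_nonneg hp_upper T S n₀ n₁ n₂ h₁_int h₂_int B hB
end

section
/- Let p : (0,∞)×ℝ → ℝ be measurable and satisfy p_*·1_{{s>s_*}} ≤ p(s,u) ≤ p_∞ for constants p_*, p_∞, s_* > 0, and assume that for a.e. s the map u ↦ p(s,u) is differentiable with |∂p/∂u(s,u)| ≤ K uniformly in (s,u). Then the function F(u) := (∫₀^∞ exp(−∫₀^s p(τ,u) dτ) ds)^{-1} is Lipschitz continuous on ℝ with Lipschitz constant p_∞²·K·(s_*²/2 + s_*/p_* + 1/p_*²), i.e. |F(u₁) − F(u₂)| ≤ p_∞²·K·(s_*²/2 + s_*/p_* + 1/p_*²)·|u₁ − u₂| for all u₁, u₂ ∈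 ℝ. -/
open MeasureTheory Set Real Filter
open scoped Topology

/-- `F(u)` is the reciprocal of the mean survival time of the renewal process with
age-dependent firing rate `s ↦ p(s,u)`. -/
noncomputable def Ffun (p : ℝ → ℝ → ℝ) (u : ℝ) : ℝ :=
  (∫ s in Set.Ioi (0:ℝ), Real.exp (-(∫ τ in (0:ℝ)..s, p τ u)))⁻¹

/-!
Write `F = 1 / T` with `T(u) = ∫₀^∞ exp (-H_u s) ds` and cumulative hazard
`H_u s = ∫₀ˢ p(τ,u) dτ`. Since `p ≤ p_∞`, `H_u s ≤ p_∞ s`, so `T ≥ 1 / p_∞` and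
`|F u₁ - F u₂| ≤ p_∞² |T u₁ - T u₂|`. Both hazards dominate `m s = p_* (s - s_*)⁺`, and
`|H_{u₁} s - H_{u₂} s| ≤ K |u₁ - u₂| s`; the mean value theorem for `exp` on `[m s, ∞)` then
gives `|T u₁ - T u₂| ≤ K |u₁ - u₂| ∫₀^∞ s e^{-m s} ds`, and this integral is
`s_*²/2 + s_*/p_* + 1/p_*²`.
-/

theorem abs_exp_neg_sub_exp_neg_le {a b m : ℝ} (ha : m ≤ a) (hb : m ≤ b) :
    |exp (-a) - exp (-b)| ≤ exp (-m) * |a - b| := by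
  wlog hab : b ≤ a generalizing a b
  · rw [abs_sub_comm, abs_sub_comm a b]
    exact this hb ha (le_of_not_ge hab)
  have hexp : exp (-a) = exp (-b) * exp (b - a) := by rw [← exp_add]; ring_nf
  have htangent := add_one_le_exp (b - a)
  have hmb : exp (-b) ≤ exp (-m) := exp_le_exp.2 (by linarith)
  have hba : exp (-a) ≤ exp (-b) := exp_le_exp.2 (by linarith)
  rw [abs_of_nonpos (by linarith), abs_of_nonneg (by linarith)]
  nlinarith [exp_pos (-b)]

theorem abs_inv_sub_inv_le {K : Type*} [Field K] [LinearOrder K] [IsStrictOrderedRing K]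
    {a b c : K} (hc : 0 < c) (ha : c ≤ a) (hb : c ≤ b) :
    |a⁻¹ - b⁻¹| ≤ |a - b| / c ^ 2 := by
  have ha' : 0 < a := hc.trans_le ha
  have hb' : 0 < b := hc.trans_le hb
  rw [inv_sub_inv ha'.ne' hb'.ne', abs_div, abs_sub_comm, abs_of_pos (mul_pos ha' hb'), sq]
  exact div_le_div_of_nonneg_left (abs_nonneg _) (mul_pos hc hc) (mul_le_mul ha hb hc.le ha'.le)

theorem abs_sub_le_of_forall_hasDerivAt {f : ℝ → ℝ} {K : ℝ}
    (hf : ∀ u, ∃ d, HasDerivAt f d u ∧ |d| ≤ K) (v w : ℝ) : |f v - f w| ≤ K * |v - w| := by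
  choose d hd hdK using hf
  simpa only [Real.norm_eq_abs] using
    convex_univ.norm_image_sub_le_of_norm_hasDerivWithin_le (fun x _ => (hd x).hasDerivWithinAt)
      (fun x _ => hdK x) (mem_univ w) (mem_univ v)

theorem abs_intervalIntegral_sub_le {q₁ q₂ : ℝ → ℝ} {L s : ℝ} (hs : 0 ≤ s)
    (hq₁ : IntervalIntegrable q₁ volume 0 s) (hq₂ : IntervalIntegrable q₂ volume 0 s)
    (hL : ∀ᵐ τ ∂volume.restrict (Ioi 0), |q₁ τ - q₂ τ| ≤ L) :
    |(∫ τ in 0..s, q₁ τ) - ∫ τ in 0..s, q₂ τ| ≤ L * s := by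
  rw [← intervalIntegral.integral_sub hq₁ hq₂]
  have hL' : ∀ᵐ τ, τ ∈ uIoc 0 s → ‖q₁ τ - q₂ τ‖ ≤ L := by
    filter_upwards [(ae_restrict_iff' measurableSet_Ioi).1 hL] with τ hτ hτs
    exact hτ (Ioc_subset_Ioi_self ((uIoc_of_le hs) ▸ hτs))
  simpa [abs_of_nonneg hs] using intervalIntegral.norm_integral_le_of_norm_le_const_ae hL'

theorem mul_max_sub_le_intervalIntegral {q : ℝ → ℝ} {a c s : ℝ}
    (hq : ∀ x y, IntervalIntegrable q volume x y) (hq₀ : ∀ τ, 0 ≤ q τ)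
    (hqc : ∀ τ, a < τ → c ≤ q τ) (ha : 0 ≤ a) (hs : 0 ≤ s) :
    c * max (s - a) 0 ≤ ∫ τ in 0..s, q τ := by
  rcases le_or_gt s a with hsa | has
  · rw [max_eq_right (by linarith), mul_zero]
    exact intervalIntegral.integral_nonneg hs fun τ _ => hq₀ τ
  have hhead : 0 ≤ ∫ τ in 0..a, q τ := intervalIntegral.integral_nonneg ha fun τ _ => hq₀ τ
  have htail : ∫ _ in a..s, c ≤ ∫ τ in a..s, q τ :=
    intervalIntegral.integral_mono_on_of_le_Ioo has.le intervalIntegrable_const (hq a s)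
      fun τ hτ => hqc τ hτ.1
  rw [← intervalIntegral.integral_add_adjacent_intervals (hq 0 a) (hq a s),
    max_eq_left (by linarith)]
  simp only [intervalIntegral.integral_const, smul_eq_mul] at htail
  linarith

theorem integrableOn_exp_neg_of_mul_sub_le {H : ℝ → ℝ} {b c : ℝ} (hc : 0 < c)
    (hH : Measurable H) (hle : ∀ s, 0 < s → c * s - b ≤ H s) :
    IntegrableOn (fun s => exp (-H s)) (Ioi 0) := by
  refine ((integrableOn_exp_mul_Ioi (neg_neg_of_pos hc) 0).const_mul (exp b)).mono'
    hH.neg.exp.aestronglyMeasurable ?_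
  filter_upwards [ae_restrict_mem measurableSet_Ioi] with s hs
  rw [norm_of_nonneg (exp_pos _).le, ← exp_add]
  exact exp_le_exp.2 (by linarith [hle s hs])

theorem integrableOn_exp_neg_intervalIntegral {q : ℝ → ℝ} {a c : ℝ}
    (hq : ∀ x y, IntervalIntegrable q volume x y) (hq₀ : ∀ τ, 0 ≤ q τ)
    (hqc : ∀ τ, a < τ → c ≤ q τ) (ha : 0 ≤ a) (hc : 0 < c) :
    IntegrableOn (fun s => exp (-∫ τ in 0..s, q τ)) (Ioi 0) :=
  integrableOn_exp_neg_of_mul_sub_le (b := c * a) hc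
    (intervalIntegral.continuous_primitive hq 0).measurable fun s hs =>
      calc c * s - c * a = c * (s - a) := by ring
        _ ≤ c * max (s - a) 0 := mul_le_mul_of_nonneg_left (le_max_left _ _) hc.le
        _ ≤ ∫ τ in 0..s, q τ := mul_max_sub_le_intervalIntegral hq hq₀ hqc ha hs.le

theorem inv_le_integral_exp_neg_intervalIntegral {q : ℝ → ℝ} {M : ℝ} (hM : 0 < M)
    (hq : ∀ x y, IntervalIntegrable q volume x y) (hqM : ∀ τ, q τ ≤ M)
    (hint : IntegrableOn (fun s => exp (-∫ τ in 0..s, q τ)) (Ioi 0)) :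
    M⁻¹ ≤ ∫ s in Ioi 0, exp (-∫ τ in 0..s, q τ) := by
  have hval : ∫ s in Ioi (0 : ℝ), exp (-M * s) = M⁻¹ := by
    rw [integral_exp_mul_Ioi (neg_neg_of_pos hM)]
    simp
  rw [← hval]
  refine setIntegral_mono_on (integrableOn_exp_mul_Ioi (neg_neg_of_pos hM) 0) hint
    measurableSet_Ioi fun s hs => exp_le_exp.2 ?_
  have hH : ∫ τ in 0..s, q τ ≤ ∫ _ in 0..s, M :=
    intervalIntegral.integral_mono_on (le_of_lt hs) (hq 0 s) intervalIntegrable_const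
      fun τ _ => hqM τ
  simp only [intervalIntegral.integral_const, smul_eq_mul, sub_zero] at hH
  linarith

section ShiftedExpWeight

variable {a c : ℝ}

theorem hasDerivAt_mul_exp_neg_mul_sub_primitive (x : ℝ) (hc : 0 < c) :
    HasDerivAt (fun s => -((s / c + 1 / c ^ 2) * exp (-(c * (s - a)))))
      (x * exp (-(c * (x - a)))) x := by
  have hlin : HasDerivAt (fun s => -(c * (s - a))) (-c) x := by
    simpa using (((hasDerivAt_id x).sub_const a).const_mul c).fun_neg
  have hpoly : HasDerivAt (fun s => s / c + 1 / c ^ 2) (1 / c) x :=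
    ((hasDerivAt_id x).div_const c).add_const _
  refine (hpoly.mul hlin.exp).fun_neg.congr_deriv ?_
  field_simp
  ring

theorem tendsto_mul_exp_neg_mul_sub_primitive (hc : 0 < c) :
    Tendsto (fun s => -((s / c + 1 / c ^ 2) * exp (-(c * (s - a))))) atTop (𝓝 0) := by
  have hcs : Tendsto (fun s => c * s) atTop atTop := tendsto_id.const_mul_atTop hc
  have hpow : Tendsto (fun s => (c * s) ^ 1 * exp (-(c * s))) atTop (𝓝 0) :=
    (tendsto_pow_mul_exp_neg_atTop_nhds_zero 1).comp hcs
  have hexp : Tendsto (fun s => exp (-(c * s))) atTop (𝓝 0) :=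
    tendsto_exp_neg_atTop_nhds_zero.comp hcs
  have hsum := ((hpow.div_const (c ^ 2)).add (hexp.div_const (c ^ 2))).const_mul (-exp (c * a))
  simp only [zero_div, add_zero, mul_zero] at hsum
  refine hsum.congr fun s => ?_
  rw [show -(c * (s - a)) = c * a + -(c * s) by ring, exp_add]
  field_simp

theorem integrableOn_mul_exp_neg_mul_sub (hc : 0 < c) (ha : 0 ≤ a) :
    IntegrableOn (fun s => s * exp (-(c * (s - a)))) (Ioi a) :=
  integrableOn_Ioi_deriv_of_nonneg' (fun x _ => hasDerivAt_mul_exp_neg_mul_sub_primitive x hc)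
    (fun _ hx => mul_nonneg (ha.trans (le_of_lt hx)) (exp_pos _).le)
    (tendsto_mul_exp_neg_mul_sub_primitive hc)

theorem integral_mul_exp_neg_mul_sub (hc : 0 < c) (ha : 0 ≤ a) :
    ∫ s in Ioi a, s * exp (-(c * (s - a))) = a / c + 1 / c ^ 2 := by
  rw [integral_Ioi_of_hasDerivAt_of_nonneg'
    (fun x _ => hasDerivAt_mul_exp_neg_mul_sub_primitive x hc)
    (fun _ hx => mul_nonneg (ha.trans (le_of_lt hx)) (exp_pos _).le)
    (tendsto_mul_exp_neg_mul_sub_primitive hc)]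
  simp

theorem eqOn_mul_exp_neg_mul_max_Ioc :
    EqOn (fun s => s * exp (-(c * max (s - a) 0))) id (Ioc 0 a) := fun s hs => by
  simp [max_eq_right (sub_nonpos.2 hs.2)]

theorem eqOn_mul_exp_neg_mul_max_Ioi :
    EqOn (fun s => s * exp (-(c * max (s - a) 0))) (fun s => s * exp (-(c * (s - a)))) (Ioi a) :=
  fun s hs => by simp [max_eq_left (sub_nonneg.2 (mem_Ioi.1 hs).le)]

theorem integrableOn_mul_exp_neg_mul_max (hc : 0 < c) (ha : 0 ≤ a) :
    IntegrableOn (fun s => s * exp (-(c * max (s - a) 0))) (Ioi 0) := by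
  rw [← Ioc_union_Ioi_eq_Ioi ha]
  exact (continuous_id.integrableOn_Ioc.congr_fun eqOn_mul_exp_neg_mul_max_Ioc.symm
    measurableSet_Ioc).union ((integrableOn_mul_exp_neg_mul_sub hc ha).congr_fun
      eqOn_mul_exp_neg_mul_max_Ioi.symm measurableSet_Ioi)

theorem integral_mul_exp_neg_mul_max (hc : 0 < c) (ha : 0 ≤ a) :
    ∫ s in Ioi 0, s * exp (-(c * max (s - a) 0)) = a ^ 2 / 2 + a / c + 1 / c ^ 2 := by
  have hint := integrableOn_mul_exp_neg_mul_max hc ha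
  rw [← Ioc_union_Ioi_eq_Ioi ha] at hint ⊢
  rw [setIntegral_union (Ioc_disjoint_Ioi le_rfl) measurableSet_Ioi
      (hint.mono_set subset_union_left) (hint.mono_set subset_union_right),
    setIntegral_congr_fun measurableSet_Ioc eqOn_mul_exp_neg_mul_max_Ioc,
    setIntegral_congr_fun measurableSet_Ioi eqOn_mul_exp_neg_mul_max_Ioi,
    integral_mul_exp_neg_mul_sub hc ha, ← intervalIntegral.integral_of_le ha]
  simp only [id, integral_id]
  ring

end ShiftedExpWeight

theorem abs_integral_exp_neg_sub_le {α : Type*} [MeasurableSpace α] {μ : Measure α}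
    {H₁ H₂ m g : α → ℝ} {L : ℝ}
    (h₁ : Integrable (fun x => exp (-H₁ x)) μ) (h₂ : Integrable (fun x => exp (-H₂ x)) μ)
    (hg : Integrable (fun x => g x * exp (-m x)) μ)
    (hm₁ : ∀ᵐ x ∂μ, m x ≤ H₁ x) (hm₂ : ∀ᵐ x ∂μ, m x ≤ H₂ x)
    (hL : ∀ᵐ x ∂μ, |H₁ x - H₂ x| ≤ L * g x) :
    |∫ x, exp (-H₁ x) ∂μ - ∫ x, exp (-H₂ x) ∂μ| ≤ L * ∫ x, g x * exp (-m x) ∂μ := by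
  rw [← integral_sub h₁ h₂, ← integral_const_mul]
  refine abs_integral_le_integral_abs.trans (integral_mono_ae (h₁.sub h₂).abs (hg.const_mul L) ?_)
  filter_upwards [hm₁, hm₂, hL] with x hx₁ hx₂ hx
  calc |exp (-H₁ x) - exp (-H₂ x)| ≤ exp (-m x) * |H₁ x - H₂ x| :=
        abs_exp_neg_sub_exp_neg_le hx₁ hx₂
    _ ≤ exp (-m x) * (L * g x) := mul_le_mul_of_nonneg_left hx (exp_pos _).le
    _ = L * (g x * exp (-m x)) := by ring

theorem abs_integral_exp_neg_intervalIntegral_sub_le {q₁ q₂ : ℝ → ℝ} {a c L : ℝ}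
    (hq₁ : ∀ x y, IntervalIntegrable q₁ volume x y) (hq₂ : ∀ x y, IntervalIntegrable q₂ volume x y)
    (hq₁₀ : ∀ τ, 0 ≤ q₁ τ) (hq₂₀ : ∀ τ, 0 ≤ q₂ τ)
    (hq₁c : ∀ τ, a < τ → c ≤ q₁ τ) (hq₂c : ∀ τ, a < τ → c ≤ q₂ τ) (ha : 0 ≤ a) (hc : 0 < c)
    (hL : ∀ᵐ τ ∂volume.restrict (Ioi 0), |q₁ τ - q₂ τ| ≤ L) :
    |(∫ s in Ioi 0, exp (-∫ τ in 0..s, q₁ τ)) - ∫ s in Ioi 0, exp (-∫ τ in 0..s, q₂ τ)| ≤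
      L * (a ^ 2 / 2 + a / c + 1 / c ^ 2) := by
  have hH₁ : ∀ᵐ s ∂volume.restrict (Ioi 0), c * max (s - a) 0 ≤ ∫ τ in 0..s, q₁ τ :=
    ae_restrict_of_forall_mem measurableSet_Ioi fun s hs =>
      mul_max_sub_le_intervalIntegral hq₁ hq₁₀ hq₁c ha (le_of_lt hs)
  have hH₂ : ∀ᵐ s ∂volume.restrict (Ioi 0), c * max (s - a) 0 ≤ ∫ τ in 0..s, q₂ τ :=
    ae_restrict_of_forall_mem measurableSet_Ioi fun s hs =>
      mul_max_sub_le_intervalIntegral hq₂ hq₂₀ hq₂c ha (le_of_lt hs)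
  have hH_sub : ∀ᵐ s ∂volume.restrict (Ioi 0),
      |(∫ τ in 0..s, q₁ τ) - ∫ τ in 0..s, q₂ τ| ≤ L * s :=
    ae_restrict_of_forall_mem measurableSet_Ioi fun s hs =>
      abs_intervalIntegral_sub_le (le_of_lt hs) (hq₁ 0 s) (hq₂ 0 s) hL
  rw [← integral_mul_exp_neg_mul_max hc ha]
  exact abs_integral_exp_neg_sub_le (integrableOn_exp_neg_intervalIntegral hq₁ hq₁₀ hq₁c ha hc)
    (integrableOn_exp_neg_intervalIntegral hq₂ hq₂₀ hq₂c ha hc)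
    (integrableOn_mul_exp_neg_mul_max hc ha) hH₁ hH₂ hH_sub

theorem statement5_general
    (p : ℝ → ℝ → ℝ) (pstar pinf sstar K : ℝ)
    (hpstar : 0 < pstar) (hpinf : 0 < pinf) (hsstar : 0 < sstar)
    (hp_meas : Measurable fun q : ℝ × ℝ => p q.1 q.2)
    (hp_nonneg : ∀ s u : ℝ, 0 ≤ p s u)
    (hp_lower : ∀ s u : ℝ, sstar < s → pstar ≤ p s u)
    (hp_upper : ∀ s u : ℝ, p s u ≤ pinf)
    (hp_deriv : ∀ᵐ s ∂(volume.restrict (Ioi (0:ℝ))), ∀ u : ℝ,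
      ∃ dd : ℝ, HasDerivAt (fun v => p s v) dd u ∧ |dd| ≤ K) :
    ∀ u₁ u₂ : ℝ,
      |Ffun p u₁ - Ffun p u₂| ≤
        pinf ^ 2 * K * (sstar ^ 2 / 2 + sstar / pstar + 1 / pstar ^ 2) * |u₁ - u₂| := by
  intro u₁ u₂
  have hq : ∀ u x y, IntervalIntegrable (fun τ => p τ u) volume x y := fun u x y =>
    (intervalIntegrable_const (c := pinf)).mono_fun
      (hp_meas.comp (measurable_id.prodMk measurable_const)).aestronglyMeasurable
      (ae_of_all _ fun τ => by
        simpa [abs_of_nonneg (hp_nonneg τ u), abs_of_pos hpinf] using hp_upper τ u)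
  have hT_ge : ∀ u, pinf⁻¹ ≤ ∫ s in Ioi 0, exp (-∫ τ in 0..s, p τ u) := fun u =>
    inv_le_integral_exp_neg_intervalIntegral hpinf (hq u) (hp_upper · u)
      (integrableOn_exp_neg_intervalIntegral (hq u) (hp_nonneg · u) (hp_lower · u) hsstar.le hpstar)
  have hT_sub := abs_integral_exp_neg_intervalIntegral_sub_le (hq u₁) (hq u₂)
    (hp_nonneg · u₁) (hp_nonneg · u₂) (hp_lower · u₁) (hp_lower · u₂) hsstar.le hpstar
    (hp_deriv.mono fun τ hτ => abs_sub_le_of_forall_hasDerivAt hτ u₁ u₂)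
  calc |Ffun p u₁ - Ffun p u₂| ≤ _ := abs_inv_sub_inv_le (inv_pos.2 hpinf) (hT_ge u₁) (hT_ge u₂)
    _ ≤ K * |u₁ - u₂| * (sstar ^ 2 / 2 + sstar / pstar + 1 / pstar ^ 2) / pinf⁻¹ ^ 2 := by
        gcongr
    _ = pinf ^ 2 * K * (sstar ^ 2 / 2 + sstar / pstar + 1 / pstar ^ 2) * |u₁ - u₂| := by
        field_simp

/-- Lipschitz continuity of `F` with the explicit constant
`p_∞² K (s_*²/2 + s_*/p_* + 1/p_*²)`, where `K` bounds `|∂p/∂u|`. -/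
theorem statement5
    (p : ℝ → ℝ → ℝ) (pstar pinf sstar K : ℝ)
    (hpstar : 0 < pstar) (hpinf : 0 < pinf) (hsstar : 0 < sstar) (hK : 0 ≤ K)
    (hp_meas : Measurable fun q : ℝ × ℝ => p q.1 q.2)
    (hp_nonneg : ∀ s u : ℝ, 0 ≤ p s u)
    (hp_lower : ∀ s u : ℝ, sstar < s → pstar ≤ p s u)
    (hp_upper : ∀ s u : ℝ, p s u ≤ pinf)
    (hp_deriv : ∀ᵐ s ∂(volume.restrict (Ioi (0:ℝ))), ∀ u : ℝ,
      ∃ dd : ℝ, HasDerivAt (fun v => p s v) dd u ∧ |dd| ≤ K) :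
    ∀ u₁ u₂ : ℝ,
      |Ffun p u₁ - Ffun p u₂| ≤
        pinf ^ 2 * K * (sstar ^ 2 / 2 + sstar / pstar + 1 / pstar ^ 2) * |u₁ - u₂| :=
  statement5_general p pstar pinf sstar K hpstar hpinf hsstar hp_meas hp_nonneg hp_lower hp_upper
    hp_deriv
end

section
/- Let Ω be a bounded open subset of ℝ^d, let g ∈ C_b(Ω) be nonnegative with ∫_Ω g(x) dx = 1, let I ∈ C_b(Ω), let G : ℝ² → ℝ be smooth with ‖G‖_∞ + ‖∇G‖_∞ ≤ 1, let F : ℝ → ℝ be bounded by M > 0 and Lipschitz with constant L > 0, and let γ > 0. Define the operator T on C_b(Ω) by T[S](x) := γ·∫_Ω G(g(x)·F(S(x)), g(y)·F(S(y)))·g(y)·F(S(y)) dy + I(x). Then ‖T[S₁] − T[S₂]‖_∞ ≤ γ·L·(2‖g‖_∞·M + 1)·‖S₁ − S₂‖_∞ for all S₁, S₂ ∈ C_b(Ω); consequently, if γ·L·(2‖g‖_∞·M + 1) < 1, then T has a unique fixed point S* ∈ C_b(Ω). -/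
open MeasureTheory Set Real Filter

/-- Continuous bounded real-valued function on a set. -/
def CbOn {X : Type*} [TopologicalSpace X] (Om : Set X) (f : X → ℝ) : Prop :=
  ContinuousOn f Om ∧ ∃ C : ℝ, ∀ x ∈ Om, |f x| ≤ C

/-- Continuous bounded function on `[0,∞) × Ω`. -/
def CbTimeOn {X : Type*} [TopologicalSpace X] (Om : Set X) (f : ℝ → X → ℝ) : Prop :=
  ContinuousOn (fun q : ℝ × X => f q.1 q.2) (Set.Ici 0 ×ˢ Om) ∧
  ∃ C : ℝ, ∀ t ≥ (0:ℝ), ∀ x ∈ Om, |f t x| ≤ C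

/-- Continuous bounded function on `[0,∞) × Ω × Ω`. -/
def CbTimeOn2 {X : Type*} [TopologicalSpace X] (Om : Set X) (w : ℝ → X → X → ℝ) : Prop :=
  ContinuousOn (fun q : ℝ × X × X => w q.1 q.2.1 q.2.2) (Set.Ici 0 ×ˢ Om ×ˢ Om) ∧
  ∃ C : ℝ, ∀ t ≥ (0:ℝ), ∀ x ∈ Om, ∀ y ∈ Om, |w t x y| ≤ C

/-- The fixed-point operator for stationary states of the elapsed-time network with
learning is a contraction for small connectivity `γ`, hence admits a unique fixed
point `S*` in `C_b(Ω)`. -/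
theorem statement8
    (d : ℕ) (Om : Set (Fin d → ℝ)) (hOm_open : IsOpen Om) (hOm_bdd : Bornology.IsBounded Om)
    (g : (Fin d → ℝ) → ℝ) (gbd : ℝ)
    (hg_cont : ContinuousOn g Om) (hg_nonneg : ∀ x ∈ Om, 0 ≤ g x)
    (hg_bdd : ∀ x ∈ Om, g x ≤ gbd) (hg_mass : (∫ x in Om, g x) = 1)
    (I : (Fin d → ℝ) → ℝ) (hI : CbOn Om I)
    (G : ℝ → ℝ → ℝ)
    (hG_smooth : ContDiff ℝ (⊤ : ℕ∞) fun q : ℝ × ℝ => G q.1 q.2)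
    (hG_norm : ∃ MG LG : ℝ, 0 ≤ MG ∧ 0 ≤ LG ∧ MG + LG ≤ 1 ∧
      (∀ a b : ℝ, |G a b| ≤ MG) ∧ LipschitzWith LG.toNNReal fun q : ℝ × ℝ => G q.1 q.2)
    (F : ℝ → ℝ) (M L : ℝ) (hM : 0 < M) (hL : 0 < L)
    (hF_bdd : ∀ u : ℝ, |F u| ≤ M) (hF_lip : LipschitzWith L.toNNReal F)
    (γ : ℝ) (hγ : 0 < γ)
    (T : ((Fin d → ℝ) → ℝ) → (Fin d → ℝ) → ℝ)
    (hT : ∀ (S : (Fin d → ℝ) → ℝ) (x : Fin d → ℝ),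
      T S x = γ * (∫ y in Om, G (g x * F (S x)) (g y * F (S y)) * (g y * F (S y))) + I x) :
    (∀ S₁ S₂ : (Fin d → ℝ) → ℝ, CbOn Om S₁ → CbOn Om S₂ →
      ∀ B : ℝ, (∀ x ∈ Om, |S₁ x - S₂ x| ≤ B) →
        ∀ x ∈ Om, |T S₁ x - T S₂ x| ≤ γ * L * (2 * gbd * M + 1) * B) ∧
    (γ * L * (2 * gbd * M + 1) < 1 →
      ∃ Sstar : (Fin d → ℝ) → ℝ, CbOn Om Sstar ∧ (∀ x ∈ Om, T Sstar x = Sstar x) ∧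
        ∀ S' : (Fin d → ℝ) → ℝ, CbOn Om S' → (∀ x ∈ Om, T S' x = S' x) →
          ∀ x ∈ Om, S' x = Sstar x) := by
  classical
  obtain ⟨MG, LG, hMG0, hLG0, hMGLG, hGbd, hGlip⟩ := hG_norm
  have hOmm : MeasurableSet Om := hOm_open.measurableSet
  have hGc : Continuous fun q : ℝ × ℝ => G q.1 q.2 := hG_smooth.continuous
  have hg_int : IntegrableOn g Om := by
    by_contra h
    rw [MeasureTheory.integral_undef h] at hg_mass
    norm_num at hg_mass
  have hLc : (L.toNNReal : ℝ) = L := Real.coe_toNNReal _ hL.le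
  have hFd : ∀ u v : ℝ, |F u - F v| ≤ L * |u - v| := by
    intro u v
    have h := hF_lip.dist_le_mul u v
    rwa [Real.dist_eq, Real.dist_eq, hLc] at h
  have hGdiff : ∀ a₁ b₁ a₂ b₂ D : ℝ, |a₁ - a₂| ≤ D → |b₁ - b₂| ≤ D →
      |G a₁ b₁ - G a₂ b₂| ≤ LG * D := by
    intro a₁ b₁ a₂ b₂ D h1 h2
    have h := hGlip.dist_le_mul (a₁, b₁) (a₂, b₂)
    rw [Prod.dist_eq, Real.coe_toNNReal _ hLG0, Real.dist_eq, Real.dist_eq, Real.dist_eq] at h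
    calc |G a₁ b₁ - G a₂ b₂| ≤ LG * max |a₁ - a₂| |b₁ - b₂| := h
      _ ≤ LG * D := mul_le_mul_of_nonneg_left (max_le h1 h2) hLG0
  -- bound on the integrand magnitude
  have hb_abs : ∀ (S : (Fin d → ℝ) → ℝ) (y : Fin d → ℝ), y ∈ Om →
      |g y * F (S y)| ≤ g y * M := by
    intro S y hy
    rw [abs_mul, abs_of_nonneg (hg_nonneg y hy)]
    exact mul_le_mul_of_nonneg_left (hF_bdd _) (hg_nonneg y hy)
  -- integrability of the integrand
  have hA_int : ∀ (S : (Fin d → ℝ) → ℝ), ContinuousOn S Om → ∀ a : ℝ,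
      IntegrableOn (fun y => G a (g y * F (S y)) * (g y * F (S y))) Om := by
    intro S hS a
    have hbcont : ContinuousOn (fun y => g y * F (S y)) Om :=
      hg_cont.mul (hF_lip.continuous.comp_continuousOn hS)
    have hcont : ContinuousOn (fun y => G a (g y * F (S y)) * (g y * F (S y))) Om := by
      have h1 : ContinuousOn (fun y => G a (g y * F (S y))) Om :=
        (hGc.comp_continuousOn (continuousOn_const.prodMk hbcont) :
          ContinuousOn ((fun q : ℝ × ℝ => G q.1 q.2) ∘ fun y => (a, g y * F (S y))) Om)
      exact h1.mul hbcont
    refine Integrable.mono' (hg_int.const_mul (MG * M)) (hcont.aestronglyMeasurable hOmm) ?_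
    filter_upwards [ae_restrict_mem hOmm] with y hy
    have h1 : |G a (g y * F (S y))| ≤ MG := hGbd _ _
    have h2 := hb_abs S y hy
    have hgy := hg_nonneg y hy
    rw [Real.norm_eq_abs, abs_mul]
    calc |G a (g y * F (S y))| * |g y * F (S y)| ≤ MG * (g y * M) := by
          apply mul_le_mul h1 h2 (abs_nonneg _) hMG0
      _ = MG * M * g y := by ring
  -- key integral bound
  have hIntBound : ∀ (A : (Fin d → ℝ) → ℝ) (c : ℝ), IntegrableOn A Om →
      (∀ y ∈ Om, |A y| ≤ c * g y) → |∫ y in Om, A y| ≤ c := by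
    intro A c hA hle
    have h1 : |∫ y in Om, A y| ≤ ∫ y in Om, |A y| := by
      simpa [Real.norm_eq_abs] using
        norm_integral_le_integral_norm (μ := volume.restrict Om) A
    have h2 : (∫ y in Om, |A y|) ≤ ∫ y in Om, c * g y :=
      setIntegral_mono_on hA.abs (hg_int.const_mul c) hOmm hle
    have h3 : (∫ y in Om, c * g y) = c := by
      rw [MeasureTheory.integral_const_mul, hg_mass, mul_one]
    linarith
  -- Part 1: the contraction estimate
  have key : ∀ S₁ S₂ : (Fin d → ℝ) → ℝ, CbOn Om S₁ → CbOn Om S₂ →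
      ∀ B : ℝ, (∀ x ∈ Om, |S₁ x - S₂ x| ≤ B) →
        ∀ x ∈ Om, |T S₁ x - T S₂ x| ≤ γ * L * (2 * gbd * M + 1) * B := by
    intro S₁ S₂ hS₁ hS₂ B hB x hx
    have hgbd0 : 0 ≤ gbd := le_trans (hg_nonneg x hx) (hg_bdd x hx)
    have hB0 : 0 ≤ B := le_trans (abs_nonneg _) (hB x hx)
    set a₁ := g x * F (S₁ x) with ha₁
    set a₂ := g x * F (S₂ x) with ha₂
    set c : ℝ := L * B * (MG + M * LG * gbd) with hc
    have hi1 := hA_int S₁ hS₁.1 a₁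
    have hi2 := hA_int S₂ hS₂.1 a₂
    have had : |a₁ - a₂| ≤ gbd * (L * B) := by
      have h : a₁ - a₂ = g x * (F (S₁ x) - F (S₂ x)) := by rw [ha₁, ha₂]; ring
      rw [h, abs_mul, abs_of_nonneg (hg_nonneg x hx)]
      have h1 : |F (S₁ x) - F (S₂ x)| ≤ L * B :=
        le_trans (hFd _ _) (mul_le_mul_of_nonneg_left (hB x hx) hL.le)
      nlinarith [hg_bdd x hx, hg_nonneg x hx, abs_nonneg (F (S₁ x) - F (S₂ x)), hL.le]
    have hpt : ∀ y ∈ Om,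
        |G a₁ (g y * F (S₁ y)) * (g y * F (S₁ y)) -
          G a₂ (g y * F (S₂ y)) * (g y * F (S₂ y))| ≤ c * g y := by
      intro y hy
      set b₁ := g y * F (S₁ y) with hb₁
      set b₂ := g y * F (S₂ y) with hb₂
      have hgy : 0 ≤ g y := hg_nonneg y hy
      have hbd : |b₁ - b₂| ≤ g y * (L * B) := by
        have h : b₁ - b₂ = g y * (F (S₁ y) - F (S₂ y)) := by rw [hb₁, hb₂]; ring
        rw [h, abs_mul, abs_of_nonneg hgy]
        exact mul_le_mul_of_nonneg_left
          (le_trans (hFd _ _) (mul_le_mul_of_nonneg_left (hB y hy) hL.le)) hgy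
      have hbd' : |b₁ - b₂| ≤ gbd * (L * B) := by
        refine le_trans hbd ?_
        exact mul_le_mul_of_nonneg_right (hg_bdd y hy) (by positivity)
      have hGd : |G a₁ b₁ - G a₂ b₂| ≤ LG * (gbd * (L * B)) := hGdiff _ _ _ _ _ had hbd'
      have hb2 : |b₂| ≤ g y * M := hb_abs S₂ y hy
      have hG1 : |G a₁ b₁| ≤ MG := hGbd _ _
      have decomp : G a₁ b₁ * b₁ - G a₂ b₂ * b₂ =
          G a₁ b₁ * (b₁ - b₂) + (G a₁ b₁ - G a₂ b₂) * b₂ := by ring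
      calc |G a₁ b₁ * b₁ - G a₂ b₂ * b₂|
          ≤ |G a₁ b₁| * |b₁ - b₂| + |G a₁ b₁ - G a₂ b₂| * |b₂| := by
            rw [decomp]
            exact le_trans (abs_add_le _ _) (by rw [abs_mul, abs_mul])
        _ ≤ MG * (g y * (L * B)) + (LG * (gbd * (L * B))) * (g y * M) := by
            apply add_le_add
            · exact mul_le_mul hG1 hbd (abs_nonneg _) hMG0
            · exact mul_le_mul hGd hb2 (abs_nonneg _) (by positivity)
        _ = c * g y := by rw [hc]; ring
    have hdiff : T S₁ x - T S₂ x = γ * ∫ y in Om,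
        (G a₁ (g y * F (S₁ y)) * (g y * F (S₁ y)) -
          G a₂ (g y * F (S₂ y)) * (g y * F (S₂ y))) := by
      rw [hT, hT, MeasureTheory.integral_sub hi1 hi2]
      ring
    have habs : |∫ y in Om,
        (G a₁ (g y * F (S₁ y)) * (g y * F (S₁ y)) -
          G a₂ (g y * F (S₂ y)) * (g y * F (S₂ y)))| ≤ c :=
      hIntBound _ c (hi1.sub hi2) hpt
    rw [hdiff, abs_mul, abs_of_pos hγ]
    have hstep : γ * |∫ y in Om,
        (G a₁ (g y * F (S₁ y)) * (g y * F (S₁ y)) -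
          G a₂ (g y * F (S₂ y)) * (g y * F (S₂ y)))| ≤ γ * c :=
      mul_le_mul_of_nonneg_left habs hγ.le
    refine le_trans hstep ?_
    rw [hc]
    nlinarith [mul_nonneg (mul_nonneg hγ.le hL.le) hB0, hM.le, hgbd0, hMG0, hLG0,
      mul_nonneg hM.le hgbd0, mul_nonneg (mul_nonneg (mul_nonneg hγ.le hL.le) hB0)
        (mul_nonneg hM.le hgbd0)]
  refine ⟨key, fun hk => ?_⟩
  rcases Set.eq_empty_or_nonempty Om with hemp | ⟨x₀, hx₀⟩
  · exact ⟨fun _ => 0, ⟨continuousOn_const, 0, fun x hx => by simp⟩,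
      fun x hx => absurd hx (by simp [hemp]),
      fun S' _ _ x hx => absurd hx (by simp [hemp])⟩
  · have hgbd0 : 0 ≤ gbd := le_trans (hg_nonneg x₀ hx₀) (hg_bdd x₀ hx₀)
    set k : ℝ := γ * L * (2 * gbd * M + 1) with hkdef
    have hk0 : 0 ≤ k := by positivity
    obtain ⟨CI, hCI⟩ := hI.2
    -- extension operator
    set E : BoundedContinuousFunction Om ℝ → (Fin d → ℝ) → ℝ :=
      fun f x => if h : x ∈ Om then f ⟨x, h⟩ else 0 with hEdef
    have hE_eq : ∀ (f : BoundedContinuousFunction Om ℝ) (y : Fin d → ℝ) (hy : y ∈ Om),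
        E f y = f ⟨y, hy⟩ := fun f y hy => dif_pos hy
    have hE_cb : ∀ f, CbOn Om (E f) := by
      intro f
      constructor
      · rw [continuousOn_iff_continuous_restrict]
        have h : Om.domRestrict (E f) = ⇑f := funext fun x => hE_eq f ↑x x.2
        rw [h]; exact f.continuous
      · refine ⟨‖f‖, fun x hx => ?_⟩
        rw [hE_eq f x hx, ← Real.norm_eq_abs]
        exact f.norm_coe_le_norm _
    -- the induced map on bounded continuous functions
    have hIc : Continuous (Om.restrict I) := continuousOn_iff_continuous_restrict.mp hI.1
    have hJbound : ∀ (f : BoundedContinuousFunction Om ℝ) (a : ℝ),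
        |∫ y in Om, G a (g y * F (E f y)) * (g y * F (E f y))| ≤ MG * M := by
      intro f a
      refine hIntBound _ (MG * M) (hA_int (E f) (hE_cb f).1 a) fun y hy => ?_
      rw [abs_mul]
      calc |G a (g y * F (E f y))| * |g y * F (E f y)| ≤ MG * (g y * M) :=
            mul_le_mul (hGbd _ _) (hb_abs (E f) y hy) (abs_nonneg _) hMG0
        _ = MG * M * g y := by ring
    have hJlip : ∀ (f : BoundedContinuousFunction Om ℝ) (a a' : ℝ),
        |(∫ y in Om, G a (g y * F (E f y)) * (g y * F (E f y))) -
          ∫ y in Om, G a' (g y * F (E f y)) * (g y * F (E f y))| ≤ LG * M * |a - a'| := by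
      intro f a a'
      rw [← MeasureTheory.integral_sub (hA_int (E f) (hE_cb f).1 a) (hA_int (E f) (hE_cb f).1 a')]
      refine hIntBound _ (LG * M * |a - a'|)
        ((hA_int (E f) (hE_cb f).1 a).sub (hA_int (E f) (hE_cb f).1 a')) fun y hy => ?_
      have h1 : G a (g y * F (E f y)) * (g y * F (E f y)) -
          G a' (g y * F (E f y)) * (g y * F (E f y)) =
          (G a (g y * F (E f y)) - G a' (g y * F (E f y))) * (g y * F (E f y)) := by ring
      rw [h1, abs_mul]
      have h2 : |G a (g y * F (E f y)) - G a' (g y * F (E f y))| ≤ LG * |a - a'| :=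
        hGdiff _ _ _ _ _ le_rfl (by simp)
      calc |G a (g y * F (E f y)) - G a' (g y * F (E f y))| * |g y * F (E f y)|
          ≤ (LG * |a - a'|) * (g y * M) :=
            mul_le_mul h2 (hb_abs (E f) y hy) (abs_nonneg _) (by positivity)
        _ = LG * M * |a - a'| * g y := by ring
    have hTcont : ∀ f : BoundedContinuousFunction Om ℝ,
        Continuous fun x : Om => T (E f) ↑x := by
      intro f
      have heq : (fun x : Om => T (E f) ↑x) = fun x : Om =>
          γ * (∫ y in Om, G (g ↑x * F (E f ↑x)) (g y * F (E f y)) * (g y * F (E f y)))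
            + I ↑x := funext fun x => hT (E f) ↑x
      rw [heq]
      have hJc : Continuous fun a : ℝ =>
          ∫ y in Om, G a (g y * F (E f y)) * (g y * F (E f y)) := by
        refine LipschitzWith.continuous (K := (LG * M).toNNReal)
          (LipschitzWith.of_dist_le_mul fun a a' => ?_)
        rw [Real.coe_toNNReal _ (by positivity), Real.dist_eq, Real.dist_eq]
        exact hJlip f a a'
      have hEc : Continuous fun x : Om => E f ↑x := by
        have h : (fun x : Om => E f ↑x) = ⇑f := funext fun x => hE_eq f ↑x x.2
        rw [h]; exact f.continuous
      have hgc : Continuous fun x : Om => g ↑x :=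
        continuousOn_iff_continuous_restrict.mp hg_cont
      have harg : Continuous fun x : Om => g ↑x * F (E f ↑x) :=
        hgc.mul (hF_lip.continuous.comp hEc)
      exact (continuous_const.mul (hJc.comp harg)).add hIc
    have hTbdd : ∀ (f : BoundedContinuousFunction Om ℝ) (x : Om),
        ‖T (E f) ↑x‖ ≤ γ * (MG * M) + CI := by
      intro f x
      rw [Real.norm_eq_abs, hT]
      calc |γ * (∫ y in Om, G (g ↑x * F (E f ↑x)) (g y * F (E f y)) * (g y * F (E f y)))
            + I ↑x|
          ≤ |γ * (∫ y in Om, G (g ↑x * F (E f ↑x)) (g y * F (E f y)) * (g y * F (E f y)))|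
            + |I ↑x| := abs_add_le _ _
        _ ≤ γ * (MG * M) + CI := by
            refine add_le_add ?_ (hCI ↑x x.2)
            rw [abs_mul, abs_of_pos hγ]
            exact mul_le_mul_of_nonneg_left (hJbound f _) hγ.le
    set That : BoundedContinuousFunction Om ℝ → BoundedContinuousFunction Om ℝ :=
      fun f => BoundedContinuousFunction.ofNormedAddCommGroup
        (fun x : Om => T (E f) ↑x) (hTcont f) (γ * (MG * M) + CI) (hTbdd f) with hThatdef
    have hThat_apply : ∀ (f : BoundedContinuousFunction Om ℝ) (x : Om),
        That f x = T (E f) ↑x := fun f x => rfl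
    have hlip : ∀ f₁ f₂, dist (That f₁) (That f₂) ≤ k * dist f₁ f₂ := by
      intro f₁ f₂
      rw [BoundedContinuousFunction.dist_le (mul_nonneg hk0 dist_nonneg)]
      intro x
      have hBpt : ∀ y ∈ Om, |E f₁ y - E f₂ y| ≤ dist f₁ f₂ := by
        intro y hy
        rw [hE_eq f₁ y hy, hE_eq f₂ y hy]
        have h := BoundedContinuousFunction.dist_coe_le_dist (f := f₁) (g := f₂) ⟨y, hy⟩
        rwa [Real.dist_eq] at h
      have h := key (E f₁) (E f₂) (hE_cb f₁) (hE_cb f₂) (dist f₁ f₂) hBpt ↑x x.2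
      rw [hThat_apply, hThat_apply, Real.dist_eq]
      exact h
    have hcontr : ContractingWith k.toNNReal That := by
      constructor
      · exact Real.toNNReal_lt_one.mpr hk
      · refine LipschitzWith.of_dist_le_mul fun f₁ f₂ => ?_
        rw [Real.coe_toNNReal _ hk0]
        exact hlip f₁ f₂
    haveI : Nonempty (BoundedContinuousFunction Om ℝ) := ⟨0⟩
    set fst : BoundedContinuousFunction Om ℝ := ContractingWith.fixedPoint That hcontr
      with hfstdef
    have hfix : That fst = fst := hcontr.fixedPoint_isFixedPt
    refine ⟨E fst, hE_cb fst, ?_, ?_⟩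
    · intro x hx
      calc T (E fst) x = That fst ⟨x, hx⟩ := rfl
        _ = fst ⟨x, hx⟩ := by rw [hfix]
        _ = E fst x := (hE_eq fst x hx).symm
    · intro S' hS' hfix' x hx
      obtain ⟨C', hC'⟩ := hS'.2
      set f' : BoundedContinuousFunction Om ℝ :=
        BoundedContinuousFunction.ofNormedAddCommGroup (fun x : Om => S' ↑x)
          (continuousOn_iff_continuous_restrict.mp hS'.1) C'
          (fun x => by rw [Real.norm_eq_abs]; exact hC' ↑x x.2) with hf'def
      have hf'E : ∀ y ∈ Om, E f' y = S' y := by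
        intro y hy
        rw [hE_eq f' y hy]
        rfl
      have hf'fix : That f' = f' := by
        ext x
        rw [hThat_apply f' x]
        show T (E f') ↑x = S' ↑x
        have hint : T (E f') ↑x = T S' ↑x := by
          rw [hT, hT, hf'E ↑x x.2]
          congr 2
          refine setIntegral_congr_fun hOmm fun y hy => ?_
          rw [hf'E y hy]
        rw [hint, hfix' ↑x x.2]
      have huniq : f' = fst := hcontr.fixedPoint_unique hf'fix
      calc S' x = f' ⟨x, hx⟩ := rfl
        _ = fst ⟨x, hx⟩ := by rw [huniq]
        _ = E fst x := (hE_eq fst x hx).symm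
end

section
/- Let (X, μ) be a measure space and let (P_t)_{t≥0} be a semigroup of bounded linear operators on L¹(X, μ) (P_0 = Id and P_{t+s} = P_t ∘ P_s for all s, t ≥ 0) that is stochastic: P_t f ≥ 0 whenever f ≥ 0, and ∫_X P_t f dμ = ∫_X f dμ for all f ∈ L¹(X, μ). Assume Doeblin's condition: there exist t₀ > 0, α ∈ (0,1), and ν ∈ L¹(X, μ) with ν ≥ 0 and ∫_X ν dμ = 1, such that P_{t₀} f ≥ α·ν a.e. for every f ∈ L¹(X, μ) with f ≥ 0 and ∫_X f dμ = 1. Then there is a unique n_* ∈ L¹(X, μ) with n_* ≥ 0, ∫_X n_* dμ = 1 and P_t n_* = n_* for all t ≥ 0; moreover, for every n ∈ L¹(X, μ) with n ≥ 0 and ∫_X n dμ = 1, ‖P_t(n − n_*)‖_{L¹(X,μ)} ≤ (1/(1−α))·e^{−λ t}·‖n − n_*‖_{L¹(X,μ)} for all t ≥ 0, where λ := −ln(1−α)/t₀. -/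
open MeasureTheory Set Real Filter Topology

section DoeblinAux

variable {X : Type*} [MeasurableSpace X] {μ : Measure X}

lemma doeblin_int_sub (a b : Lp ℝ 1 μ) :
    (∫ x, (a - b) x ∂μ) = (∫ x, a x ∂μ) - ∫ x, b x ∂μ := by
  rw [integral_congr_ae (Lp.coeFn_sub a b)]
  exact integral_sub (L1.integrable_coeFn a) (L1.integrable_coeFn b)

lemma doeblin_int_add (a b : Lp ℝ 1 μ) :
    (∫ x, (a + b) x ∂μ) = (∫ x, a x ∂μ) + ∫ x, b x ∂μ := by
  rw [integral_congr_ae (Lp.coeFn_add a b)]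
  exact integral_add (L1.integrable_coeFn a) (L1.integrable_coeFn b)

lemma doeblin_int_smul (c : ℝ) (a : Lp ℝ 1 μ) :
    (∫ x, (c • a) x ∂μ) = c * ∫ x, a x ∂μ := by
  rw [integral_congr_ae (Lp.coeFn_smul c a)]
  simpa [smul_eq_mul] using integral_smul c (fun x => a x)

lemma doeblin_norm_nonneg_eq (f : Lp ℝ 1 μ) (hf : 0 ≤ f) : ‖f‖ = ∫ x, f x ∂μ := by
  rw [L1.norm_eq_integral_norm]
  refine integral_congr_ae ?_
  filter_upwards [(Lp.coeFn_nonneg f).2 hf] with x hx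
  exact Real.norm_of_nonneg (by simpa using hx)

lemma doeblin_norm_le_int (f g : Lp ℝ 1 μ) (hg : 0 ≤ g) (h : |f| ≤ g) :
    ‖f‖ ≤ ∫ x, g x ∂μ := by
  rw [← doeblin_norm_nonneg_eq g hg]
  refine norm_le_norm_of_abs_le_abs ?_
  rwa [abs_of_nonneg hg]

lemma doeblin_norm_eq_int_abs (f : Lp ℝ 1 μ) : ‖f‖ = ∫ x, |f| x ∂μ := by
  rw [← doeblin_norm_nonneg_eq |f| (abs_nonneg f), norm_abs_eq_norm]

lemma doeblin_smul_nonneg {c : ℝ} (hc : 0 ≤ c) {f : Lp ℝ 1 μ} (hf : 0 ≤ f) :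
    0 ≤ c • f := by
  rw [← Lp.coeFn_nonneg]
  filter_upwards [Lp.coeFn_smul c f, (Lp.coeFn_nonneg f).2 hf] with x h1 h2
  simp only [Pi.zero_apply] at h2 ⊢
  rw [h1]
  simpa [smul_eq_mul] using mul_nonneg hc h2

lemma doeblin_smul_le_smul {c : ℝ} (hc : 0 ≤ c) {f g : Lp ℝ 1 μ} (h : f ≤ g) :
    c • f ≤ c • g := by
  have h0 : 0 ≤ c • (g - f) := doeblin_smul_nonneg hc (sub_nonneg.2 h)
  rw [smul_sub] at h0
  exact sub_nonneg.1 h0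

end DoeblinAux

set_option maxHeartbeats 1600000 in
/-- Doeblin's theorem: a stochastic semigroup on `L¹(X,μ)` satisfying Doeblin's
condition has a unique invariant probability density, and relaxes to it
exponentially fast in `L¹` with rate `λ = -ln(1-α)/t₀`. -/
theorem statement11
    {X : Type*} [MeasurableSpace X] (μ : Measure X)
    (P : ℝ → Lp ℝ 1 μ →L[ℝ] Lp ℝ 1 μ)
    (hP0 : P 0 = ContinuousLinearMap.id ℝ (Lp ℝ 1 μ))
    (hP_semigroup : ∀ s ≥ (0:ℝ), ∀ t ≥ (0:ℝ), P (s + t) = (P s).comp (P t))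
    (hP_pos : ∀ t ≥ (0:ℝ), ∀ f : Lp ℝ 1 μ, 0 ≤ f → 0 ≤ P t f)
    (hP_mass : ∀ t ≥ (0:ℝ), ∀ f : Lp ℝ 1 μ, (∫ x, (P t f) x ∂μ) = ∫ x, f x ∂μ)
    (t₀ : ℝ) (ht₀ : 0 < t₀) (α : ℝ) (hα0 : 0 < α) (hα1 : α < 1)
    (ν : Lp ℝ 1 μ) (hν_pos : 0 ≤ ν) (hν_mass : (∫ x, ν x ∂μ) = 1)
    (hDoeblin : ∀ f : Lp ℝ 1 μ, 0 ≤ f → (∫ x, f x ∂μ) = 1 → α • ν ≤ P t₀ f) :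
    ∃ nstar : Lp ℝ 1 μ,
      (0 ≤ nstar ∧ (∫ x, nstar x ∂μ) = 1 ∧ ∀ t ≥ (0:ℝ), P t nstar = nstar) ∧
      (∀ m : Lp ℝ 1 μ, 0 ≤ m → (∫ x, m x ∂μ) = 1 → (∀ t ≥ (0:ℝ), P t m = m) →
        m = nstar) ∧
      (∀ n : Lp ℝ 1 μ, 0 ≤ n → (∫ x, n x ∂μ) = 1 → ∀ t ≥ (0:ℝ),
        ‖P t (n - nstar)‖ ≤
          (1 / (1 - α)) * Real.exp (-(-Real.log (1 - α) / t₀) * t) * ‖n - nstar‖) := by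
  have hβ0 : (0:ℝ) < 1 - α := by linarith
  have hβ1 : (1:ℝ) - α < 1 := by linarith
  -- basic facts about positive/negative parts of an element of L¹
  have hparts : ∀ g : Lp ℝ 1 μ,
      (∫ x, (posPart g) x ∂μ) - (∫ x, (negPart g) x ∂μ) = ∫ x, g x ∂μ ∧
      (∫ x, (posPart g) x ∂μ) + (∫ x, (negPart g) x ∂μ) = ‖g‖ := by
    intro g
    constructor
    · have h := doeblin_int_sub (posPart g) (negPart g)
      rw [posPart_sub_negPart g] at h
      linarith [h]
    · have h := doeblin_int_add (posPart g) (negPart g)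
      rw [posPart_add_negPart g] at h
      rw [doeblin_norm_eq_int_abs g]
      linarith [h]
  -- the key contraction estimate at time t₀ on mean-zero elements
  have hT : ∀ g : Lp ℝ 1 μ, (∫ x, g x ∂μ) = 0 → ‖P t₀ g‖ ≤ (1 - α) * ‖g‖ := by
    intro g hg
    by_cases hg0 : g = 0
    · simp [hg0]
    obtain ⟨h1, h2⟩ := hparts g
    rw [hg] at h1
    set Ip := ∫ x, (posPart g) x ∂μ with hIp
    set In := ∫ x, (negPart g) x ∂μ with hIn
    have hnorm_pos : 0 < ‖g‖ := norm_pos_iff.2 hg0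
    set c : ℝ := ‖g‖ / 2 with hc
    have hc0 : 0 < c := by positivity
    have hIpc : Ip = c := by rw [hc]; linarith
    have hInc : In = c := by rw [hc]; linarith
    -- apply Doeblin's condition to the normalized positive and negative parts
    have hDapp : ∀ h : Lp ℝ 1 μ, 0 ≤ h → (∫ x, h x ∂μ) = c → (c * α) • ν ≤ P t₀ h := by
      intro h hh hhint
      have hmass : (∫ x, (c⁻¹ • h) x ∂μ) = 1 := by
        rw [doeblin_int_smul, hhint, inv_mul_cancel₀ hc0.ne']
      have hpos : 0 ≤ c⁻¹ • h := doeblin_smul_nonneg (by positivity) hh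
      have hd := hDoeblin _ hpos hmass
      have hd2 := doeblin_smul_le_smul hc0.le hd
      rw [(P t₀).map_smul] at hd2
      rw [smul_smul, smul_smul, mul_inv_cancel₀ hc0.ne', one_smul] at hd2
      exact hd2
    set a := P t₀ (posPart g) with ha
    set b := P t₀ (negPart g) with hb
    set w : Lp ℝ 1 μ := (c * α) • ν with hw
    have haw : w ≤ a := hDapp _ (posPart_nonneg g) hIpc
    have hbw : w ≤ b := hDapp _ (negPart_nonneg g) hInc
    have habs : |a - b| ≤ (a - w) + (b - w) := by
      have heq : a - b = (a - w) + -(b - w) := by abel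
      calc |a - b| = |(a - w) + -(b - w)| := by rw [heq]
        _ ≤ |a - w| + |-(b - w)| := abs_add_le _ _
        _ = (a - w) + (b - w) := by
            rw [abs_neg, abs_of_nonneg (sub_nonneg.2 haw), abs_of_nonneg (sub_nonneg.2 hbw)]
    have hsum_nonneg : 0 ≤ (a - w) + (b - w) :=
      add_nonneg (sub_nonneg.2 haw) (sub_nonneg.2 hbw)
    have hPg : P t₀ g = a - b := by rw [← posPart_sub_negPart g, map_sub]
    rw [hPg]
    have hbound := doeblin_norm_le_int (a - b) _ hsum_nonneg habs
    have hIa : (∫ x, a x ∂μ) = c := by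
      rw [ha, hP_mass t₀ ht₀.le]; exact hIpc
    have hIb : (∫ x, b x ∂μ) = c := by
      rw [hb, hP_mass t₀ ht₀.le]; exact hInc
    have hIw : (∫ x, w x ∂μ) = c * α := by
      rw [hw, doeblin_int_smul, hν_mass, mul_one]
    have hIsum : (∫ x, ((a - w) + (b - w)) x ∂μ) = (1 - α) * ‖g‖ := by
      rw [doeblin_int_add, doeblin_int_sub, doeblin_int_sub, hIa, hIb, hIw, hc]
      ring
    rw [hIsum] at hbound
    exact hbound
  -- every P s (s ≥ 0) is an L¹ contraction
  have hC : ∀ s : ℝ, 0 ≤ s → ∀ g : Lp ℝ 1 μ, ‖P s g‖ ≤ ‖g‖ := by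
    intro s hs g
    obtain ⟨-, h2⟩ := hparts g
    set a := P s (posPart g) with ha
    set b := P s (negPart g) with hb
    have ha0 : 0 ≤ a := hP_pos s hs _ (posPart_nonneg g)
    have hb0 : 0 ≤ b := hP_pos s hs _ (negPart_nonneg g)
    have habs : |a - b| ≤ a + b := by
      calc |a - b| = |a + -b| := by rw [sub_eq_add_neg]
        _ ≤ |a| + |-b| := abs_add_le _ _
        _ = a + b := by rw [abs_neg, abs_of_nonneg ha0, abs_of_nonneg hb0]
    have hPg : P s g = a - b := by rw [← posPart_sub_negPart g, map_sub]
    rw [hPg]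
    have hbound := doeblin_norm_le_int (a - b) _ (add_nonneg ha0 hb0) habs
    have hIsum : (∫ x, (a + b) x ∂μ) = ‖g‖ := by
      rw [doeblin_int_add, ha, hb, hP_mass s hs, hP_mass s hs]
      exact h2
    rw [hIsum] at hbound
    exact hbound
  -- iterated contraction estimate
  have hiter : ∀ k : ℕ, ∀ s : ℝ, 0 ≤ s → ∀ g : Lp ℝ 1 μ, (∫ x, g x ∂μ) = 0 →
      ‖P (s + k * t₀) g‖ ≤ (1 - α) ^ k * ‖g‖ := by
    intro k
    induction k with
    | zero => intro s hs g _; simpa using hC s hs g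
    | succ k ih =>
      intro s hs g hg
      have hsk : (0:ℝ) ≤ s + k * t₀ := by positivity
      have heq : s + ((k:ℕ)+1 : ℕ) * t₀ = (s + k * t₀) + t₀ := by push_cast; ring
      rw [heq, hP_semigroup _ hsk t₀ ht₀.le, ContinuousLinearMap.comp_apply]
      have hgz : (∫ x, (P t₀ g) x ∂μ) = 0 := by rw [hP_mass t₀ ht₀.le g, hg]
      calc ‖P (s + k*t₀) (P t₀ g)‖ ≤ (1-α)^k * ‖P t₀ g‖ := ih s hs _ hgz
        _ ≤ (1-α)^k * ((1-α) * ‖g‖) :=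
            mul_le_mul_of_nonneg_left (hT g hg) (by positivity)
        _ = (1-α)^(k+1) * ‖g‖ := by ring
  -- the iterates of ν under P t₀
  set u : ℕ → Lp ℝ 1 μ := fun k => (fun v => P t₀ v)^[k] ν with hu
  have hu_succ : ∀ k, u (k+1) = P t₀ (u k) := fun k =>
    Function.iterate_succ_apply' (fun v => P t₀ v) k ν
  have hu_pos : ∀ k, 0 ≤ u k := by
    intro k
    induction k with
    | zero => exact hν_pos
    | succ k ih => rw [hu_succ]; exact hP_pos t₀ ht₀.le _ ih
  have hu_mass : ∀ k, (∫ x, (u k) x ∂μ) = 1 := by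
    intro k
    induction k with
    | zero => exact hν_mass
    | succ k ih => rw [hu_succ, hP_mass t₀ ht₀.le]; exact ih
  -- geometric bound on consecutive differences
  have hd : ∀ k, ‖u k - u (k+1)‖ ≤ (1-α)^k * ‖u 0 - u 1‖ := by
    intro k
    induction k with
    | zero => simp
    | succ k ih =>
      have hmz : (∫ x, (u k - u (k+1)) x ∂μ) = 0 := by
        rw [doeblin_int_sub, hu_mass, hu_mass]; ring
      have hmap : u (k+1) - u (k+2) = P t₀ (u k - u (k+1)) := by
        rw [map_sub, ← hu_succ, ← hu_succ]
      calc ‖u (k+1) - u (k+2)‖ = ‖P t₀ (u k - u (k+1))‖ := by rw [hmap]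
        _ ≤ (1-α) * ‖u k - u (k+1)‖ := hT _ hmz
        _ ≤ (1-α) * ((1-α)^k * ‖u 0 - u 1‖) :=
            mul_le_mul_of_nonneg_left ih hβ0.le
        _ = (1-α)^(k+1) * ‖u 0 - u 1‖ := by ring
  have hcauchy : CauchySeq u := by
    refine cauchySeq_of_le_geometric (1-α) ‖u 0 - u 1‖ hβ1 (fun n => ?_)
    rw [dist_eq_norm]
    calc ‖u n - u (n+1)‖ ≤ (1-α)^n * ‖u 0 - u 1‖ := hd n
      _ = ‖u 0 - u 1‖ * (1-α)^n := by ring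
  obtain ⟨nstar, hlim⟩ := cauchySeq_tendsto_of_complete hcauchy
  -- properties of the limit
  have hns_pos : 0 ≤ nstar :=
    le_of_tendsto_of_tendsto' tendsto_const_nhds hlim (fun k => hu_pos k)
  have hns_mass : (∫ x, nstar x ∂μ) = 1 := by
    have h1 : Tendsto (fun k => ∫ x, (u k) x ∂μ) atTop (𝓝 (∫ x, nstar x ∂μ)) :=
      (continuous_integral.tendsto nstar).comp hlim
    have h2 : Tendsto (fun k : ℕ => (1:ℝ)) atTop (𝓝 1) := tendsto_const_nhds
    have : (fun k => ∫ x, (u k) x ∂μ) = fun _ : ℕ => (1:ℝ) := funext hu_mass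
    rw [this] at h1
    exact (tendsto_nhds_unique h1 h2)
  have hfix0 : P t₀ nstar = nstar := by
    have h1 : Tendsto (fun k => P t₀ (u k)) atTop (𝓝 (P t₀ nstar)) :=
      ((P t₀).continuous.tendsto nstar).comp hlim
    have h2 : Tendsto (fun k => u (k+1)) atTop (𝓝 nstar) :=
      hlim.comp (tendsto_add_atTop_nat 1)
    have heq : (fun k => P t₀ (u k)) = fun k => u (k+1) :=
      funext fun k => (hu_succ k).symm
    rw [heq] at h1
    exact tendsto_nhds_unique h1 h2
  -- uniqueness among fixed probability densities of P t₀
  have huniq : ∀ m : Lp ℝ 1 μ, (∫ x, m x ∂μ) = 1 → P t₀ m = m → m = nstar := by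
    intro m hm1 hmfix
    have hmz : (∫ x, (m - nstar) x ∂μ) = 0 := by
      rw [doeblin_int_sub, hm1, hns_mass]; ring
    have hfixg : P t₀ (m - nstar) = m - nstar := by
      rw [map_sub, hmfix, hfix0]
    have hcontr := hT (m - nstar) hmz
    rw [hfixg] at hcontr
    have : ‖m - nstar‖ = 0 := by nlinarith [norm_nonneg (m - nstar)]
    have := norm_eq_zero.1 this
    exact sub_eq_zero.1 this
  have hfix : ∀ t ≥ (0:ℝ), P t nstar = nstar := by
    intro t ht
    refine huniq (P t nstar) ?_ ?_
    · rw [hP_mass t ht, hns_mass]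
    · have h1 : P (t₀ + t) = (P t₀).comp (P t) := hP_semigroup t₀ ht₀.le t ht
      have h2 : P (t + t₀) = (P t).comp (P t₀) := hP_semigroup t ht t₀ ht₀.le
      have h3 : P t₀ (P t nstar) = P t (P t₀ nstar) := by
        have : (P t₀).comp (P t) = (P t).comp (P t₀) := by
          rw [← h1, ← h2, add_comm]
        calc P t₀ (P t nstar) = ((P t₀).comp (P t)) nstar := rfl
          _ = ((P t).comp (P t₀)) nstar := by rw [this]
          _ = P t (P t₀ nstar) := rfl
      rw [h3, hfix0]
  refine ⟨nstar, ⟨hns_pos, hns_mass, hfix⟩, ?_, ?_⟩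
  · intro m hm0 hm1 hmfix
    exact huniq m hm1 (hmfix t₀ ht₀.le)
  · intro n hn0 hn1 t ht
    set g := n - nstar with hgdef
    have hgz : (∫ x, g x ∂μ) = 0 := by
      rw [hgdef, doeblin_int_sub, hn1, hns_mass]; ring
    set k := ⌊t / t₀⌋₊ with hk
    have hk1 : (k:ℝ) * t₀ ≤ t := by
      rw [← le_div_iff₀ ht₀]
      exact Nat.floor_le (div_nonneg ht ht₀.le)
    have hk2 : t < ((k:ℝ) + 1) * t₀ := by
      rw [← div_lt_iff₀ ht₀]
      exact Nat.lt_floor_add_one _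
    have hre : (t - k*t₀) + k*t₀ = t := by ring
    have hb := hiter k (t - k*t₀) (by linarith) g hgz
    rw [hre] at hb
    refine hb.trans ?_
    refine mul_le_mul_of_nonneg_right ?_ (norm_nonneg g)
    -- key exponential comparison
    set L := Real.log (1 - α) with hL
    have hLneg : L < 0 := Real.log_neg hβ0 hβ1
    have hpow : (1-α)^k = Real.exp ((k:ℝ) * L) := by
      rw [Real.exp_nat_mul, Real.exp_log hβ0]
    have hrhs : (1 / (1 - α)) * Real.exp (-(-L / t₀) * t)
        = Real.exp (L * (t / t₀ - 1)) := by
      rw [one_div, ← Real.exp_log hβ0, ← Real.exp_neg, ← Real.exp_add]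
      congr 1
      field_simp
      ring
    rw [hpow, hrhs]
    rw [Real.exp_le_exp]
    have hdivk : t / t₀ - 1 ≤ (k:ℝ) := by
      have : t / t₀ < (k:ℝ) + 1 := (div_lt_iff₀ ht₀).2 (by linarith)
      linarith
    calc (k:ℝ) * L ≤ (t / t₀ - 1) * L := mul_le_mul_of_nonpos_right hdivk hLneg.le
      _ = L * (t / t₀ - 1) := by ring
end

section
/- Let q : (0,∞) → ℝ be measurable with p_*·1_{{s>s_*}} ≤ q(s) ≤ p_∞ for constants p_*, p_∞, s_* > 0, let n₀ ∈ L¹(0,∞) be nonnegative with g := ∫₀^∞ n₀(s) ds, and let n : [0,∞) → L¹(0,∞) be the mild solution of the linear renewal equation with rate q and initial datum n₀. Then n(2s_*, s) ≥ p_*·e^{−2p_∞ s_*}·g for a.e. s ∈ (0, s_*). Consequently, the associated stochastic semigroup on L¹(0,∞) satisfies Doeblin's condition with t₀ = 2s_*, α = p_*·s_*·e^{−2p_∞ s_*} and ν = (1/s_*)·1_{{[0,s_*]}}. -/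
/-!
First, the solution stays nonnegative: the mass `f t = ∫ n(t)⁻` of its negative part is continuous,
vanishes at `t = 0`, and satisfies `f t ≤ p_∞ ∫₀ᵗ f`, because beyond age `t` the solution is the
transported datum `n₀ ≥ 0`, while below age `t` it is the flux `N(t - s)` damped by a factor in
`(0, 1]`, and `N(τ)⁻ ≤ p_∞ f τ`. Grönwall's inequality then forces `f = 0`.

Second, for `τ > s_*` the particles of age `> τ` all come from `n₀`, have total mass at least
`e^{-p_∞ τ} g`, and renew at rate at least `p_*`, so `N(τ) ≥ p_* e^{-p_∞ τ} g`. At time `2 s_*` and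
age `s < s_*`, the solution equals `N(2 s_* - s) e^{-∫₀ˢ q}` with `2 s_* - s > s_*`, which gives the
bound; the Doeblin form follows by nonnegativity outside `(0, s_*)`.
-/

open MeasureTheory Set Real Filter

/-- Mild solution of the linear renewal equation
`∂ₜn + ∂ₛn + q(s) n = 0`, `n(t,0) = N(t) = ∫₀^∞ q(u) n(t,u) du`, with initial datum `n₀`,
viewed as a continuous bounded map `[0,∞) → L¹(0,∞)`. -/
def IsRenewalMild (q : ℝ → ℝ) (n₀ : ℝ → ℝ) (n : ℝ → ℝ → ℝ) : Prop :=
  (∀ t ≥ (0:ℝ), IntegrableOn (n t) (Ioi 0)) ∧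
  (∃ C : ℝ, ∀ t ≥ (0:ℝ), (∫ s in Ioi (0:ℝ), |n t s|) ≤ C) ∧
  (∀ t₀ ≥ (0:ℝ), Tendsto (fun t => ∫ s in Ioi (0:ℝ), |n t s - n t₀ s|)
    (nhdsWithin t₀ (Ici 0)) (nhds 0)) ∧
  ((n 0) =ᵐ[volume.restrict (Ioi 0)] n₀) ∧
  (∀ t > (0:ℝ),
    (∀ᵐ s ∂(volume.restrict (Ioi t)),
      n t s = n₀ (s - t) * Real.exp (-(∫ τ in (0:ℝ)..t, q (τ + s - t)))) ∧
    (∀ᵐ s ∂(volume.restrict (Ioo 0 t)),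
      n t s = (∫ u in Ioi (0:ℝ), q u * n (t - s) u) * Real.exp (-(∫ τ in (0:ℝ)..s, q τ))))

open Topology

section BoundedRate

variable {f : ℝ → ℝ} {K : ℝ}

lemma intervalIntegrable_of_nonneg_of_le (hf : Measurable f) (hf0 : ∀ x, 0 ≤ f x)
    (hfK : ∀ x, f x ≤ K) (a b : ℝ) : IntervalIntegrable f volume a b :=
  (intervalIntegrable_const (c := K)).mono_fun hf.aestronglyMeasurable <|
    Eventually.of_forall fun x => by
      simpa only [Real.norm_eq_abs, abs_of_nonneg (hf0 x)] using (hfK x).trans (le_abs_self K)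

lemma exp_neg_integral_le_one {a : ℝ} (hf0 : ∀ x, 0 ≤ f x) (ha : 0 ≤ a) :
    exp (-∫ x in 0..a, f x) ≤ 1 :=
  exp_le_one_iff.mpr <| neg_nonpos.mpr <| intervalIntegral.integral_nonneg ha fun x _ => hf0 x

lemma exp_neg_mul_le_exp_neg_integral {a : ℝ} (hf : Measurable f) (hf0 : ∀ x, 0 ≤ f x)
    (hfK : ∀ x, f x ≤ K) (ha : 0 ≤ a) : exp (-(K * a)) ≤ exp (-∫ x in 0..a, f x) := by
  have h := intervalIntegral.integral_mono_on ha
    (intervalIntegrable_of_nonneg_of_le hf hf0 hfK 0 a) intervalIntegrable_const fun x _ => hfK x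
  rw [intervalIntegral.integral_const, sub_zero, smul_eq_mul, mul_comm] at h
  exact exp_le_exp.mpr (neg_le_neg h)

end BoundedRate

section NegPart

variable {α : Type*} [MeasurableSpace α] {μ : Measure α}

lemma negPart_mul_le_negPart {a e : ℝ} (he0 : 0 ≤ e) (he1 : e ≤ 1) : (a * e)⁻ ≤ a⁻ :=
  negPart_def (a * e) ▸ sup_le (by nlinarith [neg_le_negPart a, negPart_nonneg a])
    (negPart_nonneg a)

lemma negPart_integral_mul_le {w h : α → ℝ} {K : ℝ} (hw : AEStronglyMeasurable w μ)
    (hw0 : ∀ x, 0 ≤ w x) (hwK : ∀ x, w x ≤ K) (hh : Integrable h μ) :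
    (∫ x, w x * h x ∂μ)⁻ ≤ K * ∫ x, (h x)⁻ ∂μ := by
  have hwK' : ∀ᵐ x ∂μ, ‖w x‖ ≤ K := Eventually.of_forall fun x => by
    simpa only [Real.norm_eq_abs, abs_of_nonneg (hw0 x)] using hwK x
  have hwh : Integrable (fun x => w x * h x) μ := hh.bdd_mul hw hwK'
  have hwh' : Integrable (fun x => w x * (h x)⁻) μ := hh.neg_part.bdd_mul hw hwK'
  calc (∫ x, w x * h x ∂μ)⁻ ≤ ∫ x, w x * (h x)⁻ ∂μ := by
        rw [negPart_def, ← integral_neg]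
        refine sup_le (integral_mono hwh.neg hwh' fun x => ?_)
          (integral_nonneg fun x => mul_nonneg (hw0 x) (negPart_nonneg _))
        simpa only [Pi.neg_apply, ← mul_neg] using
          mul_le_mul_of_nonneg_left (neg_le_negPart (h x)) (hw0 x)
    _ ≤ ∫ x, K * (h x)⁻ ∂μ :=
        integral_mono hwh' (hh.neg_part.const_mul K) fun x =>
          mul_le_mul_of_nonneg_right (hwK x) (negPart_nonneg _)
    _ = K * ∫ x, (h x)⁻ ∂μ := integral_const_mul K _

lemma continuousWithinAt_integral_negPart {ι : Type*} [TopologicalSpace ι] {h : ι → α → ℝ}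
    {S : Set ι} {t₀ : ι} (hint : ∀ t ∈ S, Integrable (h t) μ) (ht₀ : t₀ ∈ S)
    (hcont : Tendsto (fun t => ∫ x, |h t x - h t₀ x| ∂μ) (𝓝[S] t₀) (𝓝 0)) :
    ContinuousWithinAt (fun t => ∫ x, (h t x)⁻ ∂μ) S t₀ := by
  have hint' : ∀ t ∈ S, Integrable (fun x => (h t x)⁻) μ := fun t ht => (hint t ht).neg_part
  have hdist : ∀ t ∈ S, dist (∫ x, (h t x)⁻ ∂μ) (∫ x, (h t₀ x)⁻ ∂μ) ≤
      ∫ x, |h t x - h t₀ x| ∂μ := fun t ht => by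
    rw [Real.dist_eq, ← integral_sub (hint' t ht) (hint' t₀ ht₀)]
    refine (abs_integral_le_integral_abs).trans <|
      integral_mono ((hint' t ht).sub (hint' t₀ ht₀)).abs
        ((hint t ht).sub (hint t₀ ht₀)).abs fun x => ?_
    simpa only [negPart_def, neg_sub_neg, abs_sub_comm (h t₀ x)] using
      abs_sup_sub_sup_le_abs (-h t x) (-h t₀ x) 0
  exact tendsto_iff_dist_tendsto_zero.mpr <|
    squeeze_zero' (Eventually.of_forall fun _ => dist_nonneg)
      (eventually_nhdsWithin_of_forall hdist) hcont

end NegPart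

lemma eq_zero_of_le_mul_integral {f : ℝ → ℝ} {K : ℝ} (hf : ContinuousOn f (Ici 0))
    (hf0 : ∀ t, 0 ≤ f t) (hle : ∀ t ≥ 0, f t ≤ K * ∫ τ in 0..t, f τ) {b : ℝ} (hb : 0 ≤ b) :
    f b = 0 := by
  have hfb : ContinuousOn f (uIcc 0 b) := hf.mono fun x hx => (uIcc_of_le hb ▸ hx).1
  have hF : ∀ x ∈ Icc 0 b, ∫ τ in 0..x, f τ = 0 := by
    refine eq_zero_of_abs_deriv_le_mul_abs_self_of_eq_zero_right (f' := f) (K := K) ?_ ?_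
      intervalIntegral.integral_same ?_
    · simpa only [uIcc_of_le hb] using
        intervalIntegral.continuousOn_primitive_interval hfb.integrableOn_Icc
    · intro x hx
      have hIoi : Ioi x ⊆ Ici 0 := fun y hy => hx.1.trans (le_of_lt hy)
      exact intervalIntegral.integral_hasDerivWithinAt_right
        ((hf.mono fun y hy => (uIcc_of_le hx.1 ▸ hy).1).intervalIntegrable)
        ((hf.mono hIoi).stronglyMeasurableAtFilter_nhdsWithin measurableSet_Ioi x)
        ((hf x hx.1).mono hIoi)
    · intro x hx
      have hFx : 0 ≤ ∫ τ in 0..x, f τ := intervalIntegral.integral_nonneg hx.1 fun τ _ => hf0 τ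
      rw [Real.norm_eq_abs, Real.norm_eq_abs, abs_of_nonneg (hf0 x), abs_of_nonneg hFx]
      exact hle x hx.1
  exact le_antisymm (by simpa [hF b ⟨hb, le_rfl⟩] using hle b hb) (hf0 b)

lemma measurePreserving_sub_right_restrict_Ioi (t : ℝ) :
    MeasurePreserving (· - t) (volume.restrict (Ioi t)) (volume.restrict (Ioi 0)) := by
  simpa only [preimage_sub_const_Ioi, zero_add] using
    (measurePreserving_sub_right volume t).restrict_preimage_emb (measurableEmbedding_subRight t)
      (Ioi 0)

lemma ae_mul_indicator_le {h : ℝ → ℝ} {a c : ℝ}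
    (hc : ∀ᵐ s ∂(volume.restrict (Ioo 0 a)), c / a ≤ h s)
    (h0 : ∀ᵐ s ∂(volume.restrict (Ioi 0)), 0 ≤ h s) :
    ∀ᵐ s ∂(volume.restrict (Ioi 0)), c * (Icc 0 a).indicator (fun _ => 1 / a) s ≤ h s := by
  rw [Measure.restrict_congr_set Ioo_ae_eq_Icc, ae_restrict_iff' measurableSet_Icc] at hc
  filter_upwards [ae_restrict_of_ae hc, h0] with s hcs h0s
  by_cases hs : s ∈ Icc 0 a
  · rw [indicator_of_mem hs, mul_one_div]
    exact hcs hs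
  · rw [indicator_of_notMem hs, mul_zero]
    exact h0s

noncomputable def renewalFlux (q : ℝ → ℝ) (n : ℝ → ℝ → ℝ) (t : ℝ) : ℝ :=
  ∫ u in Ioi 0, q u * n t u

namespace IsRenewalMild

variable {q n₀ : ℝ → ℝ} {n : ℝ → ℝ → ℝ} {K : ℝ}

lemma integrableOn (hn : IsRenewalMild q n₀ n) {t : ℝ} (ht : 0 ≤ t) :
    IntegrableOn (n t) (Ioi 0) :=
  hn.1 t ht

lemma integrableOn_negPart (hn : IsRenewalMild q n₀ n) {t : ℝ} (ht : 0 ≤ t) :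
    IntegrableOn (fun s => (n t s)⁻) (Ioi 0) :=
  (hn.integrableOn ht).neg_part

lemma ae_eq_transport (hn : IsRenewalMild q n₀ n) {t : ℝ} (ht : 0 < t) :
    ∀ᵐ s ∂(volume.restrict (Ioi t)),
      n t s = n₀ (s - t) * exp (-∫ τ in (0:ℝ)..t, q (τ + s - t)) :=
  (hn.2.2.2.2 t ht).1

lemma ae_eq_renewal (hn : IsRenewalMild q n₀ n) {t : ℝ} (ht : 0 < t) :
    ∀ᵐ s ∂(volume.restrict (Ioo 0 t)),
      n t s = renewalFlux q n (t - s) * exp (-∫ τ in (0:ℝ)..s, q τ) :=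
  (hn.2.2.2.2 t ht).2

lemma ae_nonneg_Ioi (hn : IsRenewalMild q n₀ n)
    (hn₀ : ∀ᵐ s ∂(volume.restrict (Ioi (0:ℝ))), 0 ≤ n₀ s) {t : ℝ} (ht : 0 < t) :
    ∀ᵐ s ∂(volume.restrict (Ioi t)), 0 ≤ n t s := by
  filter_upwards [hn.ae_eq_transport ht,
    (measurePreserving_sub_right_restrict_Ioi t).quasiMeasurePreserving.ae hn₀] with s hs hs₀
  rw [hs]
  exact mul_nonneg hs₀ (exp_nonneg _)

lemma continuousOn_integral_negPart (hn : IsRenewalMild q n₀ n) :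
    ContinuousOn (fun t => ∫ s in Ioi 0, (n t s)⁻) (Ici 0) := fun t ht =>
  continuousWithinAt_integral_negPart (fun _ => hn.integrableOn) ht (hn.2.2.1 t ht)

variable (hq_meas : Measurable q) (hq_nonneg : ∀ s, 0 ≤ q s) (hq_upper : ∀ s, q s ≤ K)
include hq_meas hq_nonneg hq_upper

lemma negPart_renewalFlux_le (hn : IsRenewalMild q n₀ n) {t : ℝ} (ht : 0 ≤ t) :
    (renewalFlux q n t)⁻ ≤ K * ∫ s in Ioi 0, (n t s)⁻ :=
  negPart_integral_mul_le hq_meas.aestronglyMeasurable hq_nonneg hq_upper (hn.integrableOn ht)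

lemma integral_negPart_le (hn : IsRenewalMild q n₀ n)
    (hn₀ : ∀ᵐ s ∂(volume.restrict (Ioi (0:ℝ))), 0 ≤ n₀ s) {t : ℝ} (ht : 0 < t) :
    ∫ s in Ioi 0, (n t s)⁻ ≤ K * ∫ τ in 0..t, ∫ s in Ioi 0, (n τ s)⁻ := by
  set f : ℝ → ℝ := fun τ => ∫ s in Ioi 0, (n τ s)⁻
  have hvanish : ∀ᵐ s, s ∈ Ioi 0 \ Ioo 0 t → (n t s)⁻ = 0 := by
    have h := hn.ae_nonneg_Ioi hn₀ ht
    rw [Measure.restrict_congr_set Ioi_ae_eq_Ici, ae_restrict_iff' measurableSet_Ici] at h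
    filter_upwards [h] with s hs hmem
    exact negPart_eq_zero.mpr (hs (not_lt.mp fun hst => hmem.2 ⟨hmem.1, hst⟩))
  have hbound : ∀ᵐ s ∂(volume.restrict (Ioo 0 t)), (n t s)⁻ ≤ K * f (t - s) := by
    filter_upwards [hn.ae_eq_renewal ht, ae_restrict_mem measurableSet_Ioo] with s hs hmem
    rw [hs]
    refine (negPart_mul_le_negPart (exp_nonneg _)
      (exp_neg_integral_le_one hq_nonneg hmem.1.le)).trans ?_
    exact hn.negPart_renewalFlux_le hq_meas hq_nonneg hq_upper (sub_nonneg.mpr hmem.2.le)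
  have hf_int : IntegrableOn (fun s => K * f (t - s)) (Ioo 0 t) := by
    refine (ContinuousOn.integrableOn_Icc ?_).mono_set Ioo_subset_Icc_self
    exact continuousOn_const.mul <| hn.continuousOn_integral_negPart.comp (by fun_prop)
      fun s hs => sub_nonneg.mpr hs.2
  calc f t = ∫ s in Ioo 0 t, (n t s)⁻ :=
        setIntegral_eq_of_subset_of_ae_sdiff_eq_zero measurableSet_Ioi.nullMeasurableSet
          Ioo_subset_Ioi_self hvanish
    _ ≤ ∫ s in Ioo 0 t, K * f (t - s) :=
        setIntegral_mono_ae_restrict ((hn.integrableOn_negPart ht.le).mono_set Ioo_subset_Ioi_self)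
          hf_int hbound
    _ = K * ∫ τ in 0..t, f τ := by
        rw [← integral_Ioc_eq_integral_Ioo, ← intervalIntegral.integral_of_le ht.le,
          intervalIntegral.integral_const_mul, intervalIntegral.integral_comp_sub_left, sub_self,
          sub_zero]

theorem nonneg (hn : IsRenewalMild q n₀ n)
    (hn₀ : ∀ᵐ s ∂(volume.restrict (Ioi (0:ℝ))), 0 ≤ n₀ s) {t : ℝ} (ht : 0 ≤ t) :
    ∀ᵐ s ∂(volume.restrict (Ioi 0)), 0 ≤ n t s := by
  have hinit : ∫ s in Ioi 0, (n 0 s)⁻ = 0 := integral_eq_zero_of_ae <| by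
    filter_upwards [hn.2.2.2.1, hn₀] with s hs hs₀
    exact negPart_eq_zero.mpr (hs ▸ hs₀)
  have hzero : ∫ s in Ioi 0, (n t s)⁻ = 0 := by
    refine eq_zero_of_le_mul_integral (K := K) hn.continuousOn_integral_negPart
      (fun τ => integral_nonneg fun s => negPart_nonneg _) (fun τ hτ => ?_) ht
    rcases hτ.eq_or_lt with rfl | hτ
    · simp [hinit]
    · exact hn.integral_negPart_le hq_meas hq_nonneg hq_upper hn₀ hτ
  filter_upwards [(integral_eq_zero_iff_of_nonneg (fun s => negPart_nonneg _)
    (hn.integrableOn_negPart ht)).mp hzero] with s hs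
  exact negPart_eq_zero.mp hs

lemma exp_mul_integral_le_integral_Ioi (hn : IsRenewalMild q n₀ n)
    (hn₀_int : IntegrableOn n₀ (Ioi 0)) (hn₀ : ∀ᵐ s ∂(volume.restrict (Ioi (0:ℝ))), 0 ≤ n₀ s)
    {t : ℝ} (ht : 0 < t) :
    exp (-(K * t)) * ∫ s in Ioi 0, n₀ s ≤ ∫ s in Ioi t, n t s := by
  have hshift := measurePreserving_sub_right_restrict_Ioi t
  have hshift_int : IntegrableOn (fun s => n₀ (s - t)) (Ioi t) :=
    (hshift.integrable_comp_emb (measurableEmbedding_subRight t)).mpr hn₀_int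
  calc exp (-(K * t)) * ∫ s in Ioi 0, n₀ s = ∫ s in Ioi t, exp (-(K * t)) * n₀ (s - t) := by
        rw [integral_const_mul, hshift.integral_comp (measurableEmbedding_subRight t)]
    _ ≤ ∫ s in Ioi t, n t s := by
        refine setIntegral_mono_ae_restrict (hshift_int.const_mul _)
          ((hn.integrableOn ht.le).mono_set (Ioi_subset_Ioi ht.le)) ?_
        filter_upwards [hn.ae_eq_transport ht, hshift.quasiMeasurePreserving.ae hn₀]
          with s hs hs₀
        rw [hs, mul_comm]
        exact mul_le_mul_of_nonneg_left (exp_neg_mul_le_exp_neg_integral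
          (hq_meas.comp (by fun_prop)) (fun _ => hq_nonneg _) (fun _ => hq_upper _) ht.le) hs₀

lemma mul_exp_mul_integral_le_renewalFlux (hn : IsRenewalMild q n₀ n)
    (hn₀_int : IntegrableOn n₀ (Ioi 0)) (hn₀ : ∀ᵐ s ∂(volume.restrict (Ioi (0:ℝ))), 0 ≤ n₀ s)
    {p t : ℝ} (hp : 0 ≤ p) (ht : 0 < t) (hq_lower : ∀ s, t < s → p ≤ q s) :
    p * exp (-(K * t)) * ∫ s in Ioi 0, n₀ s ≤ renewalFlux q n t := by
  have hnn := hn.nonneg hq_meas hq_nonneg hq_upper hn₀ ht.le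
  have hqn : IntegrableOn (fun s => q s * n t s) (Ioi 0) :=
    (hn.integrableOn ht.le).bdd_mul hq_meas.aestronglyMeasurable (c := K) <|
      Eventually.of_forall fun s => by
        simpa only [Real.norm_eq_abs, abs_of_nonneg (hq_nonneg s)] using hq_upper s
  calc p * exp (-(K * t)) * ∫ s in Ioi 0, n₀ s ≤ p * ∫ s in Ioi t, n t s := by
        rw [mul_assoc]
        exact mul_le_mul_of_nonneg_left
          (hn.exp_mul_integral_le_integral_Ioi hq_meas hq_nonneg hq_upper hn₀_int hn₀ ht) hp
    _ = ∫ s in Ioi t, p * n t s := (integral_const_mul p _).symm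
    _ ≤ ∫ s in Ioi t, q s * n t s := by
        refine setIntegral_mono_ae_restrict
          (((hn.integrableOn ht.le).mono_set (Ioi_subset_Ioi ht.le)).const_mul p)
          (hqn.mono_set (Ioi_subset_Ioi ht.le)) ?_
        filter_upwards [ae_restrict_of_ae_restrict_of_subset (Ioi_subset_Ioi ht.le) hnn,
          ae_restrict_mem measurableSet_Ioi] with s hs hst
        exact mul_le_mul_of_nonneg_right (hq_lower s hst) hs
    _ ≤ renewalFlux q n t := by
        refine setIntegral_mono_set hqn ?_ (Ioi_subset_Ioi ht.le).eventuallyLE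
        filter_upwards [hnn] with s hs
        exact mul_nonneg (hq_nonneg s) hs

lemma ae_mul_exp_mul_integral_le (hn : IsRenewalMild q n₀ n)
    (hn₀_int : IntegrableOn n₀ (Ioi 0)) (hn₀ : ∀ᵐ s ∂(volume.restrict (Ioi (0:ℝ))), 0 ≤ n₀ s)
    {p a : ℝ} (hp : 0 ≤ p) (ha : 0 < a) (hq_lower : ∀ s, a < s → p ≤ q s) :
    ∀ᵐ s ∂(volume.restrict (Ioo 0 a)),
      p * exp (-(2 * K * a)) * ∫ s in Ioi 0, n₀ s ≤ n (2 * a) s := by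
  have hg_nonneg : 0 ≤ ∫ s in Ioi 0, n₀ s := integral_nonneg_of_ae hn₀
  filter_upwards [ae_restrict_of_ae_restrict_of_subset (Ioo_subset_Ioo_right (by linarith))
    (hn.ae_eq_renewal (by linarith : 0 < 2 * a)), ae_restrict_mem measurableSet_Ioo]
    with s hs ⟨hs0, hs1⟩
  have hflux := hn.mul_exp_mul_integral_le_renewalFlux hq_meas hq_nonneg hq_upper
    hn₀_int hn₀ hp (by linarith : 0 < 2 * a - s) fun u hu => hq_lower u (by linarith)
  have hexp : exp (-(K * (2 * a - s))) * exp (-(K * s)) = exp (-(2 * K * a)) := by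
    rw [← exp_add]
    ring_nf
  calc p * exp (-(2 * K * a)) * ∫ s in Ioi 0, n₀ s
      = p * exp (-(K * (2 * a - s))) * (∫ s in Ioi 0, n₀ s) * exp (-(K * s)) := by
        rw [← hexp]
        ring
    _ ≤ n (2 * a) s := hs ▸ mul_le_mul hflux
        (exp_neg_mul_le_exp_neg_integral hq_meas hq_nonneg hq_upper hs0.le) (exp_nonneg _)
        (le_trans (by positivity) hflux)

end IsRenewalMild

theorem statement12_general
    (q : ℝ → ℝ) (pstar pinf sstar : ℝ)
    (hpstar : 0 < pstar) (hsstar : 0 < sstar)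
    (hq_meas : Measurable q)
    (hq_nonneg : ∀ s : ℝ, 0 ≤ q s)
    (hq_lower : ∀ s : ℝ, sstar < s → pstar ≤ q s)
    (hq_upper : ∀ s : ℝ, q s ≤ pinf)
    (n₀ : ℝ → ℝ) (hn₀_int : IntegrableOn n₀ (Ioi 0))
    (hn₀_nonneg : ∀ᵐ s ∂(volume.restrict (Ioi (0:ℝ))), 0 ≤ n₀ s)
    (g : ℝ) (hg : g = ∫ s in Ioi (0:ℝ), n₀ s)
    (n : ℝ → ℝ → ℝ) (hn : IsRenewalMild q n₀ n)
    :
    (∀ᵐ s ∂(volume.restrict (Ioo (0:ℝ) sstar)),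
      pstar * Real.exp (-(2 * pinf * sstar)) * g ≤ n (2 * sstar) s) ∧
    (g = 1 → ∀ᵐ s ∂(volume.restrict (Ioi (0:ℝ))),
      (pstar * sstar * Real.exp (-(2 * pinf * sstar))) *
        Set.indicator (Set.Icc (0:ℝ) sstar) (fun _ => 1 / sstar) s ≤ n (2 * sstar) s) := by
  have hlower := hg ▸ hn.ae_mul_exp_mul_integral_le hq_meas hq_nonneg hq_upper hn₀_int
    hn₀_nonneg hpstar.le hsstar hq_lower
  refine ⟨hlower, fun hg1 => ae_mul_indicator_le ?_ (hn.nonneg hq_meas hq_nonneg hq_upper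
    hn₀_nonneg (by positivity))⟩
  filter_upwards [hlower] with s hs
  convert hs using 1
  rw [hg1]
  field_simp

/-- Doeblin lower bound for the renewal semigroup: at time `t₀ = 2s_*` the solution
dominates `p_* e^{-2p_∞ s_*} g` on `(0, s_*)`; hence Doeblin's condition holds with
`α = p_* s_* e^{-2 p_∞ s_*}` and `ν = (1/s_*) 1_{[0,s_*]}`. -/
theorem statement12
    (q : ℝ → ℝ) (pstar pinf sstar : ℝ)
    (hpstar : 0 < pstar) (hpinf : 0 < pinf) (hsstar : 0 < sstar)
    (hq_meas : Measurable q)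
    (hq_nonneg : ∀ s : ℝ, 0 ≤ q s)
    (hq_lower : ∀ s : ℝ, sstar < s → pstar ≤ q s)
    (hq_upper : ∀ s : ℝ, q s ≤ pinf)
    (n₀ : ℝ → ℝ) (hn₀_int : IntegrableOn n₀ (Ioi 0))
    (hn₀_nonneg : ∀ᵐ s ∂(volume.restrict (Ioi (0:ℝ))), 0 ≤ n₀ s)
    (g : ℝ) (hg : g = ∫ s in Ioi (0:ℝ), n₀ s)
    (n : ℝ → ℝ → ℝ) (hn : IsRenewalMild q n₀ n)
    :
    (∀ᵐ s ∂(volume.restrict (Ioo (0:ℝ) sstar)),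
      pstar * Real.exp (-(2 * pinf * sstar)) * g ≤ n (2 * sstar) s) ∧
    (g = 1 → ∀ᵐ s ∂(volume.restrict (Ioi (0:ℝ))),
      (pstar * sstar * Real.exp (-(2 * pinf * sstar))) *
        Set.indicator (Set.Icc (0:ℝ) sstar) (fun _ => 1 / sstar) s ≤ n (2 * sstar) s) :=
  statement12_general q pstar pinf sstar hpstar hsstar hq_meas hq_nonneg hq_lower hq_upper n₀
    hn₀_int hn₀_nonneg g hg n hn
end

section
/- Let Ω be a bounded open subset of ℝ^d, let g ∈ C_b(Ω) be nonnegative with ∫_Ω g(x) dx = 1, let I ∈ C_b([0,∞)×Ω), and let F : ℝ → ℝ be bounded by M > 0 and Lipschitz with constant L > 0. For w ∈ C_b([0,∞)×Ω×Ω) define the operator T_w on C_b([0,∞)×Ω) by T_w[S](t,x) := ∫_Ω w(t,x,y)·g(y)·F(S(t,y)) dy + I(t,x). If ‖w‖_∞·L < 1 then T_w has a unique fixed point S̄[w] ∈ C_b([0,∞)×Ω). Moreover, for any w₁, w₂ ∈ C_b([0,∞)×Ω×Ω) with ‖w₁‖_∞·L < 1 and ‖w₂‖_∞·L < 1, ‖S̄[w₁]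 − S̄[w₂]‖_∞ ≤ (M/(1 − ‖w₂‖_∞·L))·‖w₁ − w₂‖_∞. -/
open MeasureTheory Set Real Filter

/-!
Since `g` is a probability density on `Ω`, pointwise
`|T_w[S₁] - T_w[S₂]| ≤ ‖w‖_∞ sup |F ∘ S₁ - F ∘ S₂| ≤ ‖w‖_∞ L ‖S₁ - S₂‖_∞`,
so `T_w` is a contraction of the Banach space `C_b([0,∞) × Ω)` and Banach's fixed point theorem
gives `S̄[w]`. The same estimate shows `‖T_{w₁}[S] - T_{w₂}[S]‖_∞ ≤ M ‖w₁ - w₂‖_∞` for every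
state `S`; the fixed point of a `K`-contraction and that of a map uniformly within `C` of it are
at most `C / (1 - K)` apart.
-/

open BoundedContinuousFunction

section TimeDomain

variable {X : Type*} [TopologicalSpace X] {Om : Set X}

lemma CbTimeOn2.continuousOn_slice {w : ℝ → X → X → ℝ} (hw : CbTimeOn2 Om w) {t : ℝ}
    (ht : 0 ≤ t) {x : X} (hx : x ∈ Om) : ContinuousOn (w t x) Om :=
  hw.1.comp (by fun_prop : Continuous fun y : X => (t, x, y)).continuousOn
    fun _ hy => ⟨ht, hx, hy⟩

lemma CbTimeOn2.continuousWithinAt_apply {w : ℝ → X → X → ℝ} (hw : CbTimeOn2 Om w) {y : X}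
    (hy : y ∈ Om) {q : ℝ × X} (hq : q ∈ Ici (0 : ℝ) ×ˢ Om) :
    ContinuousWithinAt (fun p : ℝ × X => w p.1 p.2 y) (Ici 0 ×ˢ Om) q :=
  hw.1.comp (by fun_prop : Continuous fun p : ℝ × X => (p.1, p.2, y)).continuousOn
    (fun _ hp => ⟨hp.1, hp.2, hy⟩) q hq

/-- The value `0` off `[0,∞) × Ω` is never looked at. -/
noncomputable def extendByZero (S : (Ici (0 : ℝ) ×ˢ Om) →ᵇ ℝ) (t : ℝ) (x : X) : ℝ :=
  open Classical in if h : (t, x) ∈ Ici (0 : ℝ) ×ˢ Om then S ⟨(t, x), h⟩ else 0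

lemma extendByZero_of_mem (S : (Ici (0 : ℝ) ×ˢ Om) →ᵇ ℝ) {t : ℝ} {x : X}
    (h : (t, x) ∈ Ici (0 : ℝ) ×ˢ Om) : extendByZero S t x = S ⟨(t, x), h⟩ :=
  dif_pos h

lemma cbTimeOn_extendByZero (S : (Ici (0 : ℝ) ×ˢ Om) →ᵇ ℝ) : CbTimeOn Om (extendByZero S) := by
  refine ⟨?_, ‖S‖, fun t ht x hx => ?_⟩
  · have : (Ici (0 : ℝ) ×ˢ Om).domRestrict (fun q => extendByZero S q.1 q.2) = S :=
      funext fun p => extendByZero_of_mem S p.2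
    rw [continuousOn_iff_continuous_domRestrict, this]
    exact S.continuous
  · rw [extendByZero_of_mem S ⟨ht, hx⟩]
    exact S.norm_coe_le_norm _

noncomputable def CbTimeOn.toBCF {f : ℝ → X → ℝ} (hf : CbTimeOn Om f) :
    (Ici (0 : ℝ) ×ˢ Om) →ᵇ ℝ :=
  .ofNormedAddCommGroup (fun p => f p.1.1 p.1.2) hf.1.domRestrict hf.2.choose
    fun p => hf.2.choose_spec _ p.2.1 _ p.2.2

lemma CbTimeOn.extendByZero_toBCF {f : ℝ → X → ℝ} (hf : CbTimeOn Om f) {t : ℝ} (ht : 0 ≤ t)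
    {x : X} (hx : x ∈ Om) : extendByZero hf.toBCF t x = f t x :=
  extendByZero_of_mem _ ⟨ht, hx⟩

end TimeDomain

lemma abs_mul_mul_le {a b c A C : ℝ} (ha : |a| ≤ A) (hc : |c| ≤ C) :
    |a * (b * c)| ≤ A * C * |b| := by
  rw [abs_mul, abs_mul]
  calc |a| * (|b| * |c|) = |a| * |c| * |b| := by ring
    _ ≤ A * C * |b| := by gcongr; exact (abs_nonneg _).trans ha

section Integrals

variable {X : Type*} [MeasurableSpace X] {μ : Measure X} {s : Set X} {g : X → ℝ}

lemma nonempty_of_setIntegral_eq_one (hmass : ∫ y in s, g y ∂μ = 1) : s.Nonempty := by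
  by_contra hs
  simp [not_nonempty_iff_eq_empty.1 hs] at hmass

lemma abs_setIntegral_le_of_abs_le_mul (hs : MeasurableSet s) (hg : IntegrableOn g s μ)
    (hmass : ∫ y in s, g y ∂μ = 1) {f : X → ℝ} {c : ℝ} (h : ∀ y ∈ s, |f y| ≤ c * g y) :
    |∫ y in s, f y ∂μ| ≤ c :=
  calc |∫ y in s, f y ∂μ| = ‖∫ y in s, f y ∂μ‖ := (Real.norm_eq_abs _).symm
    _ ≤ ∫ y in s, c * g y ∂μ :=
        norm_integral_le_of_norm_le (hg.const_mul c) ((ae_restrict_iff' hs).2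
          (.of_forall fun y hy => (Real.norm_eq_abs _).trans_le (h y hy)))
    _ = c := by rw [integral_const_mul, hmass, mul_one]

lemma integrableOn_of_continuousOn_of_abs_le [TopologicalSpace X] [OpensMeasurableSpace X]
    (hs : MeasurableSet s) (hμ : μ s < ⊤) (hg : ContinuousOn g s) {C : ℝ}
    (hC : ∀ y ∈ s, |g y| ≤ C) : IntegrableOn g s μ :=
  .of_bound hμ (hg.aestronglyMeasurable hs) C
    ((ae_restrict_iff' hs).2 (.of_forall fun y hy => (Real.norm_eq_abs _).trans_le (hC y hy)))

variable {F : ℝ → ℝ} {M : ℝ}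

lemma abs_setIntegral_sub_setIntegral_le (hs : MeasurableSet s) (hg : IntegrableOn g s μ)
    (hg0 : ∀ y ∈ s, 0 ≤ g y) (hmass : ∫ y in s, g y ∂μ = 1) {L : NNReal}
    (hF : LipschitzWith L F) (hFM : ∀ u, |F u| ≤ M) {k₁ k₂ σ₁ σ₂ : X → ℝ} {Dk K δ : ℝ}
    (hi₁ : IntegrableOn (fun y => k₁ y * (g y * F (σ₁ y))) s μ)
    (hi₂ : IntegrableOn (fun y => k₂ y * (g y * F (σ₂ y))) s μ)
    (hDk : ∀ y ∈ s, |k₁ y - k₂ y| ≤ Dk) (hK : ∀ y ∈ s, |k₂ y| ≤ K)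
    (hδ : ∀ y ∈ s, |σ₁ y - σ₂ y| ≤ δ) :
    |(∫ y in s, k₁ y * (g y * F (σ₁ y)) ∂μ) - ∫ y in s, k₂ y * (g y * F (σ₂ y)) ∂μ|
      ≤ M * Dk + K * L * δ := by
  rw [← integral_sub hi₁ hi₂]
  refine abs_setIntegral_le_of_abs_le_mul hs hg hmass fun y hy => ?_
  have hFσ : |F (σ₁ y) - F (σ₂ y)| ≤ L * δ := by
    simpa only [Real.dist_eq] using
      (hF.dist_le_mul _ _).trans (mul_le_mul_of_nonneg_left (hδ y hy) L.2)
  calc |k₁ y * (g y * F (σ₁ y)) - k₂ y * (g y * F (σ₂ y))|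
      = |((k₁ y - k₂ y) * F (σ₁ y) + k₂ y * (F (σ₁ y) - F (σ₂ y))) * g y| := by ring_nf
    _ = |(k₁ y - k₂ y) * F (σ₁ y) + k₂ y * (F (σ₁ y) - F (σ₂ y))| * g y := by
        rw [abs_mul, abs_of_nonneg (hg0 y hy)]
    _ ≤ (|k₁ y - k₂ y| * |F (σ₁ y)| + |k₂ y| * |F (σ₁ y) - F (σ₂ y)|) * g y := by
        refine mul_le_mul_of_nonneg_right ((abs_add_le _ _).trans_eq ?_) (hg0 y hy)
        rw [abs_mul, abs_mul]
    _ ≤ (Dk * M + K * (L * δ)) * g y := by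
        refine mul_le_mul_of_nonneg_right (add_le_add ?_ ?_) (hg0 y hy)
        · exact mul_le_mul (hDk y hy) (hFM _) (abs_nonneg _) ((abs_nonneg _).trans (hDk y hy))
        · exact mul_le_mul (hK y hy) hFσ (abs_nonneg _) ((abs_nonneg _).trans (hK y hy))
    _ = (M * Dk + K * L * δ) * g y := by ring

variable [TopologicalSpace X] [OpensMeasurableSpace X]

lemma integrableOn_kernel_integrand (hs : MeasurableSet s) (hg : IntegrableOn g s μ)
    {k σ : X → ℝ} {C : ℝ} (hk : ContinuousOn k s) (hkC : ∀ y ∈ s, |k y| ≤ C)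
    (hσ : ContinuousOn σ s) (hF : Continuous F) (hFM : ∀ u, |F u| ≤ M) :
    IntegrableOn (fun y => k y * (g y * F (σ y))) s μ := by
  have hbdd : ∀ y ∈ s, ‖k y * F (σ y)‖ ≤ C * M := fun y hy => by
    rw [Real.norm_eq_abs, abs_mul]
    exact mul_le_mul (hkC y hy) (hFM _) (abs_nonneg _) ((abs_nonneg _).trans (hkC y hy))
  refine (hg.bdd_mul (f := fun y => k y * F (σ y))
    ((hk.mul (hF.comp_continuousOn hσ)).aestronglyMeasurable hs)
    ((ae_restrict_iff' hs).2 (.of_forall hbdd))).congr (.of_forall fun y => ?_)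
  ring

end Integrals

section Equilibrium

variable {X : Type*} [MeasurableSpace X]

noncomputable def equilibriumMap (μ : Measure X) (Om : Set X) (w : ℝ → X → X → ℝ) (g : X → ℝ)
    (F : ℝ → ℝ) (I S : ℝ → X → ℝ) (t : ℝ) (x : X) : ℝ :=
  (∫ y in Om, w t x y * (g y * F (S t y)) ∂μ) + I t x

variable {μ : Measure X} {Om : Set X} {w w₁ w₂ : ℝ → X → X → ℝ} {g : X → ℝ} {F : ℝ → ℝ}
  {I : ℝ → X → ℝ} {M : ℝ}

lemma equilibriumMap_congr (hs : MeasurableSet Om) {S S' : ℝ → X → ℝ} {t : ℝ}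
    (h : ∀ y ∈ Om, S t y = S' t y) (x : X) :
    equilibriumMap μ Om w g F I S t x = equilibriumMap μ Om w g F I S' t x := by
  unfold equilibriumMap
  rw [setIntegral_congr_fun hs fun y hy => by rw [h y hy]]

variable [TopologicalSpace X]

/-- The paper's `T_w`, as a self-map of `C_b([0,∞) × Ω)`. -/
noncomputable def equilibriumOp
    (hT : ∀ S : (Ici (0 : ℝ) ×ˢ Om) →ᵇ ℝ,
      CbTimeOn Om (equilibriumMap μ Om w g F I (extendByZero S)))
    (S : (Ici (0 : ℝ) ×ˢ Om) →ᵇ ℝ) : (Ici (0 : ℝ) ×ˢ Om) →ᵇ ℝ :=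
  (hT S).toBCF

lemma isFixedPt_toBCF (hs : MeasurableSet Om)
    (hT : ∀ S : (Ici (0 : ℝ) ×ˢ Om) →ᵇ ℝ,
      CbTimeOn Om (equilibriumMap μ Om w g F I (extendByZero S)))
    {S : ℝ → X → ℝ} (hS : CbTimeOn Om S)
    (heq : ∀ t ≥ (0 : ℝ), ∀ x ∈ Om, S t x = equilibriumMap μ Om w g F I S t x) :
    Function.IsFixedPt (equilibriumOp hT) hS.toBCF := by
  refine BoundedContinuousFunction.ext fun ⟨(t, x), ht, hx⟩ => ?_
  change equilibriumMap μ Om w g F I (extendByZero hS.toBCF) t x = S t x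
  rw [heq t ht x hx]
  exact equilibriumMap_congr hs (fun y hy => hS.extendByZero_toBCF ht hy) x

lemma extendByZero_eq_equilibriumMap
    (hT : ∀ S : (Ici (0 : ℝ) ×ˢ Om) →ᵇ ℝ,
      CbTimeOn Om (equilibriumMap μ Om w g F I (extendByZero S)))
    {S : (Ici (0 : ℝ) ×ˢ Om) →ᵇ ℝ} (hS : Function.IsFixedPt (equilibriumOp hT) S) {t : ℝ}
    (ht : 0 ≤ t) {x : X} (hx : x ∈ Om) :
    extendByZero S t x = equilibriumMap μ Om w g F I (extendByZero S) t x :=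
  (extendByZero_of_mem S ⟨ht, hx⟩).trans (DFunLike.congr_fun hS.symm _)

variable [OpensMeasurableSpace X]

lemma continuousOn_setIntegral_kernel [FirstCountableTopology X] (hs : MeasurableSet Om)
    (hg : IntegrableOn g Om μ) (hw : CbTimeOn2 Om w) (hF : Continuous F) (hFM : ∀ u, |F u| ≤ M)
    {S : ℝ → X → ℝ} (hS : ContinuousOn (fun q : ℝ × X => S q.1 q.2) (Ici 0 ×ˢ Om)) :
    ContinuousOn (fun q : ℝ × X => ∫ y in Om, w q.1 q.2 y * (g y * F (S q.1 y)) ∂μ)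
      (Ici 0 ×ˢ Om) := by
  obtain ⟨C, hC⟩ := hw.2
  intro q hq
  refine continuousWithinAt_of_dominated (bound := fun y => C * M * |g y|) ?_ ?_
    (hg.abs.const_mul _) ?_
  · filter_upwards [self_mem_nhdsWithin] with p hp
    exact ((hw.continuousOn_slice hp.1 hp.2).aestronglyMeasurable hs).mul
      (hg.aestronglyMeasurable.mul
        ((hF.comp_continuousOn (hS.uncurry_left _ hp.1)).aestronglyMeasurable hs))
  · filter_upwards [self_mem_nhdsWithin] with p hp
    exact (ae_restrict_iff' hs).2 (.of_forall fun y hy =>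
      (Real.norm_eq_abs _).trans_le (abs_mul_mul_le (hC _ hp.1 _ hp.2 _ hy) (hFM _)))
  · refine (ae_restrict_iff' hs).2 (.of_forall fun y hy => ?_)
    have hSy : ContinuousWithinAt (fun p : ℝ × X => S p.1 y) (Ici 0 ×ˢ Om) q :=
      hS.comp (by fun_prop : Continuous fun p : ℝ × X => (p.1, y)).continuousOn
        (fun _ hp => ⟨hp.1, hy⟩) q hq
    exact (hw.continuousWithinAt_apply hy hq).mul
      (continuousWithinAt_const.mul (hF.continuousAt.comp_continuousWithinAt hSy))

lemma cbTimeOn_equilibriumMap [FirstCountableTopology X] (hs : MeasurableSet Om)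
    (hg : IntegrableOn g Om μ) (hw : CbTimeOn2 Om w) (hI : CbTimeOn Om I) (hF : Continuous F)
    (hFM : ∀ u, |F u| ≤ M) {S : ℝ → X → ℝ}
    (hS : ContinuousOn (fun q : ℝ × X => S q.1 q.2) (Ici 0 ×ˢ Om)) :
    CbTimeOn Om (equilibriumMap μ Om w g F I S) := by
  obtain ⟨C, hC⟩ := hw.2
  obtain ⟨CI, hCI⟩ := hI.2
  refine ⟨(continuousOn_setIntegral_kernel hs hg hw hF hFM hS).add hI.1,
    C * M * ∫ y in Om, |g y| ∂μ + CI, fun t ht x hx => ?_⟩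
  have hint : |∫ y in Om, w t x y * (g y * F (S t y)) ∂μ| ≤ C * M * ∫ y in Om, |g y| ∂μ := by
    rw [← integral_const_mul, ← Real.norm_eq_abs]
    exact norm_integral_le_of_norm_le (hg.abs.const_mul _) ((ae_restrict_iff' hs).2
      (.of_forall fun y hy =>
        (Real.norm_eq_abs _).trans_le (abs_mul_mul_le (hC t ht x hx y hy) (hFM _))))
  exact (abs_add_le _ _).trans (add_le_add hint (hCI t ht x hx))

lemma dist_equilibriumOp_le (hs : MeasurableSet Om) (hg : IntegrableOn g Om μ)
    (hg0 : ∀ y ∈ Om, 0 ≤ g y) (hmass : ∫ y in Om, g y ∂μ = 1) {L : NNReal}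
    (hF : LipschitzWith L F) (hFM : ∀ u, |F u| ≤ M) (hw₁ : CbTimeOn2 Om w₁)
    (hw₂ : CbTimeOn2 Om w₂) {Dw K : ℝ}
    (hDw : ∀ t ≥ (0 : ℝ), ∀ x ∈ Om, ∀ y ∈ Om, |w₁ t x y - w₂ t x y| ≤ Dw)
    (hK : ∀ t ≥ (0 : ℝ), ∀ x ∈ Om, ∀ y ∈ Om, |w₂ t x y| ≤ K)
    (hT₁ : ∀ S : (Ici (0 : ℝ) ×ˢ Om) →ᵇ ℝ,
      CbTimeOn Om (equilibriumMap μ Om w₁ g F I (extendByZero S)))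
    (hT₂ : ∀ S : (Ici (0 : ℝ) ×ˢ Om) →ᵇ ℝ,
      CbTimeOn Om (equilibriumMap μ Om w₂ g F I (extendByZero S)))
    (S₁ S₂ : (Ici (0 : ℝ) ×ˢ Om) →ᵇ ℝ) :
    dist (equilibriumOp hT₁ S₁) (equilibriumOp hT₂ S₂) ≤ M * Dw + K * L * dist S₁ S₂ := by
  obtain ⟨x₀, hx₀⟩ := nonempty_of_setIntegral_eq_one hmass
  have : Nonempty (Ici (0 : ℝ) ×ˢ Om) := ⟨⟨(0, x₀), self_mem_Ici, hx₀⟩⟩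
  refine dist_le_iff_of_nonempty.2 ?_
  rintro ⟨⟨t, x⟩, ht : 0 ≤ t, hx : x ∈ Om⟩
  have hint : ∀ {w : ℝ → X → X → ℝ}, CbTimeOn2 Om w → ∀ S : (Ici (0 : ℝ) ×ˢ Om) →ᵇ ℝ,
      IntegrableOn (fun y => w t x y * (g y * F (extendByZero S t y))) Om μ := fun hw S =>
    integrableOn_kernel_integrand hs hg (hw.continuousOn_slice ht hx)
      (hw.2.choose_spec t ht x hx) ((cbTimeOn_extendByZero S).1.uncurry_left t ht)
      hF.continuous hFM
  have hδ : ∀ y ∈ Om, |extendByZero S₁ t y - extendByZero S₂ t y| ≤ dist S₁ S₂ := fun y hy => by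
    rw [extendByZero_of_mem S₁ ⟨ht, hy⟩, extendByZero_of_mem S₂ ⟨ht, hy⟩, ← Real.dist_eq]
    exact dist_coe_le_dist _
  change |equilibriumMap μ Om w₁ g F I (extendByZero S₁) t x
    - equilibriumMap μ Om w₂ g F I (extendByZero S₂) t x| ≤ _
  rw [equilibriumMap, equilibriumMap, add_sub_add_right_eq_sub]
  exact abs_setIntegral_sub_setIntegral_le hs hg hg0 hmass hF hFM (hint hw₁ S₁) (hint hw₂ S₂)
    (hDw t ht x hx) (hK t ht x hx) hδ

lemma contractingWith_equilibriumOp (hs : MeasurableSet Om) (hg : IntegrableOn g Om μ)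
    (hg0 : ∀ y ∈ Om, 0 ≤ g y) (hmass : ∫ y in Om, g y ∂μ = 1) {L : NNReal}
    (hF : LipschitzWith L F) (hFM : ∀ u, |F u| ≤ M) (hw : CbTimeOn2 Om w) {K : NNReal}
    (hK : ∀ t ≥ (0 : ℝ), ∀ x ∈ Om, ∀ y ∈ Om, |w t x y| ≤ K) (hKL : K * L < 1)
    (hT : ∀ S : (Ici (0 : ℝ) ×ˢ Om) →ᵇ ℝ,
      CbTimeOn Om (equilibriumMap μ Om w g F I (extendByZero S))) :
    ContractingWith (K * L) (equilibriumOp hT) := by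
  refine ⟨hKL, LipschitzWith.of_dist_le_mul fun S₁ S₂ => ?_⟩
  simpa using dist_equilibriumOp_le hs hg hg0 hmass hF hFM hw hw (Dw := 0) (by simp) hK hT hT
    S₁ S₂

variable [FirstCountableTopology X]

theorem exists_unique_equilibrium (hs : MeasurableSet Om) (hg : IntegrableOn g Om μ)
    (hg0 : ∀ y ∈ Om, 0 ≤ g y) (hmass : ∫ y in Om, g y ∂μ = 1) {L : NNReal}
    (hF : LipschitzWith L F) (hFM : ∀ u, |F u| ≤ M) (hI : CbTimeOn Om I) (hw : CbTimeOn2 Om w)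
    {K : NNReal} (hK : ∀ t ≥ (0 : ℝ), ∀ x ∈ Om, ∀ y ∈ Om, |w t x y| ≤ K) (hKL : K * L < 1) :
    ∃ S : ℝ → X → ℝ, CbTimeOn Om S ∧
      (∀ t ≥ (0 : ℝ), ∀ x ∈ Om, S t x = equilibriumMap μ Om w g F I S t x) ∧
      ∀ S' : ℝ → X → ℝ, CbTimeOn Om S' →
        (∀ t ≥ (0 : ℝ), ∀ x ∈ Om, S' t x = equilibriumMap μ Om w g F I S' t x) →
        ∀ t ≥ (0 : ℝ), ∀ x ∈ Om, S' t x = S t x := by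
  have hT : ∀ S : (Ici (0 : ℝ) ×ˢ Om) →ᵇ ℝ,
      CbTimeOn Om (equilibriumMap μ Om w g F I (extendByZero S)) := fun S =>
    cbTimeOn_equilibriumMap hs hg hw hI hF.continuous hFM (cbTimeOn_extendByZero S).1
  have hcontr := contractingWith_equilibriumOp hs hg hg0 hmass hF hFM hw hK hKL hT
  refine ⟨extendByZero (ContractingWith.fixedPoint _ hcontr), cbTimeOn_extendByZero _,
    fun t ht x hx => extendByZero_eq_equilibriumMap hT hcontr.fixedPoint_isFixedPt ht hx,
    fun S' hS' heq' t ht x hx => ?_⟩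
  rw [← hS'.extendByZero_toBCF ht hx, hcontr.fixedPoint_unique (isFixedPt_toBCF hs hT hS' heq')]

theorem abs_sub_le_of_equilibrium (hs : MeasurableSet Om) (hg : IntegrableOn g Om μ)
    (hg0 : ∀ y ∈ Om, 0 ≤ g y) (hmass : ∫ y in Om, g y ∂μ = 1) {L : NNReal}
    (hF : LipschitzWith L F) (hFM : ∀ u, |F u| ≤ M) (hI : CbTimeOn Om I)
    (hw₁ : CbTimeOn2 Om w₁) (hw₂ : CbTimeOn2 Om w₂) {K : NNReal}
    (hK : ∀ t ≥ (0 : ℝ), ∀ x ∈ Om, ∀ y ∈ Om, |w₂ t x y| ≤ K) (hKL : K * L < 1) {Dw : ℝ}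
    (hDw : ∀ t ≥ (0 : ℝ), ∀ x ∈ Om, ∀ y ∈ Om, |w₁ t x y - w₂ t x y| ≤ Dw)
    {S₁ S₂ : ℝ → X → ℝ} (hS₁ : CbTimeOn Om S₁) (hS₂ : CbTimeOn Om S₂)
    (heq₁ : ∀ t ≥ (0 : ℝ), ∀ x ∈ Om, S₁ t x = equilibriumMap μ Om w₁ g F I S₁ t x)
    (heq₂ : ∀ t ≥ (0 : ℝ), ∀ x ∈ Om, S₂ t x = equilibriumMap μ Om w₂ g F I S₂ t x)
    {t : ℝ} (ht : 0 ≤ t) {x : X} (hx : x ∈ Om) :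
    |S₁ t x - S₂ t x| ≤ M * Dw / (1 - K * L) := by
  have hT : ∀ {w : ℝ → X → X → ℝ}, CbTimeOn2 Om w → ∀ S : (Ici (0 : ℝ) ×ˢ Om) →ᵇ ℝ,
      CbTimeOn Om (equilibriumMap μ Om w g F I (extendByZero S)) := fun hw S =>
    cbTimeOn_equilibriumMap hs hg hw hI hF.continuous hFM (cbTimeOn_extendByZero S).1
  have hcontr := contractingWith_equilibriumOp hs hg hg0 hmass hF hFM hw₂ hK hKL (hT hw₂)
  have hdist := hcontr.dist_fixedPoint_fixedPoint_of_dist_le' (equilibriumOp (hT hw₁))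
    (isFixedPt_toBCF hs (hT hw₂) hS₂ heq₂) (isFixedPt_toBCF hs (hT hw₁) hS₁ heq₁)
    (C := M * Dw) fun S => by
      rw [dist_comm]
      simpa using dist_equilibriumOp_le hs hg hg0 hmass hF hFM hw₁ hw₂ hDw hK (hT hw₁) (hT hw₂)
        S S
  calc |S₁ t x - S₂ t x| = dist (hS₁.toBCF ⟨(t, x), ht, hx⟩) (hS₂.toBCF ⟨(t, x), ht, hx⟩) :=
        (Real.dist_eq _ _).symm
    _ ≤ dist hS₂.toBCF hS₁.toBCF := (dist_coe_le_dist _).trans_eq (dist_comm _ _)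
    _ ≤ M * Dw / (1 - K * L) := by exact_mod_cast hdist

end Equilibrium

theorem statement17_general
    (d : ℕ) (Om : Set (Fin d → ℝ)) (hOm_open : IsOpen Om) (hOm_bdd : Bornology.IsBounded Om)
    (g : (Fin d → ℝ) → ℝ)
    (hg_cont : ContinuousOn g Om) (hg_nonneg : ∀ x ∈ Om, 0 ≤ g x)
    (hg_bdd : ∃ C : ℝ, ∀ x ∈ Om, g x ≤ C) (hg_mass : (∫ x in Om, g x) = 1)
    (I : ℝ → (Fin d → ℝ) → ℝ) (hI : CbTimeOn Om I)
    (F : ℝ → ℝ) (M L : ℝ) (hL : 0 < L)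
    (hF_bdd : ∀ u : ℝ, |F u| ≤ M) (hF_lip : LipschitzWith L.toNNReal F) :
    (∀ (w : ℝ → (Fin d → ℝ) → (Fin d → ℝ) → ℝ) (wbd : ℝ),
      CbTimeOn2 Om w → (∀ t ≥ (0:ℝ), ∀ x ∈ Om, ∀ y ∈ Om, |w t x y| ≤ wbd) →
      wbd * L < 1 →
      ∃ Sb : ℝ → (Fin d → ℝ) → ℝ, CbTimeOn Om Sb ∧
        (∀ t ≥ (0:ℝ), ∀ x ∈ Om,
          Sb t x = (∫ y in Om, w t x y * (g y * F (Sb t y))) + I t x) ∧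
        (∀ Sb' : ℝ → (Fin d → ℝ) → ℝ, CbTimeOn Om Sb' →
          (∀ t ≥ (0:ℝ), ∀ x ∈ Om,
            Sb' t x = (∫ y in Om, w t x y * (g y * F (Sb' t y))) + I t x) →
          ∀ t ≥ (0:ℝ), ∀ x ∈ Om, Sb' t x = Sb t x)) ∧
    (∀ (w₁ w₂ : ℝ → (Fin d → ℝ) → (Fin d → ℝ) → ℝ) (wbd₁ wbd₂ : ℝ)
      (S₁ S₂ : ℝ → (Fin d → ℝ) → ℝ),
      CbTimeOn2 Om w₁ → CbTimeOn2 Om w₂ →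
      (∀ t ≥ (0:ℝ), ∀ x ∈ Om, ∀ y ∈ Om, |w₁ t x y| ≤ wbd₁) →
      (∀ t ≥ (0:ℝ), ∀ x ∈ Om, ∀ y ∈ Om, |w₂ t x y| ≤ wbd₂) →
      wbd₁ * L < 1 → wbd₂ * L < 1 →
      CbTimeOn Om S₁ → CbTimeOn Om S₂ →
      (∀ t ≥ (0:ℝ), ∀ x ∈ Om,
        S₁ t x = (∫ y in Om, w₁ t x y * (g y * F (S₁ t y))) + I t x) →
      (∀ t ≥ (0:ℝ), ∀ x ∈ Om,
        S₂ t x = (∫ y in Om, w₂ t x y * (g y * F (S₂ t y))) + I t x) →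
      ∀ Dw : ℝ, (∀ t ≥ (0:ℝ), ∀ x ∈ Om, ∀ y ∈ Om, |w₁ t x y - w₂ t x y| ≤ Dw) →
      ∀ t ≥ (0:ℝ), ∀ x ∈ Om,
        |S₁ t x - S₂ t x| ≤ (M / (1 - wbd₂ * L)) * Dw) := by
  have hs := hOm_open.measurableSet
  obtain ⟨Cg, hCg⟩ := hg_bdd
  have hg : IntegrableOn g Om := integrableOn_of_continuousOn_of_abs_le hs
    hOm_bdd.measure_lt_top hg_cont fun y hy => (abs_of_nonneg (hg_nonneg y hy)).trans_le (hCg y hy)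
  obtain ⟨x₀, hx₀⟩ := nonempty_of_setIntegral_eq_one hg_mass
  have hL' : (L.toNNReal : ℝ) = L := Real.coe_toNNReal _ hL.le
  have hK {w : ℝ → (Fin d → ℝ) → (Fin d → ℝ) → ℝ} {wbd : ℝ}
      (hwbd : ∀ t ≥ (0:ℝ), ∀ x ∈ Om, ∀ y ∈ Om, |w t x y| ≤ wbd) : (wbd.toNNReal : ℝ) = wbd :=
    Real.coe_toNNReal _ ((abs_nonneg _).trans (hwbd 0 le_rfl x₀ hx₀ x₀ hx₀))
  have hKL {wbd : ℝ} (h : (wbd.toNNReal : ℝ) = wbd) (hwL : wbd * L < 1) :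
      wbd.toNNReal * L.toNNReal < 1 := by
    rwa [← NNReal.coe_lt_coe, NNReal.coe_mul, h, hL', NNReal.coe_one]
  refine ⟨fun w wbd hw hwbd hwL => ?_, fun w₁ w₂ wbd₁ wbd₂ S₁ S₂ hw₁ hw₂ _ hwbd₂ _ hwL₂ hS₁ hS₂
    heq₁ heq₂ Dw hDw t ht x hx => ?_⟩
  · exact exists_unique_equilibrium hs hg hg_nonneg hg_mass hF_lip hF_bdd hI hw
      (by rwa [hK hwbd]) (hKL (hK hwbd) hwL)
  · have := abs_sub_le_of_equilibrium hs hg hg_nonneg hg_mass hF_lip hF_bdd hI hw₁ hw₂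
      (by rwa [hK hwbd₂]) (hKL (hK hwbd₂) hwL₂) hDw hS₁ hS₂ heq₁ heq₂ ht hx
    rwa [hK hwbd₂, hL', ← div_mul_eq_mul_div] at this

/-- In the slow-learning limit, for each connectivity kernel `w` with `‖w‖_∞ L < 1`
the instantaneous-equilibrium equation `S = T_w[S]` has a unique solution
`S̄[w] ∈ C_b([0,∞)×Ω)`, and `w ↦ S̄[w]` is locally Lipschitz. -/
theorem statement17
    (d : ℕ) (Om : Set (Fin d → ℝ)) (hOm_open : IsOpen Om) (hOm_bdd : Bornology.IsBounded Om)
    (g : (Fin d → ℝ) → ℝ)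
    (hg_cont : ContinuousOn g Om) (hg_nonneg : ∀ x ∈ Om, 0 ≤ g x)
    (hg_bdd : ∃ C : ℝ, ∀ x ∈ Om, g x ≤ C) (hg_mass : (∫ x in Om, g x) = 1)
    (I : ℝ → (Fin d → ℝ) → ℝ) (hI : CbTimeOn Om I)
    (F : ℝ → ℝ) (M L : ℝ) (hM : 0 < M) (hL : 0 < L)
    (hF_bdd : ∀ u : ℝ, |F u| ≤ M) (hF_lip : LipschitzWith L.toNNReal F) :
    (∀ (w : ℝ → (Fin d → ℝ) → (Fin d → ℝ) → ℝ) (wbd : ℝ),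
      CbTimeOn2 Om w → (∀ t ≥ (0:ℝ), ∀ x ∈ Om, ∀ y ∈ Om, |w t x y| ≤ wbd) →
      wbd * L < 1 →
      ∃ Sb : ℝ → (Fin d → ℝ) → ℝ, CbTimeOn Om Sb ∧
        (∀ t ≥ (0:ℝ), ∀ x ∈ Om,
          Sb t x = (∫ y in Om, w t x y * (g y * F (Sb t y))) + I t x) ∧
        (∀ Sb' : ℝ → (Fin d → ℝ) → ℝ, CbTimeOn Om Sb' →
          (∀ t ≥ (0:ℝ), ∀ x ∈ Om,
            Sb' t x = (∫ y in Om, w t x y * (g y * F (Sb' t y))) + I t x) →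
          ∀ t ≥ (0:ℝ), ∀ x ∈ Om, Sb' t x = Sb t x)) ∧
    (∀ (w₁ w₂ : ℝ → (Fin d → ℝ) → (Fin d → ℝ) → ℝ) (wbd₁ wbd₂ : ℝ)
      (S₁ S₂ : ℝ → (Fin d → ℝ) → ℝ),
      CbTimeOn2 Om w₁ → CbTimeOn2 Om w₂ →
      (∀ t ≥ (0:ℝ), ∀ x ∈ Om, ∀ y ∈ Om, |w₁ t x y| ≤ wbd₁) →
      (∀ t ≥ (0:ℝ), ∀ x ∈ Om, ∀ y ∈ Om, |w₂ t x y| ≤ wbd₂) →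
      wbd₁ * L < 1 → wbd₂ * L < 1 →
      CbTimeOn Om S₁ → CbTimeOn Om S₂ →
      (∀ t ≥ (0:ℝ), ∀ x ∈ Om,
        S₁ t x = (∫ y in Om, w₁ t x y * (g y * F (S₁ t y))) + I t x) →
      (∀ t ≥ (0:ℝ), ∀ x ∈ Om,
        S₂ t x = (∫ y in Om, w₂ t x y * (g y * F (S₂ t y))) + I t x) →
      ∀ Dw : ℝ, (∀ t ≥ (0:ℝ), ∀ x ∈ Om, ∀ y ∈ Om, |w₁ t x y - w₂ t x y| ≤ Dw) →
      ∀ t ≥ (0:ℝ), ∀ x ∈ Om,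
        |S₁ t x - S₂ t x| ≤ (M / (1 - wbd₂ * L)) * Dw) :=
  statement17_general d Om hOm_open hOm_bdd g hg_cont hg_nonneg hg_bdd hg_mass I hI F M L hL hF_bdd
    hF_lip
end

section
/- Let Ω be a bounded open subset of ℝ^d, let p ∈ W^{1,∞}((0,∞)×ℝ) satisfy p_*·1_{{s>s_*}} ≤ p ≤ p_∞ for constants p_*, p_∞, s_* > 0, and let F(u) := (∫₀^∞ exp(−∫₀^s p(τ,u) dτ) ds)^{-1}, which is bounded and Lipschitz; denote by L a Lipschitz constant of F. Let G : ℝ² → ℝ be smooth with ‖G‖_∞ + ‖∇G‖_∞ ≤ 1, γ > 0, I ∈ C_b([0,∞)×Ω), g ∈ C_b(Ω) nonnegative with ∫_Ω g = 1, and w₀ ∈ C_b(Ω×Ω) nonnegative. If max{‖w₀‖_∞, γ}·L < 1, then there exists a unique pair (S, w) with S ∈ C_b([0,∞)×Ω) and w ∈ C_b([0,∞)×Ω×Ω) such that for all t ≥ 0, x, y ∈ Ω: S(t,x) = ∫_Ω w(t,x,y)·g(y)·F(S(t,y)) dy + I(t,x) and w(t,x,y) = e^{−t}·w₀(x,y)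 + γ·∫₀^t e^{−(t−τ)}·G(g(x)F(S(τ,x)), g(y)F(S(τ,y))) dτ. Consequently, setting N(t,x) := g(x)F(S(t,x)) and n(t,s,x) := N(t,x)·exp(−∫₀^s p(τ,S(t,x)) dτ), one obtains the unique solution of the quasi-static limit system with ∫₀^∞ n(t,s,x) ds = g(x) for all t ≥ 0, x ∈ Ω. -/
open MeasureTheory Set Real Filter

section Aux18

lemma aux_exp_int (c : ℝ) (hc : c ≠ 0) (t : ℝ) :
    ∫ τ in (0:ℝ)..t, Real.exp (c*τ) = (Real.exp (c*t) - 1)/c := by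
  have h : ∀ τ : ℝ, HasDerivAt (fun τ => Real.exp (c*τ)/c) (Real.exp (c*τ)) τ := by
    intro τ
    have h1 : HasDerivAt (fun τ : ℝ => c*τ) c τ := by
      simpa using (hasDerivAt_id τ).const_mul c
    have := (Real.hasDerivAt_exp (c*τ)).comp τ h1
    have h2 := this.div_const c
    have he : c * Real.exp (c*τ) / c = Real.exp (c*τ) := by field_simp
    rw [← he]
    simpa [mul_comm] using h2
  have := intervalIntegral.integral_eq_sub_of_hasDerivAt (f := fun τ => Real.exp (c*τ)/c)
    (fun τ _ => h τ) ((Real.continuous_exp.comp (continuous_const.mul continuous_id)).intervalIntegrable 0 t)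
  rw [this]
  simp [sub_div]

lemma aux_duhamel_one (t : ℝ) : ∫ τ in (0:ℝ)..t, Real.exp (-(t-τ)) = 1 - Real.exp (-t) := by
  have h : (fun τ : ℝ => Real.exp (-(t-τ))) = fun τ => Real.exp (-t) * Real.exp ((1:ℝ)*τ) := by
    funext τ; rw [← Real.exp_add]; ring_nf
  rw [h, intervalIntegral.integral_const_mul, aux_exp_int 1 one_ne_zero]
  have : Real.exp (-t) * ((Real.exp (1*t) - 1)/1) = 1 - Real.exp (-t) := by
    rw [one_mul, div_one, mul_sub, ← Real.exp_add]
    simp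
  linarith [this]

lemma aux_duhamel_weight (lam t : ℝ) (hl : 0 ≤ lam) (_ht : 0 ≤ t) :
    ∫ τ in (0:ℝ)..t, Real.exp (-(t-τ)) * Real.exp (lam*τ) ≤ Real.exp (lam*t)/(lam+1) := by
  have hc : (lam+1) ≠ 0 := by positivity
  have h1 : (fun τ : ℝ => Real.exp (-(t-τ)) * Real.exp (lam*τ))
      = fun τ => Real.exp (-t) * Real.exp ((lam+1)*τ) := by
    funext τ; rw [← Real.exp_add, ← Real.exp_add]; ring_nf
  rw [h1, intervalIntegral.integral_const_mul, aux_exp_int _ hc]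
  have h2 : Real.exp (-t) * (Real.exp ((lam+1)*t)) = Real.exp (lam*t) := by
    rw [← Real.exp_add]; ring_nf
  have h3 : Real.exp (-t) * ((Real.exp ((lam+1)*t) - 1)/(lam+1))
      ≤ Real.exp (-t) * (Real.exp ((lam+1)*t)/(lam+1)) := by
    apply mul_le_mul_of_nonneg_left _ (Real.exp_nonneg _)
    apply div_le_div_of_nonneg_right ?_ (by positivity)
    linarith [Real.exp_pos ((lam+1)*t)]
  calc _ ≤ Real.exp (-t) * (Real.exp ((lam+1)*t)/(lam+1)) := h3
    _ = Real.exp (lam*t)/(lam+1) := by rw [← h2]; ring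

lemma aux_survival (p : ℝ → ℝ → ℝ) (pstar pinf sstar : ℝ)
    (hpstar : 0 < pstar) (_hpinf : 0 < pinf) (_hsstar : 0 < sstar)
    (hp_meas : Measurable fun q : ℝ × ℝ => p q.1 q.2)
    (hp_nonneg : ∀ s u : ℝ, 0 ≤ p s u)
    (hp_lower : ∀ s u : ℝ, sstar < s → pstar ≤ p s u)
    (hp_upper : ∀ s u : ℝ, p s u ≤ pinf) (u : ℝ) :
    IntegrableOn (fun s => Real.exp (-(∫ τ in (0:ℝ)..s, p τ u))) (Ioi 0) ∧
    Real.exp (-pinf) ≤ ∫ s in Ioi (0:ℝ), Real.exp (-(∫ τ in (0:ℝ)..s, p τ u)) := by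
  have hmeas1 : Measurable fun τ => p τ u :=
    hp_meas.comp (measurable_id.prodMk measurable_const)
  have hII : ∀ a b : ℝ, IntervalIntegrable (fun τ => p τ u) volume a b := by
    intro a b
    rw [intervalIntegrable_iff]
    have : IsFiniteMeasure (volume.restrict (Set.uIoc a b)) :=
      ⟨by rw [Measure.restrict_apply_univ]; exact measure_Ioc_lt_top⟩
    refine Integrable.mono' (integrable_const pinf) hmeas1.aestronglyMeasurable.restrict ?_
    filter_upwards with τ
    rw [Real.norm_eq_abs, abs_of_nonneg (hp_nonneg _ _)]
    exact hp_upper _ _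
  set P : ℝ → ℝ := fun s => ∫ τ in (0:ℝ)..s, p τ u with hP
  have hPcont : Continuous P := intervalIntegral.continuous_primitive hII 0
  have hfcont : Continuous fun s => Real.exp (-(P s)) := Real.continuous_exp.comp hPcont.neg
  have hPnonneg : ∀ s : ℝ, 0 ≤ s → 0 ≤ P s := fun s hs =>
    intervalIntegral.integral_nonneg hs (fun τ _ => hp_nonneg _ _)
  have hPlow : ∀ s : ℝ, 2*sstar ≤ s → pstar * (s - 2*sstar) ≤ P s := by
    intro s hs
    have hsplit : P s = (∫ τ in (0:ℝ)..(2*sstar), p τ u) + ∫ τ in (2*sstar)..s, p τ u :=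
      (intervalIntegral.integral_add_adjacent_intervals (hII _ _) (hII _ _)).symm
    have h1 : 0 ≤ ∫ τ in (0:ℝ)..(2*sstar), p τ u :=
      intervalIntegral.integral_nonneg (by linarith) (fun τ _ => hp_nonneg _ _)
    have h2 : pstar * (s - 2*sstar) ≤ ∫ τ in (2*sstar)..s, p τ u := by
      have := intervalIntegral.integral_mono_on (f := fun _ => pstar)
        (g := fun τ => p τ u) (μ := volume) hs (intervalIntegrable_const) (hII _ _)
        (fun τ hτ => hp_lower _ _ (by rcases hτ with ⟨h, _⟩; linarith))
      simpa [mul_comm] using this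
    linarith
  have hPup : ∀ s : ℝ, 0 ≤ s → P s ≤ pinf * s := by
    intro s hs
    have := intervalIntegral.integral_mono_on (f := fun τ => p τ u)
      (g := fun _ => pinf) (μ := volume) hs (hII _ _) intervalIntegrable_const
      (fun τ _ => hp_upper _ _)
    simpa [mul_comm] using this
  have hInt : IntegrableOn (fun s => Real.exp (-(P s))) (Ioi 0) := by
    refine Integrable.mono'
      ((exp_neg_integrableOn_Ioi 0 hpstar).const_mul (Real.exp (pstar*(2*sstar))))
      hfcont.aestronglyMeasurable.restrict ?_
    filter_upwards [ae_restrict_mem measurableSet_Ioi] with s hs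
    rw [Real.norm_eq_abs, abs_of_nonneg (Real.exp_nonneg _)]
    rw [← Real.exp_add]
    rcases le_total s (2*sstar) with h | h
    · calc Real.exp (-(P s)) ≤ Real.exp 0 :=
        Real.exp_le_exp.2 (by simpa using hPnonneg s (le_of_lt hs))
      _ ≤ Real.exp (pstar*(2*sstar) + -pstar*s) := Real.exp_le_exp.2 (by nlinarith)
    · exact Real.exp_le_exp.2 (by nlinarith [hPlow s h])
  refine ⟨hInt, ?_⟩
  have hsub : Ioc (0:ℝ) 1 ⊆ Ioi 0 := Ioc_subset_Ioi_self
  have step1 : ∫ s in Ioc (0:ℝ) 1, Real.exp (-(P s)) ≤ ∫ s in Ioi (0:ℝ), Real.exp (-(P s)) := by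
    apply setIntegral_mono_set hInt
    · filter_upwards with s using Real.exp_nonneg _
    · exact HasSubset.Subset.eventuallyLE hsub
  have step2 : Real.exp (-pinf) ≤ ∫ s in Ioc (0:ℝ) 1, Real.exp (-(P s)) := by
    have hc : ∫ _ in Ioc (0:ℝ) 1, Real.exp (-pinf) = Real.exp (-pinf) := by
      rw [setIntegral_const]; simp
    rw [← hc]
    apply setIntegral_mono_on (integrableOn_const measure_Ioc_lt_top.ne)
      (hInt.mono_set hsub) measurableSet_Ioc
    intro s hs
    apply Real.exp_le_exp.2
    have h1 := hPup s (le_of_lt hs.1)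
    have h2 : P s ≤ pinf := by nlinarith [hs.2]
    linarith
  linarith

lemma aux_cont_param {X : Type*} [TopologicalSpace X] (f : ℝ → X → ℝ)
    (hf : Continuous fun q : ℝ × X => f q.1 q.2) :
    Continuous fun q : ℝ × X => ∫ τ in (0:ℝ)..q.1, f τ q.2 := by
  have hsw : Continuous (fun r : (ℝ × X) × ℝ => (r.2, r.1.2)) := by fun_prop
  have h1 : Continuous (Function.uncurry fun (q : ℝ × X) (t : ℝ) => f t q.2) := hf.comp hsw
  exact intervalIntegral.continuous_parametric_intervalIntegral_of_continuous
    (μ := volume) (a₀ := (0:ℝ)) h1 continuous_fst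

open Classical in
/-- the (clamped, weighted) `S` associated to an abstract fixed point variable `u`. -/
noncomputable def Sv18 {d : ℕ} (Om : Set (Fin d → ℝ)) (lam : ℝ)
    (u : BoundedContinuousFunction (ℝ × ↥Om) ℝ) (t : ℝ) (x : Fin d → ℝ) : ℝ :=
  if h : x ∈ Om then Real.exp (lam * max t 0) * u (max t 0, ⟨x, h⟩) else 0

/-- the firing output `N = g·F(S)`. -/
noncomputable def Nv18 {d : ℕ} (Om : Set (Fin d → ℝ)) (p : ℝ → ℝ → ℝ)
    (g : (Fin d → ℝ) → ℝ) (lam : ℝ) (u : BoundedContinuousFunction (ℝ × ↥Om) ℝ)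
    (t : ℝ) (y : Fin d → ℝ) : ℝ :=
  g y * Ffun p (Sv18 Om lam u t y)

/-- the Duhamel weight. -/
noncomputable def Wv18 {d : ℕ} (Om : Set (Fin d → ℝ)) (p : ℝ → ℝ → ℝ)
    (g : (Fin d → ℝ) → ℝ) (G : ℝ → ℝ → ℝ) (γ : ℝ)
    (w₀ : (Fin d → ℝ) → (Fin d → ℝ) → ℝ) (lam : ℝ)
    (u : BoundedContinuousFunction (ℝ × ↥Om) ℝ) (t : ℝ) (x y : Fin d → ℝ) : ℝ :=
  Real.exp (-t) * w₀ x y +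
    γ * ∫ τ in (0:ℝ)..t, Real.exp (-(t - τ)) *
      G (Nv18 Om p g lam u τ x) (Nv18 Om p g lam u τ y)

/-- the fixed point map (pointwise formula). -/
noncomputable def Tf18 {d : ℕ} (Om : Set (Fin d → ℝ)) (p : ℝ → ℝ → ℝ)
    (g : (Fin d → ℝ) → ℝ) (G : ℝ → ℝ → ℝ) (γ : ℝ)
    (w₀ : (Fin d → ℝ) → (Fin d → ℝ) → ℝ) (I : ℝ → (Fin d → ℝ) → ℝ) (lam : ℝ)
    (u : BoundedContinuousFunction (ℝ × ↥Om) ℝ) (q : ℝ × ↥Om) : ℝ :=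
  Real.exp (-(lam * max q.1 0)) *
    ((∫ y in Om, Wv18 Om p g G γ w₀ lam u (max q.1 0) q.2.val y *
        Nv18 Om p g lam u (max q.1 0) y) + I (max q.1 0) q.2.val)

end Aux18

set_option maxHeartbeats 2000000 in
/-- Well-posedness of the quasi-static (slow-learning) limit system: under
`max{‖w₀‖_∞, γ}·L < 1`, where `L` is a Lipschitz constant of `F`, the coupled
fixed-point/Duhamel system for `(S, w)` has a unique solution, which yields the
unique solution of the limit system with mass `∫₀^∞ n(t,s,x) ds = g(x)`. -/
theorem statement18
    (d : ℕ) (Om : Set (Fin d → ℝ)) (hOm_open : IsOpen Om) (hOm_bdd : Bornology.IsBounded Om)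
    (p : ℝ → ℝ → ℝ) (pstar pinf sstar : ℝ)
    (hpstar : 0 < pstar) (hpinf : 0 < pinf) (hsstar : 0 < sstar)
    (hp_meas : Measurable fun q : ℝ × ℝ => p q.1 q.2)
    (hp_nonneg : ∀ s u : ℝ, 0 ≤ p s u)
    (hp_lower : ∀ s u : ℝ, sstar < s → pstar ≤ p s u)
    (hp_upper : ∀ s u : ℝ, p s u ≤ pinf)
    (hp_lip : ∃ K : NNReal, ∀ s : ℝ, LipschitzWith K fun u => p s u)
    (L : ℝ) (hL : 0 ≤ L) (hF_lip : LipschitzWith L.toNNReal (Ffun p))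
    (G : ℝ → ℝ → ℝ)
    (hG_smooth : ContDiff ℝ (⊤ : ℕ∞) fun q : ℝ × ℝ => G q.1 q.2)
    (hG_norm : ∃ MG LG : ℝ, 0 ≤ MG ∧ 0 ≤ LG ∧ MG + LG ≤ 1 ∧
      (∀ a b : ℝ, |G a b| ≤ MG) ∧ LipschitzWith LG.toNNReal fun q : ℝ × ℝ => G q.1 q.2)
    (γ : ℝ) (hγ : 0 < γ)
    (I : ℝ → (Fin d → ℝ) → ℝ) (hI : CbTimeOn Om I)
    (g : (Fin d → ℝ) → ℝ)
    (hg_cont : ContinuousOn g Om) (hg_nonneg : ∀ x ∈ Om, 0 ≤ g x)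
    (hg_bdd : ∃ C : ℝ, ∀ x ∈ Om, g x ≤ C) (hg_mass : (∫ x in Om, g x) = 1)
    (w₀ : (Fin d → ℝ) → (Fin d → ℝ) → ℝ) (wbd : ℝ)
    (hw₀_cont : ContinuousOn (fun q : (Fin d → ℝ) × (Fin d → ℝ) => w₀ q.1 q.2) (Om ×ˢ Om))
    (hw₀_nonneg : ∀ x ∈ Om, ∀ y ∈ Om, 0 ≤ w₀ x y)
    (hw₀_bdd : ∀ x ∈ Om, ∀ y ∈ Om, |w₀ x y| ≤ wbd)
    (hsmall : max wbd γ * L < 1) :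
    ∃ (S : ℝ → (Fin d → ℝ) → ℝ) (w : ℝ → (Fin d → ℝ) → (Fin d → ℝ) → ℝ),
      (CbTimeOn Om S ∧ CbTimeOn2 Om w ∧
        (∀ t ≥ (0:ℝ), ∀ x ∈ Om,
          S t x = (∫ y in Om, w t x y * (g y * Ffun p (S t y))) + I t x) ∧
        (∀ t ≥ (0:ℝ), ∀ x ∈ Om, ∀ y ∈ Om,
          w t x y = Real.exp (-t) * w₀ x y +
            γ * ∫ τ in (0:ℝ)..t, Real.exp (-(t - τ)) *
              G (g x * Ffun p (S τ x)) (g y * Ffun p (S τ y)))) ∧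
      (∀ (S' : ℝ → (Fin d → ℝ) → ℝ) (w' : ℝ → (Fin d → ℝ) → (Fin d → ℝ) → ℝ),
        CbTimeOn Om S' → CbTimeOn2 Om w' →
        (∀ t ≥ (0:ℝ), ∀ x ∈ Om,
          S' t x = (∫ y in Om, w' t x y * (g y * Ffun p (S' t y))) + I t x) →
        (∀ t ≥ (0:ℝ), ∀ x ∈ Om, ∀ y ∈ Om,
          w' t x y = Real.exp (-t) * w₀ x y +
            γ * ∫ τ in (0:ℝ)..t, Real.exp (-(t - τ)) *
              G (g x * Ffun p (S' τ x)) (g y * Ffun p (S' τ y))) →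
        ∀ t ≥ (0:ℝ), ∀ x ∈ Om, S' t x = S t x ∧ ∀ y ∈ Om, w' t x y = w t x y) ∧
      (∀ t ≥ (0:ℝ), ∀ x ∈ Om,
        (∫ s in Ioi (0:ℝ), (g x * Ffun p (S t x)) *
          Real.exp (-(∫ τ in (0:ℝ)..s, p τ (S t x)))) = g x) := by
  classical
  obtain ⟨MG, LG, hMG0, hLG0, hMGLG, hGbd, hGlip⟩ := hG_norm
  obtain ⟨hIc, CI, hCI⟩ := hI
  obtain ⟨Cg0, hCg0⟩ := hg_bdd
  have hOmM : MeasurableSet Om := hOm_open.measurableSet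
  haveI hfinM : IsFiniteMeasure (volume.restrict Om) :=
    ⟨by rw [Measure.restrict_apply_univ]; exact hOm_bdd.measure_lt_top⟩
  have hOmne : Om.Nonempty := by
    by_contra h
    rw [Set.not_nonempty_iff_eq_empty] at h
    rw [h] at hg_mass
    simp at hg_mass
  have hwbd0 : 0 ≤ wbd := by
    obtain ⟨x₀, hx₀⟩ := hOmne
    exact le_trans (abs_nonneg _) (hw₀_bdd x₀ hx₀ x₀ hx₀)
  have hgInt : IntegrableOn g Om := by
    by_contra h
    rw [MeasureTheory.integral_undef h] at hg_mass
    norm_num at hg_mass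
  set Cg : ℝ := max Cg0 0 with hCgdef
  have hCgnn : 0 ≤ Cg := le_max_right _ _
  have hCg : ∀ x ∈ Om, g x ≤ Cg := fun x hx => le_trans (hCg0 x hx) (le_max_left _ _)
  have hGc : Continuous fun q : ℝ × ℝ => G q.1 q.2 := hGlip.continuous
  have hMG1 : MG ≤ 1 := by linarith
  -- survival bounds
  have hsurv := fun u : ℝ => aux_survival p pstar pinf sstar hpstar hpinf hsstar hp_meas
    hp_nonneg hp_lower hp_upper u
  have hApos : ∀ u : ℝ, 0 < ∫ s in Ioi (0:ℝ), Real.exp (-(∫ τ in (0:ℝ)..s, p τ u)) :=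
    fun u => lt_of_lt_of_le (Real.exp_pos _) (hsurv u).2
  have hFpos : ∀ u : ℝ, 0 < Ffun p u := fun u => by
    unfold Ffun; exact inv_pos.2 (hApos u)
  have hFle : ∀ u : ℝ, Ffun p u ≤ Real.exp pinf := by
    intro u
    unfold Ffun
    have h1 := (hsurv u).2
    calc (∫ s in Ioi (0:ℝ), Real.exp (-(∫ τ in (0:ℝ)..s, p τ u)))⁻¹
        ≤ (Real.exp (-pinf))⁻¹ := by
          apply inv_anti₀ (Real.exp_pos _) h1
      _ = Real.exp pinf := by rw [← Real.exp_neg, neg_neg]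
  have hFlip : ∀ a b : ℝ, |Ffun p a - Ffun p b| ≤ L * |a - b| := by
    intro a b
    have := hF_lip.dist_le_mul a b
    rwa [Real.dist_eq, Real.dist_eq, Real.coe_toNNReal L hL] at this
  have hGlip2 : ∀ a b a' b' : ℝ, |G a b - G a' b'| ≤ LG * (|a - a'| + |b - b'|) := by
    intro a b a' b'
    have h := hGlip.dist_le_mul (a, b) (a', b')
    rw [Real.coe_toNNReal LG hLG0] at h
    rw [Real.dist_eq] at h
    refine h.trans (mul_le_mul_of_nonneg_left ?_ hLG0)
    rw [Prod.dist_eq]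
    simp only [Real.dist_eq]
    apply max_le
    · exact le_add_of_nonneg_right (abs_nonneg _)
    · exact le_add_of_nonneg_left (abs_nonneg _)
  -- constants
  set K : ℝ := max wbd γ with hKdef
  have hK0 : 0 < K := lt_of_lt_of_le hγ (le_max_right _ _)
  have hwK : wbd ≤ K := le_max_left _ _
  have hγK : γ ≤ K := le_max_right _ _
  have hKL : K * L < 1 := hsmall
  have hKLnn : 0 ≤ K * L := mul_nonneg (le_of_lt hK0) hL
  set CC : ℝ := γ * LG * (2 * Cg * L) * Real.exp pinf with hCCdef
  have hCC0 : 0 ≤ CC := by positivity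
  set lam : ℝ := CC / (1 - K * L) with hlamdef
  have hlam0 : 0 ≤ lam := by
    apply div_nonneg hCC0; linarith
  set k : ℝ := K * L + CC / (lam + 1) with hkdef
  have hk0 : 0 ≤ k := by
    apply add_nonneg hKLnn
    apply div_nonneg hCC0; linarith
  have hk1 : k < 1 := by
    rw [hkdef]
    have hden : (0:ℝ) < lam + 1 := by linarith
    have : CC / (lam + 1) < 1 - K * L := by
      rw [div_lt_iff₀ hden]
      have h1 : (1 : ℝ) - K * L ≠ 0 := by linarith
      have : lam * (1 - K * L) = CC := by
        rw [hlamdef]; exact div_mul_cancel₀ _ h1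
      nlinarith
    linarith
  -- generic estimates for the fixed-point variable
  have hgRestr : Continuous fun y : ↥Om => g y.val :=
    continuousOn_iff_continuous_restrict.mp hg_cont
  have hSv_restr : ∀ u : BoundedContinuousFunction (ℝ × ↥Om) ℝ,
      (fun q : ℝ × ↥Om => Sv18 Om lam u q.1 q.2.val)
        = fun q : ℝ × ↥Om => Real.exp (lam * max q.1 0) * u (max q.1 0, q.2) := by
    intro u; funext q
    simp only [Sv18, dif_pos q.2.coe_prop, Subtype.coe_eta]
  have hSv_cont : ∀ u : BoundedContinuousFunction (ℝ × ↥Om) ℝ,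
      Continuous fun q : ℝ × ↥Om => Sv18 Om lam u q.1 q.2.val := by
    intro u
    rw [hSv_restr u]
    have hmax : Continuous fun q : ℝ × ↥Om => max q.1 0 :=
      continuous_fst.max continuous_const
    exact (Real.continuous_exp.comp (continuous_const.mul hmax)).mul
      (u.continuous.comp (hmax.prodMk continuous_snd))
  have hSv_dist : ∀ (u v : BoundedContinuousFunction (ℝ × ↥Om) ℝ) (t : ℝ)
      (y : Fin d → ℝ), y ∈ Om →
      |Sv18 Om lam u t y - Sv18 Om lam v t y| ≤ Real.exp (lam * max t 0) * dist u v := by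
    intro u v t y hy
    simp only [Sv18, dif_pos hy]
    rw [← mul_sub, abs_mul, abs_of_nonneg (Real.exp_nonneg _)]
    apply mul_le_mul_of_nonneg_left _ (Real.exp_nonneg _)
    rw [← Real.dist_eq]
    exact BoundedContinuousFunction.dist_coe_le_dist _
  have hNv_cont : ∀ u : BoundedContinuousFunction (ℝ × ↥Om) ℝ,
      Continuous fun q : ℝ × ↥Om => Nv18 Om p g lam u q.1 q.2.val := by
    intro u
    unfold Nv18
    exact (hgRestr.comp continuous_snd).mul (hF_lip.continuous.comp (hSv_cont u))
  have hNt_cont : ∀ (u : BoundedContinuousFunction (ℝ × ↥Om) ℝ) (x : Fin d → ℝ),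
      Continuous fun τ : ℝ => Nv18 Om p g lam u τ x := by
    intro u x
    by_cases hx : x ∈ Om
    · have := (hNv_cont u).comp
        ((continuous_id.prodMk continuous_const : Continuous fun τ : ℝ => (τ, (⟨x, hx⟩ : ↥Om)))) 
      exact this
    · simp only [Nv18, Sv18, dif_neg hx]
      exact continuous_const
  have hNy_contOn : ∀ (u : BoundedContinuousFunction (ℝ × ↥Om) ℝ) (t : ℝ),
      ContinuousOn (fun y => Nv18 Om p g lam u t y) Om := by
    intro u t
    rw [continuousOn_iff_continuous_restrict]
    exact ((hNv_cont u).comp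
      (continuous_const.prodMk continuous_id : Continuous fun y : ↥Om => ((t : ℝ), y))).congr
      (fun y => rfl)
  have hNv_nonneg : ∀ (u : BoundedContinuousFunction (ℝ × ↥Om) ℝ) (t : ℝ)
      (y : Fin d → ℝ), y ∈ Om → 0 ≤ Nv18 Om p g lam u t y := by
    intro u t y hy
    exact mul_nonneg (hg_nonneg y hy) (le_of_lt (hFpos _))
  have hNv_bd : ∀ (u : BoundedContinuousFunction (ℝ × ↥Om) ℝ) (t : ℝ)
      (y : Fin d → ℝ), y ∈ Om → |Nv18 Om p g lam u t y| ≤ g y * Real.exp pinf := by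
    intro u t y hy
    rw [abs_of_nonneg (hNv_nonneg u t y hy)]
    unfold Nv18
    exact mul_le_mul_of_nonneg_left (hFle _) (hg_nonneg y hy)
  have hNv_dist : ∀ (u v : BoundedContinuousFunction (ℝ × ↥Om) ℝ) (t : ℝ)
      (y : Fin d → ℝ), y ∈ Om →
      |Nv18 Om p g lam u t y - Nv18 Om p g lam v t y|
        ≤ g y * (L * (Real.exp (lam * max t 0) * dist u v)) := by
    intro u v t y hy
    unfold Nv18
    rw [← mul_sub, abs_mul, abs_of_nonneg (hg_nonneg y hy)]
    apply mul_le_mul_of_nonneg_left _ (hg_nonneg y hy)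
    calc |Ffun p (Sv18 Om lam u t y) - Ffun p (Sv18 Om lam v t y)|
        ≤ L * |Sv18 Om lam u t y - Sv18 Om lam v t y| := hFlip _ _
      _ ≤ L * (Real.exp (lam * max t 0) * dist u v) :=
          mul_le_mul_of_nonneg_left (hSv_dist u v t y hy) hL
  have hGNcont : ∀ (u : BoundedContinuousFunction (ℝ × ↥Om) ℝ) (x y : Fin d → ℝ),
      Continuous fun τ : ℝ => G (Nv18 Om p g lam u τ x) (Nv18 Om p g lam u τ y) := by
    intro u x y
    exact hGc.comp ((hNt_cont u x).prodMk (hNt_cont u y))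
  have hWint : ∀ (u : BoundedContinuousFunction (ℝ × ↥Om) ℝ) (t : ℝ) (x y : Fin d → ℝ),
      IntervalIntegrable (fun τ => Real.exp (-(t - τ)) *
        G (Nv18 Om p g lam u τ x) (Nv18 Om p g lam u τ y)) volume 0 t := by
    intro u t x y
    exact ((Real.continuous_exp.comp ((continuous_const.sub continuous_id).neg)).mul
      (hGNcont u x y)).intervalIntegrable 0 t
  have hWv_eq : ∀ (u : BoundedContinuousFunction (ℝ × ↥Om) ℝ) (t : ℝ) (x y : Fin d → ℝ),
      Wv18 Om p g G γ w₀ lam u t x y = Real.exp (-t) * w₀ x y +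
        γ * (Real.exp (-t) * ∫ τ in (0:ℝ)..t,
          Real.exp τ * G (Nv18 Om p g lam u τ x) (Nv18 Om p g lam u τ y)) := by
    intro u t x y
    have h2 : (∫ τ in (0:ℝ)..t, Real.exp (-(t-τ)) *
          G (Nv18 Om p g lam u τ x) (Nv18 Om p g lam u τ y))
        = ∫ τ in (0:ℝ)..t, Real.exp (-t) * (Real.exp τ *
          G (Nv18 Om p g lam u τ x) (Nv18 Om p g lam u τ y)) := by
      apply intervalIntegral.integral_congr
      intro τ _
      simp only [show -(t-τ) = -t + τ from by ring, Real.exp_add, mul_assoc]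
    unfold Wv18
    rw [h2, intervalIntegral.integral_const_mul]
  have hWv_cont : ∀ u : BoundedContinuousFunction (ℝ × ↥Om) ℝ,
      Continuous fun q : ℝ × ↥Om × ↥Om =>
        Wv18 Om p g G γ w₀ lam u q.1 q.2.1.val q.2.2.val := by
    intro u
    have hNj1 : Continuous fun r : ℝ × ↥Om × ↥Om => Nv18 Om p g lam u r.1 r.2.1.val :=
      (hNv_cont u).comp (continuous_fst.prodMk (continuous_fst.comp continuous_snd))
    have hNj2 : Continuous fun r : ℝ × ↥Om × ↥Om => Nv18 Om p g lam u r.1 r.2.2.val :=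
      (hNv_cont u).comp (continuous_fst.prodMk (continuous_snd.comp continuous_snd))
    have hGj : Continuous fun r : ℝ × ↥Om × ↥Om =>
        G (Nv18 Om p g lam u r.1 r.2.1.val) (Nv18 Om p g lam u r.1 r.2.2.val) :=
      hGc.comp (hNj1.prodMk hNj2)
    have hH : Continuous fun q : ℝ × ↥Om × ↥Om => ∫ τ in (0:ℝ)..q.1,
        Real.exp τ * G (Nv18 Om p g lam u τ q.2.1.val) (Nv18 Om p g lam u τ q.2.2.val) := by
      apply aux_cont_param (X := ↥Om × ↥Om)
        (f := fun τ z => Real.exp τ * G (Nv18 Om p g lam u τ z.1.val) (Nv18 Om p g lam u τ z.2.val))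
      exact (Real.continuous_exp.comp continuous_fst).mul hGj
    have hw0j : Continuous fun q : ℝ × ↥Om × ↥Om => w₀ q.2.1.val q.2.2.val := by
      have := hw₀_cont.comp_continuous
        (f := fun q : ℝ × ↥Om × ↥Om => ((q.2.1.val, q.2.2.val) : (Fin d → ℝ) × (Fin d → ℝ)))
        (((continuous_subtype_val.comp (continuous_fst.comp continuous_snd))).prodMk
          ((continuous_subtype_val.comp (continuous_snd.comp continuous_snd))))
        (fun q => Set.mem_prod.2 ⟨q.2.1.coe_prop, q.2.2.coe_prop⟩)
      exact this
    have hexpt : Continuous fun q : ℝ × ↥Om × ↥Om => Real.exp (-q.1) :=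
      Real.continuous_exp.comp continuous_fst.neg
    have heq : (fun q : ℝ × ↥Om × ↥Om => Wv18 Om p g G γ w₀ lam u q.1 q.2.1.val q.2.2.val)
        = fun q => Real.exp (-q.1) * w₀ q.2.1.val q.2.2.val +
          γ * (Real.exp (-q.1) * ∫ τ in (0:ℝ)..q.1,
            Real.exp τ * G (Nv18 Om p g lam u τ q.2.1.val) (Nv18 Om p g lam u τ q.2.2.val)) :=
      funext fun q => hWv_eq u q.1 q.2.1.val q.2.2.val
    rw [heq]
    exact (hexpt.mul hw0j).add (continuous_const.mul (hexpt.mul hH))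
  have hWy_contOn : ∀ (u : BoundedContinuousFunction (ℝ × ↥Om) ℝ) (t : ℝ)
      (x : Fin d → ℝ), x ∈ Om →
      ContinuousOn (fun y => Wv18 Om p g G γ w₀ lam u t x y) Om := by
    intro u t x hx
    rw [continuousOn_iff_continuous_restrict]
    exact ((hWv_cont u).comp
      (continuous_const.prodMk (continuous_const.prodMk continuous_id) :
        Continuous fun y : ↥Om => ((t : ℝ), ((⟨x, hx⟩ : ↥Om), y)))).congr (fun y => rfl)
  have hWv_bd : ∀ (u : BoundedContinuousFunction (ℝ × ↥Om) ℝ) (t : ℝ), 0 ≤ t →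
      ∀ (x y : Fin d → ℝ), x ∈ Om → y ∈ Om → |Wv18 Om p g G γ w₀ lam u t x y| ≤ K := by
    intro u t ht x y hx hy
    have e0 : (0:ℝ) ≤ Real.exp (-t) := Real.exp_nonneg _
    have e1 : Real.exp (-t) ≤ 1 := by
      have := Real.exp_le_exp.2 (neg_nonpos.2 ht)
      rwa [Real.exp_zero] at this
    have hbint : |∫ τ in (0:ℝ)..t, Real.exp (-(t-τ)) *
        G (Nv18 Om p g lam u τ x) (Nv18 Om p g lam u τ y)|
        ≤ |∫ τ in (0:ℝ)..t, MG * Real.exp (-(t-τ))| := by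
      rw [← Real.norm_eq_abs]
      apply intervalIntegral.norm_integral_le_abs_of_norm_le
      · filter_upwards with τ
        rw [Real.norm_eq_abs, abs_mul, abs_of_nonneg (Real.exp_nonneg _)]
        exact (mul_le_mul_of_nonneg_left (hGbd _ _) (Real.exp_nonneg _)).trans_eq
          (mul_comm _ _)
      · exact (continuous_const.mul (Real.continuous_exp.comp
          ((continuous_const.sub continuous_id).neg))).intervalIntegrable 0 t
    have hval : (∫ τ in (0:ℝ)..t, MG * Real.exp (-(t-τ))) = MG * (1 - Real.exp (-t)) := by
      rw [intervalIntegral.integral_const_mul, aux_duhamel_one]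
    rw [hval, abs_of_nonneg (by nlinarith : (0:ℝ) ≤ MG * (1 - Real.exp (-t)))] at hbint
    unfold Wv18
    have h1 : |Real.exp (-t) * w₀ x y| ≤ Real.exp (-t) * wbd := by
      rw [abs_mul, abs_of_nonneg e0]
      exact mul_le_mul_of_nonneg_left (hw₀_bdd x hx y hy) e0
    have h2 := abs_add_le (Real.exp (-t) * w₀ x y)
      (γ * ∫ τ in (0:ℝ)..t, Real.exp (-(t-τ)) *
        G (Nv18 Om p g lam u τ x) (Nv18 Om p g lam u τ y))
    rw [abs_mul γ, abs_of_pos hγ] at h2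
    have hγMG : γ * MG ≤ K := le_trans (by nlinarith) hγK
    have hp1 : Real.exp (-t) * wbd ≤ Real.exp (-t) * K := mul_le_mul_of_nonneg_left hwK e0
    have hp2 : (1 - Real.exp (-t)) * (γ * MG) ≤ (1 - Real.exp (-t)) * K :=
      mul_le_mul_of_nonneg_left hγMG (by linarith)
    have h3 := mul_le_mul_of_nonneg_left hbint (le_of_lt hγ)
    linarith [h1, h2, h3, hp1, hp2]
  have hWv_dist : ∀ (u v : BoundedContinuousFunction (ℝ × ↥Om) ℝ) (t : ℝ), 0 ≤ t →
      ∀ (x y : Fin d → ℝ), x ∈ Om → y ∈ Om →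
      |Wv18 Om p g G γ w₀ lam u t x y - Wv18 Om p g G γ w₀ lam v t x y|
        ≤ γ * LG * (2 * Cg * L) * (Real.exp (lam * t) / (lam + 1)) * dist u v := by
    intro u v t ht x y hx hy
    have hD0 : 0 ≤ dist u v := dist_nonneg
    have key : ∀ A B : ℝ, (Real.exp (-t) * w₀ x y + γ*A) - (Real.exp (-t) * w₀ x y + γ*B)
        = γ*(A - B) := fun A B => by ring
    unfold Wv18
    rw [key, abs_mul, abs_of_pos hγ,
      ← intervalIntegral.integral_sub (hWint u t x y) (hWint v t x y)]
    set cst : ℝ := LG * (2 * Cg * L * dist u v) with hcstdef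
    have hcst0 : 0 ≤ cst := by positivity
    have hb : ‖∫ τ in (0:ℝ)..t,
        ((fun τ => Real.exp (-(t-τ)) * G (Nv18 Om p g lam u τ x) (Nv18 Om p g lam u τ y)) τ -
         (fun τ => Real.exp (-(t-τ)) * G (Nv18 Om p g lam v τ x) (Nv18 Om p g lam v τ y)) τ)‖
        ≤ |∫ τ in (0:ℝ)..t, cst * (Real.exp (-(t-τ)) * Real.exp (lam*τ))| := by
      apply intervalIntegral.norm_integral_le_abs_of_norm_le
      · filter_upwards [ae_restrict_mem measurableSet_uIoc] with τ hτ
        rw [Set.uIoc_of_le ht] at hτ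
        have hτ0 : 0 ≤ τ := le_of_lt hτ.1
        have hmax : max τ 0 = τ := max_eq_left hτ0
        show ‖Real.exp (-(t-τ)) * G (Nv18 Om p g lam u τ x) (Nv18 Om p g lam u τ y) -
          Real.exp (-(t-τ)) * G (Nv18 Om p g lam v τ x) (Nv18 Om p g lam v τ y)‖
          ≤ cst * (Real.exp (-(t-τ)) * Real.exp (lam*τ))
        rw [← mul_sub, Real.norm_eq_abs, abs_mul, abs_of_nonneg (Real.exp_nonneg _)]
        have hG2 := hGlip2 (Nv18 Om p g lam u τ x) (Nv18 Om p g lam u τ y)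
          (Nv18 Om p g lam v τ x) (Nv18 Om p g lam v τ y)
        have hNx := hNv_dist u v τ x hx
        have hNy := hNv_dist u v τ y hy
        rw [hmax] at hNx hNy
        have hgx : g x * (L * (Real.exp (lam * τ) * dist u v))
            ≤ Cg * (L * (Real.exp (lam * τ) * dist u v)) :=
          mul_le_mul_of_nonneg_right (hCg x hx) (by positivity)
        have hgy : g y * (L * (Real.exp (lam * τ) * dist u v))
            ≤ Cg * (L * (Real.exp (lam * τ) * dist u v)) :=
          mul_le_mul_of_nonneg_right (hCg y hy) (by positivity)
        have hGtot : |G (Nv18 Om p g lam u τ x) (Nv18 Om p g lam u τ y) -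
            G (Nv18 Om p g lam v τ x) (Nv18 Om p g lam v τ y)|
            ≤ cst * Real.exp (lam*τ) := by
          rw [hcstdef]
          calc _ ≤ LG * (|Nv18 Om p g lam u τ x - Nv18 Om p g lam v τ x| +
              |Nv18 Om p g lam u τ y - Nv18 Om p g lam v τ y|) := hG2
            _ ≤ LG * (2 * (Cg * (L * (Real.exp (lam * τ) * dist u v)))) := by
                apply mul_le_mul_of_nonneg_left _ hLG0
                nlinarith [hNx.trans hgx, hNy.trans hgy]
            _ = LG * (2 * Cg * L * dist u v) * Real.exp (lam*τ) := by ring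
        calc Real.exp (-(t-τ)) * |G (Nv18 Om p g lam u τ x) (Nv18 Om p g lam u τ y) -
            G (Nv18 Om p g lam v τ x) (Nv18 Om p g lam v τ y)|
            ≤ Real.exp (-(t-τ)) * (cst * Real.exp (lam*τ)) :=
              mul_le_mul_of_nonneg_left hGtot (Real.exp_nonneg _)
          _ = cst * (Real.exp (-(t-τ)) * Real.exp (lam*τ)) := by ring
      · exact (continuous_const.mul ((Real.continuous_exp.comp
          ((continuous_const.sub continuous_id).neg)).mul
          (Real.continuous_exp.comp (continuous_const.mul continuous_id)))).intervalIntegrable 0 t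
    have hJ0 : 0 ≤ ∫ τ in (0:ℝ)..t, Real.exp (-(t-τ)) * Real.exp (lam*τ) :=
      intervalIntegral.integral_nonneg ht (fun τ _ => by positivity)
    have hJ := aux_duhamel_weight lam t hlam0 ht
    rw [intervalIntegral.integral_const_mul, abs_mul, abs_of_nonneg hcst0,
      abs_of_nonneg hJ0] at hb
    have hb2 : ‖∫ τ in (0:ℝ)..t,
        ((fun τ => Real.exp (-(t-τ)) * G (Nv18 Om p g lam u τ x) (Nv18 Om p g lam u τ y)) τ -
         (fun τ => Real.exp (-(t-τ)) * G (Nv18 Om p g lam v τ x) (Nv18 Om p g lam v τ y)) τ)‖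
        ≤ cst * (Real.exp (lam*t)/(lam+1)) :=
      hb.trans (mul_le_mul_of_nonneg_left hJ hcst0)
    rw [Real.norm_eq_abs] at hb2
    calc γ * |∫ τ in (0:ℝ)..t,
        ((fun τ => Real.exp (-(t-τ)) * G (Nv18 Om p g lam u τ x) (Nv18 Om p g lam u τ y)) τ -
         (fun τ => Real.exp (-(t-τ)) * G (Nv18 Om p g lam v τ x) (Nv18 Om p g lam v τ y)) τ)|
        ≤ γ * (cst * (Real.exp (lam*t)/(lam+1))) :=
          mul_le_mul_of_nonneg_left hb2 (le_of_lt hγ)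
      _ = γ * LG * (2 * Cg * L) * (Real.exp (lam * t) / (lam + 1)) * dist u v := by
          rw [hcstdef]; ring
  have hIntMeas : ∀ (u : BoundedContinuousFunction (ℝ × ↥Om) ℝ) (t : ℝ) (x : Fin d → ℝ),
      x ∈ Om → AEStronglyMeasurable
        (fun y => Wv18 Om p g G γ w₀ lam u t x y * Nv18 Om p g lam u t y)
        (volume.restrict Om) := by
    intro u t x hx
    exact ((hWy_contOn u t x hx).mul (hNy_contOn u t)).aestronglyMeasurable hOmM
  have hIntInt : ∀ (u : BoundedContinuousFunction (ℝ × ↥Om) ℝ) (t : ℝ), 0 ≤ t →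
      ∀ (x : Fin d → ℝ), x ∈ Om →
      IntegrableOn (fun y => Wv18 Om p g G γ w₀ lam u t x y * Nv18 Om p g lam u t y) Om := by
    intro u t ht x hx
    refine Integrable.mono' (integrable_const (K * (Cg * Real.exp pinf)))
      (hIntMeas u t x hx) ?_
    filter_upwards [ae_restrict_mem hOmM] with y hy
    rw [Real.norm_eq_abs, abs_mul]
    apply mul_le_mul (hWv_bd u t ht x y hx hy)
      ((hNv_bd u t y hy).trans (mul_le_mul_of_nonneg_right (hCg y hy) (Real.exp_nonneg _)))
      (abs_nonneg _) (le_of_lt hK0)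
  have hIB : ∀ (u : BoundedContinuousFunction (ℝ × ↥Om) ℝ) (t : ℝ), 0 ≤ t →
      ∀ (x : Fin d → ℝ), x ∈ Om →
      |∫ y in Om, Wv18 Om p g G γ w₀ lam u t x y * Nv18 Om p g lam u t y|
        ≤ K * (Cg * Real.exp pinf) * (volume Om).toReal := by
    intro u t ht x hx
    rw [← Real.norm_eq_abs]
    apply norm_setIntegral_le_of_norm_le_const hOm_bdd.measure_lt_top
    intro y hy
    rw [Real.norm_eq_abs, abs_mul]
    apply mul_le_mul (hWv_bd u t ht x y hx hy)
      ((hNv_bd u t y hy).trans (mul_le_mul_of_nonneg_right (hCg y hy) (Real.exp_nonneg _)))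
      (abs_nonneg _) (le_of_lt hK0)
  have hT_cont : ∀ u : BoundedContinuousFunction (ℝ × ↥Om) ℝ,
      Continuous (Tf18 Om p g G γ w₀ I lam u) := by
    intro u
    have hmax : Continuous fun q : ℝ × ↥Om => max q.1 0 := continuous_fst.max continuous_const
    have hIcomp : Continuous fun q : ℝ × ↥Om => I (max q.1 0) q.2.val := by
      have := hIc.comp_continuous
        (f := fun q : ℝ × ↥Om => ((max q.1 0, q.2.val) : ℝ × (Fin d → ℝ)))
        (hmax.prodMk (continuous_subtype_val.comp continuous_snd))
        (fun q => Set.mem_prod.2 ⟨Set.mem_Ici.2 (le_max_right _ _), q.2.coe_prop⟩)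
      exact this
    have hPhi : Continuous fun q : ℝ × ↥Om => ∫ y in Om,
        Wv18 Om p g G γ w₀ lam u (max q.1 0) q.2.val y * Nv18 Om p g lam u (max q.1 0) y := by
      apply continuous_of_dominated (bound := fun _ => K * (Cg * Real.exp pinf))
      · intro q; exact hIntMeas u (max q.1 0) q.2.val q.2.coe_prop
      · intro q
        filter_upwards [ae_restrict_mem hOmM] with y hy
        rw [Real.norm_eq_abs, abs_mul]
        exact mul_le_mul (hWv_bd u _ (le_max_right _ _) _ y q.2.coe_prop hy)
          ((hNv_bd u _ y hy).trans (mul_le_mul_of_nonneg_right (hCg y hy) (Real.exp_nonneg _)))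
          (abs_nonneg _) (le_of_lt hK0)
      · exact integrable_const _
      · filter_upwards [ae_restrict_mem hOmM] with y hy
        have hW : Continuous fun q : ℝ × ↥Om =>
            Wv18 Om p g G γ w₀ lam u (max q.1 0) q.2.val y :=
          Continuous.congr ((hWv_cont u).comp (hmax.prodMk (continuous_snd.prodMk
            (continuous_const : Continuous fun _ : ℝ × ↥Om => (⟨y, hy⟩ : ↥Om)))))
            (fun q => rfl)
        have hN : Continuous fun q : ℝ × ↥Om => Nv18 Om p g lam u (max q.1 0) y :=
          Continuous.congr ((hNv_cont u).comp (hmax.prodMk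
            (continuous_const : Continuous fun _ : ℝ × ↥Om => (⟨y, hy⟩ : ↥Om))))
            (fun q => rfl)
        exact hW.mul hN
    unfold Tf18
    exact (Real.continuous_exp.comp (continuous_const.mul hmax).neg).mul (hPhi.add hIcomp)
  set MT : ℝ := K * (Cg * Real.exp pinf) * (volume Om).toReal + CI with hMTdef
  have hT_bd : ∀ (u : BoundedContinuousFunction (ℝ × ↥Om) ℝ) (q : ℝ × ↥Om),
      ‖Tf18 Om p g G γ w₀ I lam u q‖ ≤ MT := by
    intro u q
    unfold Tf18
    rw [Real.norm_eq_abs, abs_mul, abs_of_nonneg (Real.exp_nonneg _)]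
    have hexp : Real.exp (-(lam * max q.1 0)) ≤ 1 := by
      have h0 : 0 ≤ lam * max q.1 0 := mul_nonneg hlam0 (le_max_right _ _)
      have := Real.exp_le_exp.2 (neg_nonpos.2 h0)
      rwa [Real.exp_zero] at this
    have h2 : |(∫ y in Om, Wv18 Om p g G γ w₀ lam u (max q.1 0) q.2.val y *
        Nv18 Om p g lam u (max q.1 0) y) + I (max q.1 0) q.2.val| ≤ MT := by
      calc _ ≤ |∫ y in Om, Wv18 Om p g G γ w₀ lam u (max q.1 0) q.2.val y *
            Nv18 Om p g lam u (max q.1 0) y| + |I (max q.1 0) q.2.val| := abs_add_le _ _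
        _ ≤ K * (Cg * Real.exp pinf) * (volume Om).toReal + CI :=
            add_le_add (hIB u _ (le_max_right _ _) _ q.2.coe_prop)
              (hCI _ (le_max_right _ _) _ q.2.coe_prop)
        _ = MT := hMTdef.symm
    calc _ ≤ 1 * MT := mul_le_mul hexp h2 (abs_nonneg _) zero_le_one
      _ = MT := one_mul _
  set TT : BoundedContinuousFunction (ℝ × ↥Om) ℝ → BoundedContinuousFunction (ℝ × ↥Om) ℝ :=
    fun u => BoundedContinuousFunction.ofNormedAddCommGroup
      (Tf18 Om p g G γ w₀ I lam u) (hT_cont u) MT (hT_bd u) with hTTdef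
  have hTT : ∀ (u : BoundedContinuousFunction (ℝ × ↥Om) ℝ) (q : ℝ × ↥Om),
      TT u q = Tf18 Om p g G γ w₀ I lam u q := fun u q => rfl
  have hcontr : ∀ u v : BoundedContinuousFunction (ℝ × ↥Om) ℝ,
      dist (TT u) (TT v) ≤ k * dist u v := by
    intro u v
    have hkd : 0 ≤ k * dist u v := mul_nonneg hk0 dist_nonneg
    rw [BoundedContinuousFunction.dist_le hkd]
    intro q
    rw [Real.dist_eq, hTT, hTT]
    have ht0 : (0:ℝ) ≤ max q.1 0 := le_max_right _ _
    have hx : q.2.val ∈ Om := q.2.coe_prop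
    unfold Tf18
    rw [show Real.exp (-(lam * max q.1 0)) * ((∫ y in Om,
        Wv18 Om p g G γ w₀ lam u (max q.1 0) q.2.val y * Nv18 Om p g lam u (max q.1 0) y) +
          I (max q.1 0) q.2.val) -
        Real.exp (-(lam * max q.1 0)) * ((∫ y in Om,
        Wv18 Om p g G γ w₀ lam v (max q.1 0) q.2.val y * Nv18 Om p g lam v (max q.1 0) y) +
          I (max q.1 0) q.2.val)
        = Real.exp (-(lam * max q.1 0)) * ((∫ y in Om,
        Wv18 Om p g G γ w₀ lam u (max q.1 0) q.2.val y * Nv18 Om p g lam u (max q.1 0) y) -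
        (∫ y in Om,
        Wv18 Om p g G γ w₀ lam v (max q.1 0) q.2.val y * Nv18 Om p g lam v (max q.1 0) y))
        from by ring, abs_mul, abs_of_nonneg (Real.exp_nonneg _)]
    rw [← MeasureTheory.integral_sub (hIntInt u _ ht0 _ hx) (hIntInt v _ ht0 _ hx)]
    set t0 : ℝ := max q.1 0 with ht0def
    set cO : ℝ := K * L * Real.exp (lam * t0) * dist u v +
      γ * LG * (2 * Cg * L) * (Real.exp (lam * t0) / (lam + 1)) * dist u v * Real.exp pinf
      with hcOdef
    have hptw : ∀ y ∈ Om,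
        |Wv18 Om p g G γ w₀ lam u t0 q.2.val y * Nv18 Om p g lam u t0 y -
         Wv18 Om p g G γ w₀ lam v t0 q.2.val y * Nv18 Om p g lam v t0 y| ≤ cO * g y := by
      intro y hy
      rw [show Wv18 Om p g G γ w₀ lam u t0 q.2.val y * Nv18 Om p g lam u t0 y -
          Wv18 Om p g G γ w₀ lam v t0 q.2.val y * Nv18 Om p g lam v t0 y
          = Wv18 Om p g G γ w₀ lam u t0 q.2.val y *
              (Nv18 Om p g lam u t0 y - Nv18 Om p g lam v t0 y) +
            (Wv18 Om p g G γ w₀ lam u t0 q.2.val y - Wv18 Om p g G γ w₀ lam v t0 q.2.val y) *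
              Nv18 Om p g lam v t0 y from by ring]
      have hmax0 : max t0 0 = t0 := max_eq_left ht0
      have hstep : |Wv18 Om p g G γ w₀ lam u t0 q.2.val y *
              (Nv18 Om p g lam u t0 y - Nv18 Om p g lam v t0 y) +
            (Wv18 Om p g G γ w₀ lam u t0 q.2.val y - Wv18 Om p g G γ w₀ lam v t0 q.2.val y) *
              Nv18 Om p g lam v t0 y|
          ≤ K * (g y * (L * (Real.exp (lam * max t0 0) * dist u v))) +
            (γ * LG * (2 * Cg * L) * (Real.exp (lam * t0) / (lam + 1)) * dist u v) *
              (g y * Real.exp pinf) := by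
        calc _ ≤ |Wv18 Om p g G γ w₀ lam u t0 q.2.val y *
              (Nv18 Om p g lam u t0 y - Nv18 Om p g lam v t0 y)| +
            |(Wv18 Om p g G γ w₀ lam u t0 q.2.val y - Wv18 Om p g G γ w₀ lam v t0 q.2.val y) *
              Nv18 Om p g lam v t0 y| := abs_add_le _ _
          _ = |Wv18 Om p g G γ w₀ lam u t0 q.2.val y| *
              |Nv18 Om p g lam u t0 y - Nv18 Om p g lam v t0 y| +
            |Wv18 Om p g G γ w₀ lam u t0 q.2.val y - Wv18 Om p g G γ w₀ lam v t0 q.2.val y| *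
              |Nv18 Om p g lam v t0 y| := by rw [abs_mul, abs_mul]
          _ ≤ _ := add_le_add
              (mul_le_mul (hWv_bd u t0 ht0 _ y hx hy) (hNv_dist u v t0 y hy)
                (abs_nonneg _) (le_of_lt hK0))
              (mul_le_mul (hWv_dist u v t0 ht0 _ y hx hy) (hNv_bd v t0 y hy)
                (abs_nonneg _) (by positivity))
      refine hstep.trans (le_of_eq ?_)
      rw [hmax0, hcOdef]; ring
    have hIntdiff : IntegrableOn (fun y =>
        Wv18 Om p g G γ w₀ lam u t0 q.2.val y * Nv18 Om p g lam u t0 y -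
        Wv18 Om p g G γ w₀ lam v t0 q.2.val y * Nv18 Om p g lam v t0 y) Om :=
      (hIntInt u _ ht0 _ hx).sub (hIntInt v _ ht0 _ hx)
    have h5 : |∫ y in Om,
        (Wv18 Om p g G γ w₀ lam u t0 q.2.val y * Nv18 Om p g lam u t0 y -
         Wv18 Om p g G γ w₀ lam v t0 q.2.val y * Nv18 Om p g lam v t0 y)| ≤ cO := by
      have hstep1 : |∫ y in Om,
          (Wv18 Om p g G γ w₀ lam u t0 q.2.val y * Nv18 Om p g lam u t0 y -
           Wv18 Om p g G γ w₀ lam v t0 q.2.val y * Nv18 Om p g lam v t0 y)|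
          ≤ ∫ y in Om, |Wv18 Om p g G γ w₀ lam u t0 q.2.val y * Nv18 Om p g lam u t0 y -
           Wv18 Om p g G γ w₀ lam v t0 q.2.val y * Nv18 Om p g lam v t0 y| := by
        rw [← Real.norm_eq_abs]
        refine (norm_integral_le_integral_norm _).trans (le_of_eq ?_)
        simp [Real.norm_eq_abs]
      have hstep2 : (∫ y in Om,
          |Wv18 Om p g G γ w₀ lam u t0 q.2.val y * Nv18 Om p g lam u t0 y -
           Wv18 Om p g G γ w₀ lam v t0 q.2.val y * Nv18 Om p g lam v t0 y|)
          ≤ ∫ y in Om, cO * g y := by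
        apply MeasureTheory.integral_mono_ae hIntdiff.abs (hgInt.const_mul cO)
        filter_upwards [ae_restrict_mem hOmM] with y hy using hptw y hy
      have hstep3 : (∫ y in Om, cO * g y) = cO := by
        rw [MeasureTheory.integral_const_mul, hg_mass, mul_one]
      linarith
    have hee : Real.exp (-(lam * t0)) * Real.exp (lam * t0) = 1 := by
      rw [← Real.exp_add]; simp
    have hcok : cO = Real.exp (lam * t0) * (k * dist u v) := by
      rw [hcOdef, hkdef, hCCdef]; ring
    calc Real.exp (-(lam * t0)) * |∫ y in Om,
        (Wv18 Om p g G γ w₀ lam u t0 q.2.val y * Nv18 Om p g lam u t0 y -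
         Wv18 Om p g G γ w₀ lam v t0 q.2.val y * Nv18 Om p g lam v t0 y)|
        ≤ Real.exp (-(lam * t0)) * (Real.exp (lam * t0) * (k * dist u v)) :=
          mul_le_mul_of_nonneg_left (h5.trans_eq hcok) (Real.exp_nonneg _)
      _ = k * dist u v := by rw [← mul_assoc, hee, one_mul]
  have hCW : ContractingWith (Real.toNNReal k) TT := by
    constructor
    · rw [← Real.toNNReal_one]
      exact (Real.toNNReal_lt_toNNReal_iff (by norm_num)).2 hk1
    · apply LipschitzWith.of_dist_le_mul
      intro u v
      rw [Real.coe_toNNReal k hk0]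
      exact hcontr u v
  haveI : Nonempty (BoundedContinuousFunction (ℝ × ↥Om) ℝ) := ⟨0⟩
  set fx : BoundedContinuousFunction (ℝ × ↥Om) ℝ := ContractingWith.fixedPoint TT hCW with hfxdef
  have hfx : TT fx = fx := hCW.fixedPoint_isFixedPt
  have hSeq : ∀ t : ℝ, 0 ≤ t → ∀ x : Fin d → ℝ, ∀ hx : x ∈ Om,
      Sv18 Om lam fx t x = (∫ y in Om, Wv18 Om p g G γ w₀ lam fx t x y *
        Nv18 Om p g lam fx t y) + I t x := by
    intro t ht x hx
    have h0 : max t 0 = t := max_eq_left ht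
    have h1 : fx (t, ⟨x, hx⟩) = Real.exp (-(lam * t)) *
        ((∫ y in Om, Wv18 Om p g G γ w₀ lam fx t x y * Nv18 Om p g lam fx t y) + I t x) := by
      calc fx (t, ⟨x, hx⟩) = TT fx (t, ⟨x, hx⟩) := by rw [hfx]
        _ = Tf18 Om p g G γ w₀ I lam fx (t, ⟨x, hx⟩) := hTT fx _
        _ = _ := by simp only [Tf18]; rw [h0]
    simp only [Sv18, dif_pos hx, h0, h1]
    rw [← mul_assoc, ← Real.exp_add]
    simp
  refine ⟨fun t x => Sv18 Om lam fx t x, fun t x y => Wv18 Om p g G γ w₀ lam fx t x y,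
    ⟨⟨?_, ?_⟩, ⟨?_, ?_⟩, ?_, ?_⟩, ?_, ?_⟩
  · -- continuity of S
    rw [continuousOn_iff_continuous_restrict]
    have hphi : Continuous fun r : ↥(Set.Ici (0:ℝ) ×ˢ Om) =>
        ((r.val.1, ⟨r.val.2, r.prop.2⟩) : ℝ × ↥Om) :=
      (continuous_fst.comp continuous_subtype_val).prodMk
        (Continuous.subtype_mk (continuous_snd.comp continuous_subtype_val) (fun r => r.prop.2))
    exact Continuous.congr ((hSv_cont fx).comp hphi) (fun r => rfl)
  · -- bound of S
    refine ⟨MT, fun t ht x hx => ?_⟩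
    show |Sv18 Om lam fx t x| ≤ MT
    rw [hSeq t ht x hx]
    calc |(∫ y in Om, Wv18 Om p g G γ w₀ lam fx t x y * Nv18 Om p g lam fx t y) + I t x|
        ≤ |∫ y in Om, Wv18 Om p g G γ w₀ lam fx t x y * Nv18 Om p g lam fx t y| + |I t x| :=
          abs_add_le _ _
      _ ≤ K * (Cg * Real.exp pinf) * (volume Om).toReal + CI :=
          add_le_add (hIB fx t ht x hx) (hCI t ht x hx)
  · -- continuity of w
    rw [continuousOn_iff_continuous_restrict]
    have hpsi : Continuous fun r : ↥(Set.Ici (0:ℝ) ×ˢ Om ×ˢ Om) =>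
        ((r.val.1, (⟨r.val.2.1, r.prop.2.1⟩, ⟨r.val.2.2, r.prop.2.2⟩)) : ℝ × ↥Om × ↥Om) :=
      (continuous_fst.comp continuous_subtype_val).prodMk
        ((Continuous.subtype_mk ((continuous_fst.comp continuous_snd).comp
            continuous_subtype_val) (fun r => r.prop.2.1)).prodMk
          (Continuous.subtype_mk ((continuous_snd.comp continuous_snd).comp
            continuous_subtype_val) (fun r => r.prop.2.2)))
    exact Continuous.congr ((hWv_cont fx).comp hpsi) (fun r => rfl)
  · -- bound of w
    exact ⟨K, fun t ht x hx y hy => hWv_bd fx t ht x y hx hy⟩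
  · -- equation for S
    intro t ht x hx
    exact hSeq t ht x hx
  · -- equation for w
    intro t ht x hx y hy
    rfl
  · -- uniqueness
    intro S' w' hS' hw' hS'eq hw'eq
    obtain ⟨hS'c, CS, hCS⟩ := hS'
    have hmax : Continuous fun q : ℝ × ↥Om => max q.1 0 := continuous_fst.max continuous_const
    have hucont : Continuous fun q : ℝ × ↥Om =>
        Real.exp (-(lam * max q.1 0)) * S' (max q.1 0) q.2.val := by
      have hS'comp : Continuous fun q : ℝ × ↥Om => S' (max q.1 0) q.2.val := by
        have := hS'c.comp_continuous
          (f := fun q : ℝ × ↥Om => ((max q.1 0, q.2.val) : ℝ × (Fin d → ℝ)))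
          (hmax.prodMk (continuous_subtype_val.comp continuous_snd))
          (fun q => Set.mem_prod.2 ⟨Set.mem_Ici.2 (le_max_right _ _), q.2.coe_prop⟩)
        exact this
      exact (Real.continuous_exp.comp (continuous_const.mul hmax).neg).mul hS'comp
    have hubd : ∀ q : ℝ × ↥Om,
        ‖Real.exp (-(lam * max q.1 0)) * S' (max q.1 0) q.2.val‖ ≤ |CS| := by
      intro q
      rw [Real.norm_eq_abs, abs_mul, abs_of_nonneg (Real.exp_nonneg _)]
      have hexp1 : Real.exp (-(lam * max q.1 0)) ≤ 1 := by
        have h0 : 0 ≤ lam * max q.1 0 := mul_nonneg hlam0 (le_max_right _ _)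
        have := Real.exp_le_exp.2 (neg_nonpos.2 h0)
        rwa [Real.exp_zero] at this
      have hSb : |S' (max q.1 0) q.2.val| ≤ |CS| :=
        (hCS _ (le_max_right _ _) _ q.2.coe_prop).trans (le_abs_self CS)
      calc _ ≤ 1 * |CS| := mul_le_mul hexp1 hSb (abs_nonneg _) zero_le_one
        _ = |CS| := one_mul _
    set uu : BoundedContinuousFunction (ℝ × ↥Om) ℝ :=
      BoundedContinuousFunction.ofNormedAddCommGroup _ hucont |CS| hubd with huudef
    have huu : ∀ q : ℝ × ↥Om,
        uu q = Real.exp (-(lam * max q.1 0)) * S' (max q.1 0) q.2.val := fun q => rfl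
    have key1 : ∀ (τ : ℝ) (y : Fin d → ℝ), y ∈ Om → Sv18 Om lam uu τ y = S' (max τ 0) y := by
      intro τ y hy
      simp only [Sv18, dif_pos hy, huu]
      have hmm : max (max τ 0) 0 = max τ 0 := max_eq_left (le_max_right _ _)
      rw [hmm, ← mul_assoc, ← Real.exp_add]
      simp
    have key2 : ∀ (τ : ℝ) (y : Fin d → ℝ), y ∈ Om →
        Nv18 Om p g lam uu τ y = g y * Ffun p (S' (max τ 0) y) := by
      intro τ y hy; simp only [Nv18, key1 τ y hy]
    have key3 : ∀ (t : ℝ), 0 ≤ t → ∀ (x y : Fin d → ℝ), x ∈ Om → y ∈ Om →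
        Wv18 Om p g G γ w₀ lam uu t x y = w' t x y := by
      intro t ht x y hx hy
      rw [hw'eq t ht x hx y hy]
      unfold Wv18
      congr 1
      congr 1
      apply intervalIntegral.integral_congr
      intro τ hτ
      rw [Set.uIcc_of_le ht] at hτ
      simp only
      rw [key2 τ x hx, key2 τ y hy, max_eq_left hτ.1]
    have hfixuu : TT uu = uu := by
      ext q
      rw [hTT, huu]
      have ht0 : (0:ℝ) ≤ max q.1 0 := le_max_right _ _
      have hx : q.2.val ∈ Om := q.2.coe_prop
      simp only [Tf18]
      congr 1
      rw [hS'eq (max q.1 0) ht0 q.2.val hx]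
      congr 1
      apply MeasureTheory.setIntegral_congr_fun hOmM
      intro y hy
      simp only
      rw [key3 (max q.1 0) ht0 q.2.val y hx hy, key2 (max q.1 0) y hy, max_eq_left ht0]
    have huufx : uu = fx := by
      rw [hfxdef]
      exact hCW.fixedPoint_unique hfixuu
    intro t ht x hx
    have h0 : max t 0 = t := max_eq_left ht
    constructor
    · show S' t x = Sv18 Om lam fx t x
      rw [← huufx, key1 t x hx, h0]
    · intro y hy
      show w' t x y = Wv18 Om p g G γ w₀ lam fx t x y
      rw [← huufx, key3 t ht x y hx hy]
  · -- mass
    intro t ht x hx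
    rw [MeasureTheory.integral_const_mul]
    rw [mul_assoc]
    have : Ffun p (Sv18 Om lam fx t x) *
        ∫ s in Ioi (0:ℝ), Real.exp (-(∫ τ in (0:ℝ)..s, p τ (Sv18 Om lam fx t x))) = 1 := by
      unfold Ffun
      exact inv_mul_cancel₀ (ne_of_gt (hApos _))
    rw [this, mul_one]
end
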